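/- arXiv:2210.10173 — 14 statements merged into one kernel-verified Lean document; each statement's English description precedes it below -/
import Mathlib

section
/- For every ε > 0 there exists M₀ such that for every integer M ≥ M₀ there is a subset A of {0,1,…,M−1} with |A| ≥ M^{1−ε} that contains no nontrivial three-term arithmetic progression modulo M: whenever a, b, c ∈ A satisfy a + c ≡ 2b (mod M), one has a = b = c. -/
/-!
Take a three-term-progression-free set `A ⊆ {0, …, ⌊M/2⌋ - 1}` of maximal size. Sums of two of
its elements stay below `M`, so a progression modulo `M` is an honest progression, hence trivial.
Behrend's bound `r(N) ≥ N exp(-4 √(log N))` gives `|A| ≥ M^{1-ε}` once `M` is large, because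
`√(log M) = o(log M)`.
-/

open Real Filter Finset

theorem tendsto_mul_sub_mul_sqrt_atTop {ε : ℝ} (hε : 0 < ε) (c : ℝ) :
    Tendsto (fun x : ℝ => ε * x - c * √x) atTop atTop := by
  have hsqrt : Tendsto (fun x : ℝ => √x) atTop atTop := by
    simpa only [sqrt_eq_rpow] using tendsto_rpow_atTop (by norm_num : (0 : ℝ) < 1 / 2)
  have hprod : Tendsto (fun x : ℝ => √x * (ε * √x - c)) atTop atTop :=
    hsqrt.atTop_mul_atTop₀ (tendsto_atTop_add_const_right _ (-c) (hsqrt.const_mul_atTop hε))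
  refine hprod.congr' ?_
  filter_upwards [eventually_ge_atTop 0] with x hx
  linear_combination ε * mul_self_sqrt hx

theorem eventually_rpow_one_sub_le_mul_exp_neg_sqrt_log {ε : ℝ} (hε : 0 < ε) {K : ℝ}
    (hK : 0 < K) (c : ℝ) :
    ∀ᶠ x : ℝ in atTop, x ^ (1 - ε) ≤ K * x * exp (-c * √(log x)) := by
  have hlog := (tendsto_mul_sub_mul_sqrt_atTop hε c).comp tendsto_log_atTop
  filter_upwards [hlog.eventually_ge_atTop (-log K), eventually_gt_atTop 0] with x hlog hx
  rw [rpow_def_of_pos hx, ← exp_log (mul_pos hK hx), ← exp_add, log_mul hK.ne' hx.ne']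
  simp only [Function.comp_apply] at hlog
  gcongr
  linarith

theorem eventually_rpow_one_sub_le_rothNumberNat_half {ε : ℝ} (hε : 0 < ε) :
    ∀ᶠ M : ℕ in atTop, (M : ℝ) ^ (1 - ε) ≤ rothNumberNat (M / 2) := by
  filter_upwards [tendsto_natCast_atTop_atTop.eventually
    (eventually_rpow_one_sub_le_mul_exp_neg_sqrt_log hε (by norm_num : (0 : ℝ) < 1 / 4) 4),
    eventually_ge_atTop 2] with M hM hM2
  set N := M / 2
  have hN : (1 : ℝ) ≤ N := by exact_mod_cast (by omega : 1 ≤ N)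
  have hNM : (N : ℝ) ≤ M := by exact_mod_cast Nat.div_le_self M 2
  have hMN : (1 / 4 : ℝ) * M ≤ N := by
    have : M ≤ 2 * N + 1 := by omega
    have : (M : ℝ) ≤ 2 * N + 1 := by exact_mod_cast this
    linarith
  have hexp : exp (-4 * √(log M)) ≤ exp (-4 * √(log N)) := by
    have := sqrt_le_sqrt (log_le_log (by linarith) hNM)
    rw [exp_le_exp]
    linarith
  calc (M : ℝ) ^ (1 - ε) ≤ 1 / 4 * M * exp (-4 * √(log M)) := hM
    _ ≤ N * exp (-4 * √(log N)) := mul_le_mul hMN hexp (exp_pos _).le (by linarith)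
    _ ≤ rothNumberNat N := Behrend.roth_lower_bound

theorem ThreeAPFree.eq_and_eq_of_add_mod_eq_two_mul_mod {A : Finset ℕ} {N M : ℕ}
    (hAN : A ⊆ range N) (hA : ThreeAPFree (A : Set ℕ)) (hNM : 2 * N ≤ M)
    {a b c : ℕ} (ha : a ∈ A) (hb : b ∈ A) (hc : c ∈ A) (habc : (a + c) % M = (2 * b) % M) :
    a = b ∧ b = c := by
  have haN := mem_range.mp (hAN ha)
  have hbN := mem_range.mp (hAN hb)
  have hcN := mem_range.mp (hAN hc)
  rw [Nat.mod_eq_of_lt (by omega), Nat.mod_eq_of_lt (by omega)] at habc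
  have hab : a = b := hA ha hb hc (by omega)
  omega

/-- Salem–Spencer/Behrend. For every `ε > 0` there exists `M₀` such that for
every `M ≥ M₀` there is a subset `A ⊆ {0,…,M−1}` of size at least `M^{1−ε}` containing no
nontrivial three-term arithmetic progression modulo `M`. -/
theorem stmt1 (ε : ℝ) (hε : 0 < ε) :
    ∃ M₀ : ℕ, ∀ M : ℕ, M₀ ≤ M →
      ∃ A : Finset ℕ, A ⊆ Finset.range M ∧ (M : ℝ) ^ (1 - ε) ≤ (A.card : ℝ) ∧
        ∀ a ∈ A, ∀ b ∈ A, ∀ c ∈ A, (a + c) % M = (2 * b) % M → a = b ∧ b = c := by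
  obtain ⟨M₀, hM₀⟩ := (eventually_rpow_one_sub_le_rothNumberNat_half hε).exists_forall_of_atTop
  refine ⟨M₀, fun M hM => ?_⟩
  obtain ⟨A, hAN, hAcard, hA⟩ := rothNumberNat_spec (M / 2)
  refine ⟨A, hAN.trans (range_subset_range.mpr (Nat.div_le_self M 2)), ?_, ?_⟩
  · rw [hAcard]
    exact hM₀ M hM
  · intro a ha b hb c hc habc
    exact hA.eq_and_eq_of_add_mod_eq_two_mul_mod hAN (Nat.mul_div_le M 2) ha hb hc habc
end

section
/- Let T = {(i,j,k) ∈ {0,1,2}³ : i+j+k = 2}. Suppose α, β : {0,1,2}³ → ℝ vanish outside T and have identical marginals, i.e. for every i ∈ {0,1,2}, ∑_{j,k} α(i,j,k) = ∑_{j,k} β(i,j,k); for every j, ∑_{i,k} α(i,j,k) = ∑_{i,k} β(i,j,k); and for every k, ∑_{i,j} α(i,j,k) = ∑_{i,j} β(i,j,k). Then α = β. In other words, a level-1 joint component distribution supported on {(i,j,k) : i+j+k = 2} is uniquely determined by its three marginal distributions. -/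
/-- A level-1 joint component distribution supported on
`{(i,j,k) ∈ {0,1,2}³ : i+j+k = 2}` is uniquely determined by its three marginals. -/
theorem stmt2 (α β : Fin 3 → Fin 3 → Fin 3 → ℝ)
    (hα : ∀ i j k : Fin 3, (i : ℕ) + (j : ℕ) + (k : ℕ) ≠ 2 → α i j k = 0)
    (hβ : ∀ i j k : Fin 3, (i : ℕ) + (j : ℕ) + (k : ℕ) ≠ 2 → β i j k = 0)
    (hX : ∀ i, ∑ j, ∑ k, α i j k = ∑ j, ∑ k, β i j k)
    (hY : ∀ j, ∑ i, ∑ k, α i j k = ∑ i, ∑ k, β i j k)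
    (hZ : ∀ k, ∑ i, ∑ j, α i j k = ∑ i, ∑ j, β i j k) :
    α = β := by
  have hX0 := hX 0
  have hX2 := hX 2
  have hY0 := hY 0
  have hY2 := hY 2
  have hZ0 := hZ 0
  have hZ2 := hZ 2
  simp (config := { decide := true }) [Fin.sum_univ_three, hα, hβ] at hX0 hX2 hY0 hY2 hZ0 hZ2
  have h011 : α 0 1 1 = β 0 1 1 := by linarith
  have h101 : α 1 0 1 = β 1 0 1 := by linarith
  have h110 : α 1 1 0 = β 1 1 0 := by linarith
  funext i j k
  fin_cases i <;> fin_cases j <;> fin_cases k <;>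
    first
      | exact (hα _ _ _ (by decide)).trans (hβ _ _ _ (by decide)).symm
      | exact hX2
      | exact hY2
      | exact hZ2
      | exact h011
      | exact h101
      | exact h110
end

section
/- Let M be an odd prime and let P, n be positive integers with M > P. Let b₀, w₀, w₁, …, w_n be independent uniformly random elements of ℤ/Mℤ, and define h_X, h_Y, h_Z as in the context. Let (I,J,K) and (I',J',K) be two triples of index sequences (entries in {0,…,P} and I_t + J_t + K_t = I'_t + J'_t + K_t = P for all t) sharing the third sequence K, with I ≠ I'. Then: (i) Pr[h_X(I) = h_Z(K) and h_X(I') = h_Z(K)] = M⁻², and hence Pr[h_X(I') = h_Z(K) ∣ h_X(I) = h_Z(K)] = M⁻¹; (ii) for every fixed b ∈ ℤ/Mℤ, Pr[h_X(I) = h_X(I') = h_Z(K) = b] = M⁻³. -/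
open Finset

/-- The hash function for X-index sequences: `h_X(I) = b₀ + ∑ₜ wₜ·Iₜ` in `ℤ/Mℤ`. -/
def hashX {M P n : ℕ} (b₀ : ZMod M) (w : Fin n → ZMod M) (I : Fin n → Fin (P + 1)) : ZMod M :=
  b₀ + ∑ t, w t * ((I t : ℕ) : ZMod M)

/-- The hash function for Y-index sequences: `h_Y(J) = b₀ + w₀ + ∑ₜ wₜ·Jₜ` in `ℤ/Mℤ`. -/
def hashY {M P n : ℕ} (b₀ w₀ : ZMod M) (w : Fin n → ZMod M) (J : Fin n → Fin (P + 1)) : ZMod M :=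
  b₀ + w₀ + ∑ t, w t * ((J t : ℕ) : ZMod M)

/-- The hash function for Z-index sequences:
`h_Z(K) = b₀ + 2⁻¹·(w₀ + ∑ₜ wₜ·(P − Kₜ))` in `ℤ/Mℤ`. -/
def hashZ {M P n : ℕ} (b₀ w₀ : ZMod M) (w : Fin n → ZMod M) (K : Fin n → Fin (P + 1)) : ZMod M :=
  b₀ + (2 : ZMod M)⁻¹ * (w₀ + ∑ t, w t * ((P : ZMod M) - ((K t : ℕ) : ZMod M)))


lemma card_sol (M n : ℕ) [NeZero M] (hM : M.Prime) (hn : 0 < n) (c : Fin n → ZMod M)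
    (t₀ : Fin n) (hc : c t₀ ≠ 0) :
    (univ.filter fun w : Fin n → ZMod M => ∑ t, w t * c t = 0).card = M ^ (n - 1) := by
  haveI : Fact M.Prime := ⟨hM⟩
  set Φ : (Fin n → ZMod M) → ZMod M := fun w => ∑ t, w t * c t with hΦ
  set u : Fin n → ZMod M := fun t => if t = t₀ then (c t₀)⁻¹ else 0 with hu
  have huΦ : Φ u = 1 := by
    simp only [Φ, u, ite_mul, zero_mul, Finset.sum_ite_eq', Finset.mem_univ, if_true]
    exact inv_mul_cancel₀ hc
  have hsub : ∀ w v, Φ (w - v) = Φ w - Φ v := by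
    intro w v; simp [Φ, sub_mul, Finset.sum_sub_distrib]
  have hadd : ∀ w v, Φ (w + v) = Φ w + Φ v := by
    intro w v; simp [Φ, add_mul, Finset.sum_add_distrib]
  have hsmul : ∀ (a : ZMod M) w, Φ (a • w) = a * Φ w := by
    intro a w; simp [Φ, Finset.mul_sum, mul_assoc]
  have hfib : ∀ a : ZMod M, (univ.filter fun w => Φ w = a).card
      = (univ.filter fun w => Φ w = 0).card := by
    intro a
    apply Finset.card_bij' (fun w _ => w - a • u) (fun w _ => w + a • u)
    · intro w hw
      simp only [Finset.mem_filter, Finset.mem_univ, true_and] at hw ⊢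
      rw [hsub, hsmul, huΦ, hw]; ring
    · intro w hw
      simp only [Finset.mem_filter, Finset.mem_univ, true_and] at hw ⊢
      rw [hadd, hsmul, huΦ, hw]; ring
    · intro w _; abel
    · intro w _; abel
  have hpart : ∑ a : ZMod M, (univ.filter fun w => Φ w = a).card
      = M ^ n := by
    rw [← Finset.card_eq_sum_card_fiberwise (f := Φ) (fun w _ => Finset.mem_univ (Φ w))]
    simp [ZMod.card]
  rw [Finset.sum_congr rfl (fun a _ => hfib a)] at hpart
  simp only [Finset.sum_const, Finset.card_univ, ZMod.card, smul_eq_mul] at hpart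
  have hMn : M ^ n = M * M ^ (n - 1) := by
    conv_lhs => rw [← Nat.succ_pred_eq_of_pos hn]
    rw [pow_succ']
    rfl
  exact Nat.eq_of_mul_eq_mul_left hM.pos (hpart.trans hMn)

lemma card_pair (M n : ℕ) [NeZero M] (F : (Fin n → ZMod M) → ZMod M)
    (Q : (Fin n → ZMod M) → Prop) [DecidablePred Q] :
    (univ.filter fun ω : ZMod M × ZMod M × (Fin n → ZMod M) =>
      ω.2.1 = F ω.2.2 ∧ Q ω.2.2).card = M * (univ.filter Q).card := by
  rw [Finset.card_filter, Fintype.sum_prod_type]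
  have inner : (∑ x : ZMod M × (Fin n → ZMod M),
      if (x.1 = F x.2 ∧ Q x.2) then (1 : ℕ) else 0) = (univ.filter Q).card := by
    rw [Fintype.sum_prod_type, Finset.sum_comm]
    rw [Finset.card_filter]
    refine Finset.sum_congr rfl fun w _ => ?_
    by_cases hq : Q w <;> simp [hq]
  simp only [inner, Finset.sum_const, Finset.card_univ, ZMod.card, smul_eq_mul]

lemma card_triple (M n : ℕ) [NeZero M] (A : (Fin n → ZMod M) → ZMod M)
    (G : ZMod M → (Fin n → ZMod M) → ZMod M)
    (Q : (Fin n → ZMod M) → Prop) [DecidablePred Q] :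
    (univ.filter fun ω : ZMod M × ZMod M × (Fin n → ZMod M) =>
      ω.1 = A ω.2.2 ∧ Q ω.2.2 ∧ ω.2.1 = G ω.1 ω.2.2).card = (univ.filter Q).card := by
  rw [Finset.card_filter, Fintype.sum_prod_type]
  have inner : ∀ b₀ : ZMod M, (∑ x : ZMod M × (Fin n → ZMod M),
      if (b₀ = A x.2 ∧ Q x.2 ∧ x.1 = G b₀ x.2) then (1 : ℕ) else 0)
      = (∑ w : Fin n → ZMod M, if (b₀ = A w ∧ Q w) then (1 : ℕ) else 0) := by
    intro b₀
    rw [Fintype.sum_prod_type, Finset.sum_comm]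
    refine Finset.sum_congr rfl fun w _ => ?_
    by_cases hq : b₀ = A w ∧ Q w
    · obtain ⟨h1, h2⟩ := hq; simp [h1, h2]
    · rw [if_neg hq, Finset.sum_eq_zero]
      intro x _
      rw [if_neg]
      tauto
  rw [Finset.sum_congr rfl fun b₀ _ => inner b₀, Finset.sum_comm, Finset.card_filter]
  refine Finset.sum_congr rfl fun w _ => ?_
  by_cases hq : Q w <;> simp [hq]

/-- hash independence for triples sharing a Z-block.
For two triples `(I,J,K)`, `(I',J',K)` sharing `K` with `I ≠ I'`, over uniform independent
`b₀, w₀, w₁, …, w_n ∈ ℤ/Mℤ`: (i) `Pr[h_X(I) = h_Z(K) ∧ h_X(I') = h_Z(K)] = M⁻²`, hence the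
conditional probability `Pr[h_X(I') = h_Z(K) ∣ h_X(I) = h_Z(K)] = M⁻¹`; (ii) for every fixed
`b`, `Pr[h_X(I) = h_X(I') = h_Z(K) = b] = M⁻³`. -/
theorem stmt4 (M P n : ℕ) [NeZero M] (hM : M.Prime) (hModd : Odd M) (hMP : P < M)
    (hn : 0 < n)
    (I I' J J' K : Fin n → Fin (P + 1))
    (hT : ∀ t, (I t : ℕ) + (J t : ℕ) + (K t : ℕ) = P)
    (hT' : ∀ t, (I' t : ℕ) + (J' t : ℕ) + (K t : ℕ) = P)
    (hne : I ≠ I') :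
    (((univ.filter fun ω : ZMod M × ZMod M × (Fin n → ZMod M) =>
          hashX ω.1 ω.2.2 I = hashZ ω.1 ω.2.1 ω.2.2 K ∧
          hashX ω.1 ω.2.2 I' = hashZ ω.1 ω.2.1 ω.2.2 K).card : ℚ) /
        (Fintype.card (ZMod M × ZMod M × (Fin n → ZMod M)) : ℚ) = ((M : ℚ) ^ 2)⁻¹) ∧
    (((univ.filter fun ω : ZMod M × ZMod M × (Fin n → ZMod M) =>
          hashX ω.1 ω.2.2 I = hashZ ω.1 ω.2.1 ω.2.2 K ∧
          hashX ω.1 ω.2.2 I' = hashZ ω.1 ω.2.1 ω.2.2 K).card : ℚ) /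
        ((univ.filter fun ω : ZMod M × ZMod M × (Fin n → ZMod M) =>
          hashX ω.1 ω.2.2 I = hashZ ω.1 ω.2.1 ω.2.2 K).card : ℚ) = (M : ℚ)⁻¹) ∧
    (∀ b : ZMod M,
      ((univ.filter fun ω : ZMod M × ZMod M × (Fin n → ZMod M) =>
          hashX ω.1 ω.2.2 I = b ∧ hashX ω.1 ω.2.2 I' = b ∧
          hashZ ω.1 ω.2.1 ω.2.2 K = b).card : ℚ) /
        (Fintype.card (ZMod M × ZMod M × (Fin n → ZMod M)) : ℚ) = ((M : ℚ) ^ 3)⁻¹) := by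
  haveI : Fact M.Prime := ⟨hM⟩
  obtain ⟨m, rfl⟩ : ∃ m, n = m + 1 := ⟨n - 1, (Nat.succ_pred_eq_of_pos hn).symm⟩
  have hM0 : (M : ℚ) ≠ 0 := Nat.cast_ne_zero.mpr (NeZero.ne M)
  have htwo : (2 : ZMod M) ≠ 0 := by
    intro h
    have h' : ((2 : ℕ) : ZMod M) = 0 := by exact_mod_cast h
    have hd := (ZMod.natCast_eq_zero_iff 2 M).mp h'
    have h1 := hM.two_le
    have h2' := Nat.le_of_dvd (by norm_num) hd
    have h3 := Nat.odd_iff.mp hModd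
    omega
  obtain ⟨t₀, ht₀⟩ := Function.ne_iff.mp hne
  have hc : ((I t₀ : ℕ) : ZMod M) - ((I' t₀ : ℕ) : ZMod M) ≠ 0 := by
    rw [sub_ne_zero]
    intro h
    apply ht₀
    have hv := congrArg ZMod.val h
    rw [ZMod.val_cast_of_lt (lt_of_lt_of_le (I t₀).isLt (by omega)),
        ZMod.val_cast_of_lt (lt_of_lt_of_le (I' t₀).isLt (by omega))] at hv
    exact Fin.ext hv
  have hQ : (univ.filter fun w : Fin (m+1) → ZMod M =>
      ∑ t, w t * (((I t : ℕ) : ZMod M) - ((I' t : ℕ) : ZMod M)) = 0).card = M ^ m := by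
    simpa using card_sol M (m+1) hM (Nat.succ_pos m) _ t₀ hc
  have hSS : ∀ w : Fin (m+1) → ZMod M,
      ((∑ t, w t * ((I t : ℕ) : ZMod M)) = (∑ t, w t * ((I' t : ℕ) : ZMod M)) ↔
      ∑ t, w t * (((I t : ℕ) : ZMod M) - ((I' t : ℕ) : ZMod M)) = 0) := by
    intro w
    rw [← sub_eq_zero, ← Finset.sum_sub_distrib,
      Finset.sum_congr rfl (fun t _ => (mul_sub (w t) ((I t : ℕ) : ZMod M) ((I' t : ℕ) : ZMod M)).symm)]
  have hA : ∀ (b₀ w₀ : ZMod M) (w : Fin (m+1) → ZMod M) (L : Fin (m+1) → Fin (P+1)),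
      (hashX b₀ w L = hashZ b₀ w₀ w K ↔
        w₀ = 2 * (∑ t, w t * ((L t : ℕ) : ZMod M))
          - ∑ t, w t * ((P : ZMod M) - ((K t : ℕ) : ZMod M))) := by
    intro b₀ w₀ w L
    unfold hashX hashZ
    rw [add_right_inj, eq_comm, inv_mul_eq_iff_eq_mul₀ htwo, ← eq_sub_iff_add_eq]
  have hXb : ∀ (b₀ : ZMod M) (w : Fin (m+1) → ZMod M) (L : Fin (m+1) → Fin (P+1)) (b : ZMod M),
      (hashX b₀ w L = b ↔ b₀ = b - ∑ t, w t * ((L t : ℕ) : ZMod M)) := by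
    intro b₀ w L b
    unfold hashX
    rw [← eq_sub_iff_add_eq]
  have hZb : ∀ (b₀ w₀ : ZMod M) (w : Fin (m+1) → ZMod M) (b : ZMod M),
      (hashZ b₀ w₀ w K = b ↔
        w₀ = 2 * (b - b₀) - ∑ t, w t * ((P : ZMod M) - ((K t : ℕ) : ZMod M))) := by
    intro b₀ w₀ w b
    unfold hashZ
    rw [add_comm b₀, ← eq_sub_iff_add_eq, inv_mul_eq_iff_eq_mul₀ htwo, ← eq_sub_iff_add_eq]
  -- numerator of (i) and (ii)
  have hnum1 : (univ.filter fun ω : ZMod M × ZMod M × (Fin (m+1) → ZMod M) =>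
          hashX ω.1 ω.2.2 I = hashZ ω.1 ω.2.1 ω.2.2 K ∧
          hashX ω.1 ω.2.2 I' = hashZ ω.1 ω.2.1 ω.2.2 K).card = M * M ^ m := by
    have e : (univ.filter fun ω : ZMod M × ZMod M × (Fin (m+1) → ZMod M) =>
          hashX ω.1 ω.2.2 I = hashZ ω.1 ω.2.1 ω.2.2 K ∧
          hashX ω.1 ω.2.2 I' = hashZ ω.1 ω.2.1 ω.2.2 K)
        = (univ.filter fun ω : ZMod M × ZMod M × (Fin (m+1) → ZMod M) =>
          ω.2.1 = 2 * (∑ t, ω.2.2 t * ((I t : ℕ) : ZMod M))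
            - ∑ t, ω.2.2 t * ((P : ZMod M) - ((K t : ℕ) : ZMod M)) ∧
          ∑ t, ω.2.2 t * (((I t : ℕ) : ZMod M) - ((I' t : ℕ) : ZMod M)) = 0) := by
      refine Finset.filter_congr fun ω _ => ?_
      rw [hA ω.1 ω.2.1 ω.2.2 I, hA ω.1 ω.2.1 ω.2.2 I']
      constructor
      · rintro ⟨h1, h2⟩
        refine ⟨h1, (hSS ω.2.2).mp ?_⟩
        have h3 := h1.symm.trans h2
        rw [sub_left_inj, mul_right_inj' htwo] at h3
        exact h3
      · rintro ⟨h1, hq⟩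
        refine ⟨h1, h1.trans ?_⟩
        rw [(hSS ω.2.2).mpr hq]
    rw [e]
    exact (card_pair M (m+1)
      (fun w => 2 * (∑ t, w t * ((I t : ℕ) : ZMod M))
        - ∑ t, w t * ((P : ZMod M) - ((K t : ℕ) : ZMod M)))
      (fun w => ∑ t, w t * (((I t : ℕ) : ZMod M) - ((I' t : ℕ) : ZMod M)) = 0)).trans
      (by rw [hQ])
  -- denominator of (ii)
  have hden2 : (univ.filter fun ω : ZMod M × ZMod M × (Fin (m+1) → ZMod M) =>
          hashX ω.1 ω.2.2 I = hashZ ω.1 ω.2.1 ω.2.2 K).card = M * M ^ (m+1) := by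
    have e : (univ.filter fun ω : ZMod M × ZMod M × (Fin (m+1) → ZMod M) =>
          hashX ω.1 ω.2.2 I = hashZ ω.1 ω.2.1 ω.2.2 K)
        = (univ.filter fun ω : ZMod M × ZMod M × (Fin (m+1) → ZMod M) =>
          ω.2.1 = 2 * (∑ t, ω.2.2 t * ((I t : ℕ) : ZMod M))
            - ∑ t, ω.2.2 t * ((P : ZMod M) - ((K t : ℕ) : ZMod M)) ∧ True) := by
      refine Finset.filter_congr fun ω _ => ?_
      rw [hA ω.1 ω.2.1 ω.2.2 I, and_true]
    rw [e]
    refine (card_pair M (m+1)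
      (fun w => 2 * (∑ t, w t * ((I t : ℕ) : ZMod M))
        - ∑ t, w t * ((P : ZMod M) - ((K t : ℕ) : ZMod M)))
      (fun _ => True)).trans ?_
    simp [ZMod.card]
  -- numerator of (iii)
  have hnum3 : ∀ b : ZMod M, (univ.filter fun ω : ZMod M × ZMod M × (Fin (m+1) → ZMod M) =>
          hashX ω.1 ω.2.2 I = b ∧ hashX ω.1 ω.2.2 I' = b ∧
          hashZ ω.1 ω.2.1 ω.2.2 K = b).card = M ^ m := by
    intro b
    have e : (univ.filter fun ω : ZMod M × ZMod M × (Fin (m+1) → ZMod M) =>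
          hashX ω.1 ω.2.2 I = b ∧ hashX ω.1 ω.2.2 I' = b ∧
          hashZ ω.1 ω.2.1 ω.2.2 K = b)
        = (univ.filter fun ω : ZMod M × ZMod M × (Fin (m+1) → ZMod M) =>
          ω.1 = b - ∑ t, ω.2.2 t * ((I t : ℕ) : ZMod M) ∧
          (∑ t, ω.2.2 t * (((I t : ℕ) : ZMod M) - ((I' t : ℕ) : ZMod M)) = 0) ∧
          ω.2.1 = 2 * (b - ω.1) - ∑ t, ω.2.2 t * ((P : ZMod M) - ((K t : ℕ) : ZMod M))) := by
      refine Finset.filter_congr fun ω _ => ?_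
      rw [hXb ω.1 ω.2.2 I b, hXb ω.1 ω.2.2 I' b, hZb ω.1 ω.2.1 ω.2.2 b]
      constructor
      · rintro ⟨h1, h2, h3⟩
        refine ⟨h1, (hSS ω.2.2).mp (sub_right_inj.mp (h1.symm.trans h2)), h3⟩
      · rintro ⟨h1, hq, h3⟩
        exact ⟨h1, h1.trans (by rw [(hSS ω.2.2).mpr hq]), h3⟩
    rw [e]
    exact (card_triple M (m+1)
      (fun w => b - ∑ t, w t * ((I t : ℕ) : ZMod M))
      (fun b₀ w => 2 * (b - b₀) - ∑ t, w t * ((P : ZMod M) - ((K t : ℕ) : ZMod M)))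
      (fun w => ∑ t, w t * (((I t : ℕ) : ZMod M) - ((I' t : ℕ) : ZMod M)) = 0)).trans hQ
  have hden : (Fintype.card (ZMod M × ZMod M × (Fin (m+1) → ZMod M)) : ℚ)
      = (M : ℚ) * ((M : ℚ) * (M : ℚ) ^ (m+1)) := by
    simp [ZMod.card]
  refine ⟨?_, ?_, fun b => ?_⟩
  · rw [hnum1, hden]
    push_cast
    field_simp
    ring
  · rw [hnum1, hden2]
    push_cast
    field_simp
    ring
  · rw [hnum3 b, hden]
    push_cast
    field_simp
    ring
end

section
/- Let M be an odd prime and P, n positive integers, and let b₀, w₀, …, w_n be arbitrary elements of ℤ/Mℤ, with h_X, h_Y, h_Z defined as in the context. Then for every triple of index sequences (I,J,K) with I_t + J_t + K_t = P for all t, one has h_X(I) + h_Y(J) = 2·h_Z(K) in ℤ/Mℤ. Consequently, if B ⊆ ℤ/Mℤ contains no nontrivial three-term arithmetic progression (a, b, c ∈ B with a + c = 2b implies a = b = c) and h_X(I) ∈ B, h_Y(J) ∈ B, h_Z(K) ∈ B, then h_X(I) = h_Y(J) = h_Z(K). -/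
open Finset

/-- For every triple `(I,J,K)` one has `h_X(I) + h_Y(J) = 2·h_Z(K)` in
`ℤ/Mℤ`; consequently, if all three hash values lie in a Salem–Spencer set `B`, then they
are all equal. -/
theorem stmt5 (M P n : ℕ) (hM : M.Prime) (hModd : Odd M) (hP : 0 < P) (hn : 0 < n)
    (b₀ w₀ : ZMod M) (w : Fin n → ZMod M)
    (I J K : Fin n → Fin (P + 1))
    (hT : ∀ t, (I t : ℕ) + (J t : ℕ) + (K t : ℕ) = P) :
    hashX b₀ w I + hashY b₀ w₀ w J = 2 * hashZ b₀ w₀ w K ∧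
    (∀ B : Finset (ZMod M),
      (∀ a ∈ B, ∀ b ∈ B, ∀ c ∈ B, a + c = 2 * b → a = b ∧ b = c) →
      hashX b₀ w I ∈ B → hashY b₀ w₀ w J ∈ B → hashZ b₀ w₀ w K ∈ B →
      hashX b₀ w I = hashY b₀ w₀ w J ∧ hashY b₀ w₀ w J = hashZ b₀ w₀ w K) := by
  have hMne2 : M ≠ 2 := by
    rintro rfl
    exact (by decide : ¬ Odd 2) hModd
  haveI : Fact (Nat.Prime M) := ⟨hM⟩
  have htwo : (2 : ZMod M) ≠ 0 := by
    intro h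
    have h' : ((2 : ℕ) : ZMod M) = 0 := by exact_mod_cast h
    rw [ZMod.natCast_eq_zero_iff] at h'
    exact hMne2 ((Nat.prime_dvd_prime_iff_eq hM Nat.prime_two).mp h')
  have hS : (∑ t, w t * ((I t : ℕ) : ZMod M)) + (∑ t, w t * ((J t : ℕ) : ZMod M))
      = ∑ t, w t * ((P : ZMod M) - ((K t : ℕ) : ZMod M)) := by
    rw [← Finset.sum_add_distrib]
    apply Finset.sum_congr rfl
    intro t _
    have hc : ((I t : ℕ) : ZMod M) + ((J t : ℕ) : ZMod M) + ((K t : ℕ) : ZMod M)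
        = (P : ZMod M) := by
      rw [← Nat.cast_add, ← Nat.cast_add, hT t]
    linear_combination w t * hc
  have key : hashX b₀ w I + hashY b₀ w₀ w J = 2 * hashZ b₀ w₀ w K := by
    unfold hashX hashY hashZ
    linear_combination hS - (w₀ + ∑ t, w t * ((P : ZMod M) - ((K t : ℕ) : ZMod M)))
      * (mul_inv_cancel₀ htwo)
  refine ⟨key, fun B hB hX hY hZ => ?_⟩
  obtain ⟨h1, h2⟩ := hB _ hX _ hZ _ hY key
  exact ⟨h1.trans h2, h2.symm⟩
end

section
/- Let M be an odd prime, P and n positive integers, and b₀, w₀, …, w_n independent uniformly random elements of ℤ/Mℤ, with h_X, h_Y, h_Z defined as in the context. Then for every triple of index sequences (I,J,K) with I_t + J_t + K_t = P for all t and every fixed b ∈ ℤ/Mℤ, Pr[h_X(I) = h_Y(J) = h_Z(K) = b] = M⁻². -/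
open Finset

/-!
With `S_I = ∑ₜ wₜ Iₜ` and `S_J = ∑ₜ wₜ Jₜ`, the constraint `Iₜ + Jₜ + Kₜ = P` makes
`∑ₜ wₜ (P - Kₜ) = S_I + S_J`, so `2 h_Z(K) = h_X(I) + h_Y(J)`. As `2` is invertible modulo an odd
`M`, the event is just `h_X(I) = h_Y(J) = b`, i.e. `b₀ = b - S_I` and `w₀ = S_I - S_J`: for each of
the `Mⁿ` choices of `w` exactly one pair `(b₀, w₀)` out of `M²` qualifies.
-/

lemma ZMod.isUnit_two_of_odd {M : ℕ} (hM : Odd M) : IsUnit (2 : ZMod M) := by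
  exact_mod_cast (ZMod.isUnit_iff_coprime 2 M).2 (Nat.coprime_two_left.2 hM)

lemma two_mul_hashZ {M P n : ℕ} (hM : Odd M) {I J K : Fin n → Fin (P + 1)}
    (hT : ∀ t, (I t : ℕ) + (J t : ℕ) + (K t : ℕ) = P) (b₀ w₀ : ZMod M) (w : Fin n → ZMod M) :
    2 * hashZ b₀ w₀ w K = hashX b₀ w I + hashY b₀ w₀ w J := by
  have hPK (t : Fin n) :
      (P : ZMod M) - ((K t : ℕ) : ZMod M) = ((I t : ℕ) : ZMod M) + ((J t : ℕ) : ZMod M) := by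
    have hsum := congrArg (Nat.cast : ℕ → ZMod M) (hT t)
    push_cast at hsum
    linear_combination -hsum
  have h2 : (2 : ZMod M) * 2⁻¹ = 1 := ZMod.mul_inv_of_unit 2 (ZMod.isUnit_two_of_odd hM)
  simp only [hashX, hashY, hashZ, hPK, mul_add, sum_add_distrib]
  linear_combination (w₀ + ∑ t, w t * ((I t : ℕ) : ZMod M) + ∑ t, w t * ((J t : ℕ) : ZMod M)) * h2

lemma hashZ_eq_of_hashX_eq_of_hashY_eq {M P n : ℕ} (hM : Odd M) {I J K : Fin n → Fin (P + 1)}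
    (hT : ∀ t, (I t : ℕ) + (J t : ℕ) + (K t : ℕ) = P) {b₀ w₀ b : ZMod M} {w : Fin n → ZMod M}
    (hX : hashX b₀ w I = b) (hY : hashY b₀ w₀ w J = b) : hashZ b₀ w₀ w K = b :=
  (ZMod.isUnit_two_of_odd hM).mul_left_cancel <| by rw [two_mul_hashZ hM hT, hX, hY, two_mul]

lemma card_filter_add_eq_and_add_add_eq {G W : Type*} [AddCommGroup G] [Fintype G]
    [DecidableEq G] [Fintype W] (f g : W → G) (b : G) :
    #{ω : G × G × W | ω.1 + f ω.2.2 = b ∧ ω.1 + ω.2.1 + g ω.2.2 = b} = Fintype.card W := by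
  rw [← card_univ]
  refine card_nbij' (fun ω => ω.2.2) (fun w => (b - f w, f w - g w, w)) (by simp) ?_ ?_ fun _ _ => rfl
  · intro w _
    simp only [coe_filter, mem_univ, true_and, Set.mem_ofPred_eq]
    constructor <;> abel
  · rintro ⟨x, y, w⟩ hω
    simp only [coe_filter, mem_univ, true_and, Set.mem_ofPred_eq] at hω
    obtain ⟨hX, hY⟩ := hω
    simp only [Prod.mk.injEq, and_true]
    have hy : y + g w = f w := add_left_cancel (by rw [← add_assoc, hY, hX])
    exact ⟨by rw [← hX, add_sub_cancel_right], by rw [← hy, add_sub_cancel_right]⟩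

theorem stmt6_general (M P n : ℕ) [NeZero M] (hModd : Odd M)
    (I J K : Fin n → Fin (P + 1))
    (hT : ∀ t, (I t : ℕ) + (J t : ℕ) + (K t : ℕ) = P)
    (b : ZMod M) :
    ((univ.filter fun ω : ZMod M × ZMod M × (Fin n → ZMod M) =>
        hashX ω.1 ω.2.2 I = b ∧ hashY ω.1 ω.2.1 ω.2.2 J = b ∧
        hashZ ω.1 ω.2.1 ω.2.2 K = b).card : ℚ) /
      (Fintype.card (ZMod M × ZMod M × (Fin n → ZMod M)) : ℚ) = ((M : ℚ) ^ 2)⁻¹ := by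
  have hevent : ∀ ω : ZMod M × ZMod M × (Fin n → ZMod M),
      (hashX ω.1 ω.2.2 I = b ∧ hashY ω.1 ω.2.1 ω.2.2 J = b ∧ hashZ ω.1 ω.2.1 ω.2.2 K = b) ↔
        (ω.1 + ∑ t, ω.2.2 t * ((I t : ℕ) : ZMod M) = b ∧
          ω.1 + ω.2.1 + ∑ t, ω.2.2 t * ((J t : ℕ) : ZMod M) = b) :=
    fun _ => ⟨fun h => ⟨h.1, h.2.1⟩,
      fun h => ⟨h.1, h.2, hashZ_eq_of_hashX_eq_of_hashY_eq hModd hT h.1 h.2⟩⟩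
  rw [filter_congr fun ω _ => hevent ω,
    card_filter_add_eq_and_add_add_eq (fun w : Fin n → ZMod M => ∑ t, w t * ((I t : ℕ) : ZMod M))
      (fun w : Fin n → ZMod M => ∑ t, w t * ((J t : ℕ) : ZMod M)) b]
  have hM : (M : ℚ) ≠ 0 := Nat.cast_ne_zero.2 (NeZero.ne M)
  simp only [Fintype.card_prod, Fintype.card_fun, ZMod.card, Fintype.card_fin]
  push_cast
  field_simp

/-- For every triple `(I,J,K)` and fixed bucket `b ∈ ℤ/Mℤ`, over the uniform
independent choice of `b₀, w₀, w₁, …, w_n ∈ ℤ/Mℤ`,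
`Pr[h_X(I) = h_Y(J) = h_Z(K) = b] = M⁻²`. -/
theorem stmt6 (M P n : ℕ) [NeZero M] (hM : M.Prime) (hModd : Odd M) (hP : 0 < P) (hn : 0 < n)
    (I J K : Fin n → Fin (P + 1))
    (hT : ∀ t, (I t : ℕ) + (J t : ℕ) + (K t : ℕ) = P)
    (b : ZMod M) :
    ((univ.filter fun ω : ZMod M × ZMod M × (Fin n → ZMod M) =>
        hashX ω.1 ω.2.2 I = b ∧ hashY ω.1 ω.2.1 ω.2.2 J = b ∧
        hashZ ω.1 ω.2.1 ω.2.2 K = b).card : ℚ) /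
      (Fintype.card (ZMod M × ZMod M × (Fin n → ZMod M)) : ℚ) = ((M : ℚ) ^ 2)⁻¹ :=
  stmt6_general M P n hModd I J K hT b
end

section
/- Let M be an odd prime and P, n positive integers with M > P, and let b₀, w₀, …, w_n be independent uniformly random elements of ℤ/Mℤ, with h_X, h_Z defined as in the context. Fix sequences I, K ∈ {0,…,P}ⁿ and a finite set S of sequences in {0,…,P}ⁿ with I ∉ S. Then the event h_X(I) = h_Z(K) has probability M⁻¹, and the conditional probability, given h_X(I) = h_Z(K), that there exists I' ∈ S with h_X(I') = h_Z(K), is at most |S|/M. -/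
open Finset

lemma fiber_card_mul {G H : Type*} [AddCommGroup G] [Fintype G] [DecidableEq G]
    [AddCommGroup H] [Fintype H] [DecidableEq H] (φ : G →+ H)
    (hs : Function.Surjective φ) (a : H) :
    (univ.filter fun g => φ g = a).card * Fintype.card H = Fintype.card G := by
  have key : ∀ b : H, (univ.filter fun g => φ g = b).card =
      (univ.filter fun g => φ g = a).card := by
    intro b
    obtain ⟨g₀, hg₀⟩ := hs (a - b)
    refine Finset.card_bij (fun g _ => g + g₀) ?_ ?_ ?_
    · intro g hg
      simp only [mem_filter, mem_univ, true_and] at hg ⊢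
      rw [map_add, hg, hg₀]; abel
    · intro g₁ h₁ g₂ h₂ h; exact add_right_cancel h
    · intro g hg
      simp only [mem_filter, mem_univ, true_and] at hg
      refine ⟨g - g₀, ?_, sub_add_cancel _ _⟩
      simp only [mem_filter, mem_univ, true_and, map_sub, hg, hg₀]; abel
  have h1 : (univ : Finset G).card = ∑ b : H, (univ.filter fun g => φ g = b).card :=
    Finset.card_eq_sum_card_fiberwise (fun x _ => mem_univ _)
  rw [← Finset.card_univ (α := G), h1]
  simp only [key]
  rw [Finset.sum_const, card_univ, smul_eq_mul, mul_comm]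

/-- The difference `hashX(J) - hashZ(K)` as an additive monoid hom in `ω`. -/
def hhom (M P n : ℕ) (J K : Fin n → Fin (P + 1)) :
    (ZMod M × ZMod M × (Fin n → ZMod M)) →+ ZMod M where
  toFun ω := hashX ω.1 ω.2.2 J - hashZ ω.1 ω.2.1 ω.2.2 K
  map_zero' := by simp [hashX, hashZ]
  map_add' x y := by
    simp only [hashX, hashZ, Prod.fst_add, Prod.snd_add, Pi.add_apply, add_mul,
      Finset.sum_add_distrib]
    ring

/-- union bound for hole probability. For sequences `I, K` and a finite set
`S` of sequences with `I ∉ S`: the event `h_X(I) = h_Z(K)` has probability `M⁻¹`, and the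
conditional probability, given `h_X(I) = h_Z(K)`, that some `I' ∈ S` also satisfies
`h_X(I') = h_Z(K)`, is at most `|S|/M`. -/
theorem stmt7 (M P n : ℕ) [NeZero M] (hM : M.Prime) (hModd : Odd M) (hMP : P < M)
    (hn : 0 < n)
    (I K : Fin n → Fin (P + 1)) (S : Finset (Fin n → Fin (P + 1))) (hIS : I ∉ S) :
    (((univ.filter fun ω : ZMod M × ZMod M × (Fin n → ZMod M) =>
          hashX ω.1 ω.2.2 I = hashZ ω.1 ω.2.1 ω.2.2 K).card : ℚ) /
        (Fintype.card (ZMod M × ZMod M × (Fin n → ZMod M)) : ℚ) = (M : ℚ)⁻¹) ∧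
    (((univ.filter fun ω : ZMod M × ZMod M × (Fin n → ZMod M) =>
          hashX ω.1 ω.2.2 I = hashZ ω.1 ω.2.1 ω.2.2 K ∧
          ∃ I' ∈ S, hashX ω.1 ω.2.2 I' = hashZ ω.1 ω.2.1 ω.2.2 K).card : ℚ) /
        ((univ.filter fun ω : ZMod M × ZMod M × (Fin n → ZMod M) =>
          hashX ω.1 ω.2.2 I = hashZ ω.1 ω.2.1 ω.2.2 K).card : ℚ) ≤ (S.card : ℚ) / M) := by
  haveI := Fact.mk hM
  set Ω := ZMod M × ZMod M × (Fin n → ZMod M) with hΩdef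
  -- 2 is invertible mod M
  have h2 : (2 : ZMod M) ≠ 0 := by
    intro h
    have h' : ((2 : ℕ) : ZMod M) = 0 := by push_cast; exact h
    have hdvd : M ∣ 2 := (ZMod.natCast_eq_zero_iff _ _).mp h'
    have : M = 2 := (Nat.prime_dvd_prime_iff_eq hM Nat.prime_two).mp hdvd
    rw [this] at hModd
    simp [Nat.odd_iff] at hModd
  have h2i : (2 : ZMod M)⁻¹ * 2 = 1 := inv_mul_cancel₀ h2
  -- casts of Fin (P+1) into ZMod M are injective
  have hcast : ∀ a b : Fin (P + 1), ((a : ℕ) : ZMod M) = ((b : ℕ) : ZMod M) → a = b := by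
    intro a b h
    have ha : ((a : ℕ) : ZMod M).val = (a : ℕ) := ZMod.val_cast_of_lt (lt_of_le_of_lt (Nat.lt_succ_iff.mp a.isLt) hMP)
    have hb : ((b : ℕ) : ZMod M).val = (b : ℕ) := ZMod.val_cast_of_lt (lt_of_le_of_lt (Nat.lt_succ_iff.mp b.isLt) hMP)
    have : (a : ℕ) = (b : ℕ) := by rw [← ha, ← hb, h]
    exact Fin.ext this
  -- surjectivity of hhom J
  have hsurj : ∀ J : Fin n → Fin (P + 1), Function.Surjective (hhom M P n J K) := by
    intro J a
    refine ⟨(0, -(2 * a), 0), ?_⟩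
    simp only [hhom, AddMonoidHom.coe_mk, ZeroHom.coe_mk, hashX, hashZ, Pi.zero_apply, zero_mul,
      Finset.sum_const_zero, add_zero, zero_add]
    linear_combination a * h2i
  -- joint surjectivity for I' ≠ I
  have hjoint : ∀ I' : Fin n → Fin (P + 1), I' ≠ I →
      Function.Surjective ((hhom M P n I K).prod (hhom M P n I' K)) := by
    intro I' hne ⟨a, c⟩
    obtain ⟨t₀, ht₀⟩ := Function.ne_iff.mp hne
    set d : ZMod M := ((I' t₀ : ℕ) : ZMod M) - ((I t₀ : ℕ) : ZMod M) with hd_def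
    have hd : d ≠ 0 := by
      intro h
      exact ht₀ (hcast _ _ (sub_eq_zero.mp h))
    set v : ZMod M := (c - a) * d⁻¹ with hv_def
    set w : Fin n → ZMod M := Pi.single t₀ v with hw_def
    have hsum : ∀ f : Fin n → ZMod M, ∑ t, w t * f t = v * f t₀ := by
      intro f
      rw [Finset.sum_eq_single t₀]
      · rw [hw_def, Pi.single_eq_same]
      · intro t _ ht; rw [hw_def, Pi.single_eq_of_ne ht, zero_mul]
      · intro h; exact absurd (mem_univ t₀) h
    set w₀ : ZMod M := 2 * (∑ t, w t * ((I t : ℕ) : ZMod M))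
      - (∑ t, w t * ((P : ZMod M) - ((K t : ℕ) : ZMod M))) - 2 * a with hw₀_def
    refine ⟨(0, w₀, w), ?_⟩
    have e1 : ∑ t, w t * ((I t : ℕ) : ZMod M) = v * ((I t₀ : ℕ) : ZMod M) := hsum _
    have e2 : ∑ t, w t * ((I' t : ℕ) : ZMod M) = v * ((I' t₀ : ℕ) : ZMod M) := hsum _
    have e3 : ∑ t, w t * ((P : ZMod M) - ((K t : ℕ) : ZMod M))
        = v * ((P : ZMod M) - ((K t₀ : ℕ) : ZMod M)) := hsum _
    have hdi : d⁻¹ * d = 1 := inv_mul_cancel₀ hd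
    simp only [AddMonoidHom.prod_apply, hhom, AddMonoidHom.coe_mk, ZeroHom.coe_mk,
      hashX, hashZ, zero_add, Prod.mk.injEq]
    rw [e1, e2, e3, hw₀_def, e1, e3]
    constructor
    · linear_combination (a - v * ((I t₀ : ℕ) : ZMod M)) * h2i
    · rw [hv_def, hd_def]
      field_simp
      have hdi' : (((I' t₀ : ℕ) : ZMod M) - ((I t₀ : ℕ) : ZMod M))⁻¹ *
          (((I' t₀ : ℕ) : ZMod M) - ((I t₀ : ℕ) : ZMod M)) = 1 := hdi
      linear_combination (2 * (c - a)) * hdi'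
  -- fiber counts
  have cardH : Fintype.card (ZMod M) = M := ZMod.card M
  have cardH2 : Fintype.card (ZMod M × ZMod M) = M * M := by
    rw [Fintype.card_prod, cardH]
  set N := Fintype.card Ω with hN_def
  set A := (univ.filter fun ω : Ω => hashX ω.1 ω.2.2 I = hashZ ω.1 ω.2.1 ω.2.2 K) with hA_def
  have hAeq : A = univ.filter fun ω : Ω => hhom M P n I K ω = 0 := by
    apply filter_congr
    intro ω _
    simp only [hhom, AddMonoidHom.coe_mk, ZeroHom.coe_mk]
    rw [sub_eq_zero]
  have hAcard : A.card * M = N := by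
    have h := fiber_card_mul (hhom M P n I K) (hsurj I) 0
    rw [cardH] at h
    rw [hAeq]
    exact h
  have hNpos : 0 < N := Fintype.card_pos
  have hMpos : 0 < M := hM.pos
  have hApos : 0 < A.card := by
    by_contra h
    push_neg at h
    interval_cases hA : A.card
    · simp [hA] at hAcard; omega
  constructor
  · -- first part
    have hq : (A.card : ℚ) * M = N := by exact_mod_cast hAcard
    rw [div_eq_iff (by exact_mod_cast hNpos.ne' : (N : ℚ) ≠ 0)]
    rw [inv_mul_eq_div, eq_div_iff (by exact_mod_cast hMpos.ne' : (M : ℚ) ≠ 0)]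
    exact hq
  · -- second part
    set B := (univ.filter fun ω : Ω =>
        hashX ω.1 ω.2.2 I = hashZ ω.1 ω.2.1 ω.2.2 K ∧
        ∃ I' ∈ S, hashX ω.1 ω.2.2 I' = hashZ ω.1 ω.2.1 ω.2.2 K) with hB_def
    set C : (Fin n → Fin (P + 1)) → Finset Ω := fun I' =>
      univ.filter fun ω : Ω => (hhom M P n I K).prod (hhom M P n I' K) ω = 0 with hC_def
    have hCcard : ∀ I' ∈ S, (C I').card * (M * M) = N := by
      intro I' hI'
      have h := fiber_card_mul ((hhom M P n I K).prod (hhom M P n I' K))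
        (hjoint I' (fun h => hIS (h ▸ hI'))) 0
      rw [cardH2] at h
      exact h
    have hBsub : B ⊆ S.biUnion C := by
      intro ω hω
      rw [hB_def, mem_filter] at hω
      obtain ⟨-, h1, I', hI'S, hI'eq⟩ := hω
      rw [mem_biUnion]
      refine ⟨I', hI'S, ?_⟩
      rw [hC_def]
      simp only [mem_filter, mem_univ, true_and, AddMonoidHom.prod_apply, hhom,
        AddMonoidHom.coe_mk, ZeroHom.coe_mk, Prod.mk_eq_zero]
      exact ⟨sub_eq_zero.mpr h1, sub_eq_zero.mpr hI'eq⟩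
    have hBle : B.card * (M * M) ≤ S.card * N := by
      calc B.card * (M * M) ≤ (S.biUnion C).card * (M * M) :=
            Nat.mul_le_mul_right _ (Finset.card_le_card hBsub)
        _ ≤ (∑ I' ∈ S, (C I').card) * (M * M) :=
            Nat.mul_le_mul_right _ Finset.card_biUnion_le
        _ = ∑ I' ∈ S, (C I').card * (M * M) := by rw [Finset.sum_mul]
        _ = ∑ I' ∈ S, N := Finset.sum_congr rfl hCcard
        _ = S.card * N := by rw [Finset.sum_const, smul_eq_mul]
    have hBM : B.card * M ≤ S.card * A.card := by
      have : B.card * M * M ≤ S.card * A.card * M := by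
        calc B.card * M * M = B.card * (M * M) := by ring
          _ ≤ S.card * N := hBle
          _ = S.card * A.card * M := by rw [← hAcard]; ring
      exact Nat.le_of_mul_le_mul_right this hMpos
    rw [div_le_div_iff₀ (by exact_mod_cast hApos : (0:ℚ) < A.card)
      (by exact_mod_cast hMpos : (0:ℚ) < M)]
    exact_mod_cast hBM
end

section
/- Let N̄ and P̄ be positive integers, let s be a positive integer, and for each t ∈ {1,…,s} let S_t ⊆ {1,…,P̄} × {1,…,N̄} be a subset of density η_t := |S_t|/(P̄·N̄). If ∑_{t=1}^s η_t ≥ log₂(N̄·P̄) + 1, then there exist permutations σ_t of {1,…,P̄} and τ_t of {1,…,N̄} (for 1 ≤ t ≤ s) such that every pair (k,i) ∈ {1,…,P̄}×{1,…,N̄} lies in {(σ_t(k'), τ_t(i')) : (k',i') ∈ S_t} for some t, i.e. the permuted sets jointly cover {1,…,P̄}×{1,…,N̄}. -/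
open Finset

section Greedy
variable {G : Type*} [AddCommGroup G] [Fintype G] [DecidableEq G]

lemma card_filter_shift (S : Finset G) (u : G) :
    (univ.filter fun g : G => u ∈ S.image (fun x => g + x)).card = S.card := by
  have h : (univ.filter fun g : G => u ∈ S.image (fun x => g + x))
      = S.image (fun y => u - y) := by
    ext g
    simp only [mem_filter, mem_univ, true_and, mem_image]
    constructor
    · rintro ⟨y, hy, hgy⟩
      exact ⟨y, hy, by rw [← hgy]; abel⟩
    · rintro ⟨y, hy, hgy⟩
      exact ⟨y, hy, by rw [← hgy]; abel⟩
  rw [h, card_image_of_injective _ sub_right_injective]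

lemma avgSumCardInter (U S : Finset G) :
    ∑ g : G, (U ∩ S.image (fun x => g + x)).card = U.card * S.card := by
  have h1 : ∀ g : G, (U ∩ S.image (fun x => g + x)).card
      = ∑ u ∈ U, if u ∈ S.image (fun x => g + x) then 1 else 0 := by
    intro g
    rw [← card_filter, filter_mem_eq_inter]
  simp_rw [h1]
  rw [Finset.sum_comm]
  have h2 : ∀ u ∈ U, (∑ g : G, if u ∈ S.image (fun x => g + x) then 1 else 0) = S.card := by
    intro u _
    rw [← card_filter_shift S u, card_filter]
  rw [Finset.sum_congr rfl h2, Finset.sum_const, smul_eq_mul]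

lemma exists_good [Nonempty G] (U S : Finset G) :
    ∃ g : G, ((U \ S.image (fun x => g + x)).card : ℝ)
      ≤ U.card * (1 - S.card / Fintype.card G) := by
  have hpos : (0 : ℕ) < Fintype.card G := Fintype.card_pos
  have key : ∃ g : G, U.card * S.card ≤ Fintype.card G * (U ∩ S.image (fun x => g + x)).card := by
    by_contra hc
    push_neg at hc
    have h3 := Finset.sum_lt_sum_of_nonempty (univ_nonempty (α := G)) (fun g _ => hc g)
    rw [← Finset.mul_sum, avgSumCardInter U S, Finset.sum_const, smul_eq_mul,
      Finset.card_univ] at h3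
    exact lt_irrefl _ h3
  obtain ⟨g, hg⟩ := key
  refine ⟨g, ?_⟩
  set T := S.image (fun x => g + x) with hT
  have hcard : ((U \ T).card : ℝ) = U.card - (U ∩ T).card := by
    have := Finset.card_inter_add_card_sdiff U T
    push_cast [← this]
    ring
  rw [hcard, mul_sub, mul_one]
  have hposR : (0 : ℝ) < Fintype.card G := by exact_mod_cast hpos
  have h4 : ((U.card * S.card : ℕ) : ℝ) ≤ ((Fintype.card G * (U ∩ T).card : ℕ) : ℝ) := by
    exact_mod_cast hg
  push_cast at h4
  have h5 : (U.card : ℝ) * (S.card / Fintype.card G) ≤ (U ∩ T).card := by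
    rw [← mul_div_assoc, div_le_iff₀ hposR]
    linarith
  linarith

noncomputable def gpick [Nonempty G] (U S : Finset G) : G := (exists_good U S).choose

lemma gpick_spec [Nonempty G] (U S : Finset G) :
    ((U \ S.image (fun x => gpick U S + x)).card : ℝ)
      ≤ U.card * (1 - S.card / Fintype.card G) := (exists_good U S).choose_spec

noncomputable def Unc [Nonempty G] (S : ℕ → Finset G) : ℕ → Finset G
  | 0 => Finset.univ
  | t + 1 => Unc S t \ (S t).image (fun x => gpick (Unc S t) (S t) + x)

lemma Unc_card [Nonempty G] (S : ℕ → Finset G) (t : ℕ) :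
    ((Unc S t).card : ℝ)
      ≤ Fintype.card G * ∏ t' ∈ Finset.range t, (1 - ((S t').card : ℝ) / Fintype.card G) := by
  induction t with
  | zero => simp [Unc]
  | succ t ih =>
    have hstep := gpick_spec (Unc S t) (S t)
    have hfac : (0 : ℝ) ≤ 1 - ((S t).card : ℝ) / Fintype.card G := by
      have h1 : ((S t).card : ℝ) ≤ Fintype.card G := by
        exact_mod_cast Finset.card_le_univ (S t)
      have h2 : (0 : ℝ) < Fintype.card G := by exact_mod_cast (Fintype.card_pos : 0 < Fintype.card G)
      have := div_le_one_of_le₀ h1 (le_of_lt h2)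
      linarith
    calc ((Unc S (t+1)).card : ℝ)
        ≤ (Unc S t).card * (1 - ((S t).card : ℝ) / Fintype.card G) := hstep
      _ ≤ (Fintype.card G * ∏ t' ∈ Finset.range t, (1 - ((S t').card : ℝ) / Fintype.card G))
            * (1 - ((S t).card : ℝ) / Fintype.card G) := by
          apply mul_le_mul_of_nonneg_right ih hfac
      _ = Fintype.card G * ∏ t' ∈ Finset.range (t+1), (1 - ((S t').card : ℝ) / Fintype.card G) := by
          rw [Finset.prod_range_succ]; ring

lemma Unc_cover [Nonempty G] (S : ℕ → Finset G) (t : ℕ) (x : G) (hx : x ∉ Unc S t) :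
    ∃ t' < t, x ∈ (S t').image (fun y => gpick (Unc S t') (S t') + y) := by
  induction t with
  | zero => exact absurd (Finset.mem_univ x) hx
  | succ t ih =>
    by_cases hxt : x ∈ Unc S t
    · refine ⟨t, Nat.lt_succ_self t, ?_⟩
      by_contra hcon
      exact hx (Finset.mem_sdiff.mpr ⟨hxt, hcon⟩)
    · obtain ⟨t', ht', hm⟩ := ih hxt
      exact ⟨t', ht'.trans (Nat.lt_succ_self t), hm⟩

end Greedy

/-- combinatorial core of the Matrix Hole Lemma. Given subsets
`S_t ⊆ {1,…,P̄} × {1,…,N̄}` of densities `η_t` with `∑ η_t ≥ log₂(N̄·P̄) + 1`, there are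
permutations `σ_t` of `{1,…,P̄}` and `τ_t` of `{1,…,N̄}` whose images of the `S_t` jointly
cover the whole grid. -/
theorem stmt8 (Nb Pb : ℕ) (hN : 0 < Nb) (hP : 0 < Pb) (s : ℕ) (hs : 0 < s)
    (S : Fin s → Finset (Fin Pb × Fin Nb))
    (h : Real.logb 2 ((Nb : ℝ) * (Pb : ℝ)) + 1 ≤
        ∑ t, ((S t).card : ℝ) / ((Pb : ℝ) * (Nb : ℝ))) :
    ∃ (σ : Fin s → Equiv.Perm (Fin Pb)) (τ : Fin s → Equiv.Perm (Fin Nb)),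
      ∀ (k : Fin Pb) (i : Fin Nb), ∃ t, ∃ p ∈ S t, (σ t p.1, τ t p.2) = (k, i) := by
  obtain ⟨n, rfl⟩ : ∃ n, Nb = n + 1 := ⟨Nb - 1, (Nat.succ_pred_eq_of_pos hN).symm⟩
  obtain ⟨p, rfl⟩ : ∃ p, Pb = p + 1 := ⟨Pb - 1, (Nat.succ_pred_eq_of_pos hP).symm⟩
  set S' : ℕ → Finset (Fin (p + 1) × Fin (n + 1)) := fun t => if ht : t < s then S ⟨t, ht⟩ else ∅ with hS'
  have hcardG : ((Fintype.card (Fin (p + 1) × Fin (n + 1)) : ℕ) : ℝ)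
      = ((p + 1 : ℕ) : ℝ) * ((n + 1 : ℕ) : ℝ) := by
    simp [Fintype.card_prod]
  have hKpos : (0 : ℝ) < ((p + 1 : ℕ) : ℝ) * ((n + 1 : ℕ) : ℝ) := by positivity
  set K : ℝ := ((p + 1 : ℕ) : ℝ) * ((n + 1 : ℕ) : ℝ) with hK
  -- rewrite the hypothesis sum over range s
  set η : ℕ → ℝ := fun t => ((S' t).card : ℝ) / K with hη
  have hsum : Real.logb 2 K + 1 ≤ ∑ t ∈ Finset.range s, η t := by
    have h1 : ∑ t ∈ Finset.range s, η t = ∑ t : Fin s, ((S t).card : ℝ) / K := by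
      rw [← Fin.sum_univ_eq_sum_range (fun t => η t) s]
      refine Finset.sum_congr rfl fun t _ => ?_
      simp [hη, hS', t.isLt]
    have h2 : Real.logb 2 (((n+1 : ℕ) : ℝ) * ((p+1 : ℕ) : ℝ)) = Real.logb 2 K := by
      rw [hK, mul_comm]
    rw [h1]
    rw [h2] at h
    exact h
  -- per-factor estimate
  have hlog2 : Real.log 2 ≤ 1 := by
    have := Real.log_le_sub_one_of_pos (by norm_num : (0:ℝ) < 2)
    linarith
  have hηnn : ∀ t, 0 ≤ η t := fun t => by positivity
  have hfac : ∀ t, 1 - η t ≤ Real.exp (-(η t * Real.log 2)) := by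
    intro t
    have h1 := Real.add_one_le_exp (-(η t * Real.log 2))
    have h2 : η t * Real.log 2 ≤ η t := by
      nlinarith [hηnn t, Real.log_pos (by norm_num : (1:ℝ) < 2)]
    linarith
  have hηle : ∀ t, η t ≤ 1 := by
    intro t
    have hc : ((S' t).card : ℝ) ≤ K := by
      rw [← hcardG]
      exact_mod_cast Finset.card_le_univ (S' t)
    rw [hη]
    exact div_le_one_of_le₀ hc (le_of_lt hKpos)
  -- product bound
  have hprod : ∏ t ∈ Finset.range s, (1 - η t)
      ≤ Real.exp (-((∑ t ∈ Finset.range s, η t) * Real.log 2)) := by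
    calc ∏ t ∈ Finset.range s, (1 - η t)
        ≤ ∏ t ∈ Finset.range s, Real.exp (-(η t * Real.log 2)) := by
          apply Finset.prod_le_prod
          · intro t _; linarith [hηle t]
          · intro t _; exact hfac t
      _ = Real.exp (∑ t ∈ Finset.range s, -(η t * Real.log 2)) := (Real.exp_sum _ _).symm
      _ = Real.exp (-((∑ t ∈ Finset.range s, η t) * Real.log 2)) := by
          rw [Finset.sum_neg_distrib, ← Finset.sum_mul]
  -- final numeric bound
  have hlog2pos : (0 : ℝ) < Real.log 2 := Real.log_pos (by norm_num)
  have hexp_le : Real.exp (-((∑ t ∈ Finset.range s, η t) * Real.log 2))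
      ≤ Real.exp (-((Real.logb 2 K + 1) * Real.log 2)) := by
    apply Real.exp_le_exp.mpr
    have := mul_le_mul_of_nonneg_right hsum (le_of_lt hlog2pos)
    linarith
  have hval : Real.exp (-((Real.logb 2 K + 1) * Real.log 2)) = (K * 2)⁻¹ := by
    have h1 : (Real.logb 2 K + 1) * Real.log 2 = Real.log K + Real.log 2 := by
      rw [add_mul, one_mul, Real.logb, div_mul_cancel₀]
      exact ne_of_gt hlog2pos
    rw [h1, ← Real.log_mul (ne_of_gt hKpos) (by norm_num), Real.exp_neg,
      Real.exp_log (by positivity)]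
  -- conclude Unc S' s is empty
  have hcard := Unc_card S' s
  have hsmall : ((Unc S' s).card : ℝ) < 1 := by
    have hchain : ((Unc S' s).card : ℝ) ≤ K * (K * 2)⁻¹ := by
      have hcard' : ((Unc S' s).card : ℝ) ≤ K * ∏ t' ∈ Finset.range s, (1 - η t') := by
        simp only [hη]
        rw [← hcardG]
        exact hcard
      calc ((Unc S' s).card : ℝ)
          ≤ K * ∏ t' ∈ Finset.range s, (1 - η t') := hcard'
        _ ≤ K * (K * 2)⁻¹ := by
            apply mul_le_mul_of_nonneg_left _ (le_of_lt hKpos)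
            rw [← hval]
            exact hprod.trans hexp_le
    have : K * (K * 2)⁻¹ = 1 / 2 := by field_simp
    linarith
  have hempty : Unc S' s = ∅ := by
    have : (Unc S' s).card = 0 := by exact_mod_cast Nat.lt_one_iff.mp (by exact_mod_cast hsmall)
    exact Finset.card_eq_zero.mp this
  -- build the permutations
  refine ⟨fun t => Equiv.addLeft (gpick (Unc S' t.val) (S' t.val)).1,
    fun t => Equiv.addLeft (gpick (Unc S' t.val) (S' t.val)).2, ?_⟩
  intro k i
  have hnot : (k, i) ∉ Unc S' s := by rw [hempty]; exact Finset.notMem_empty _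
  obtain ⟨t', ht', hm⟩ := Unc_cover S' s (k, i) hnot
  rw [Finset.mem_image] at hm
  obtain ⟨y, hy, hgy⟩ := hm
  refine ⟨⟨t', ht'⟩, y, ?_, ?_⟩
  · have : S' t' = S ⟨t', ht'⟩ := by simp [hS', ht']
    rwa [this] at hy
  · have h1 : S' (⟨t', ht'⟩ : Fin s).val = S' t' := rfl
    have := hgy
    rw [Prod.ext_iff] at this
    simp only [Prod.fst_add, Prod.snd_add] at this
    exact Prod.ext this.1 this.2
end

section
/- Let G be a finite group acting transitively on a finite nonempty set X, let s be a positive integer, and let S₁,…,S_s ⊆ X be subsets of densities η_t := |S_t|/|X|. If ∑_{t=1}^s η_t ≥ log₂|X| + 1, then there exist group elements g₁,…,g_s ∈ G such that ⋃_{t=1}^s g_t • S_t = X. -/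
open Finset

section Aux

variable {G : Type*} [Group G] [Fintype G] {X : Type*} [Fintype X] [MulAction G X]
  [DecidableEq X]

lemma stmt9_fiber (htrans : ∀ x y : X, ∃ g : G, g • x = y) (z x : X) :
    (univ.filter fun g : G => g • z = x).card * Fintype.card X = Fintype.card G := by
  have key : ∀ x' : X, (univ.filter fun g : G => g • z = x').card
      = (univ.filter fun g : G => g • z = x).card := by
    intro x'
    obtain ⟨g₁, hg₁⟩ := htrans x' x
    apply Finset.card_bij (fun g _ => g₁ * g)
    · intro g hg
      simp only [mem_filter, mem_univ, true_and] at hg ⊢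
      rw [mul_smul, hg, hg₁]
    · intro a _ b _ hab
      exact mul_left_cancel hab
    · intro b hb
      simp only [mem_filter, mem_univ, true_and] at hb
      refine ⟨g₁⁻¹ * b, ?_, by group⟩
      simp only [mem_filter, mem_univ, true_and, mul_smul, hb]
      rw [← hg₁, inv_smul_smul]
  have hG : Fintype.card G = ∑ x' : X, (univ.filter fun g : G => g • z = x').card := by
    rw [← Finset.card_univ]
    exact Finset.card_eq_sum_card_fiberwise (fun g _ => mem_univ _)
  rw [hG]
  simp_rw [key]
  rw [Finset.sum_const, Finset.card_univ, smul_eq_mul, mul_comm]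

lemma stmt9_point (htrans : ∀ x y : X, ∃ g : G, g • x = y) (x : X) (S : Finset X) :
    (univ.filter fun g : G => g⁻¹ • x ∈ S).card * Fintype.card X
      = S.card * Fintype.card G := by
  have hsum : (univ.filter fun g : G => g⁻¹ • x ∈ S).card
      = ∑ z ∈ S, ((univ.filter fun g : G => g⁻¹ • x ∈ S).filter
          fun g => g⁻¹ • x = z).card :=
    Finset.card_eq_sum_card_fiberwise (fun g hg => (mem_filter.mp hg).2)
  rw [hsum, Finset.sum_mul]
  have heach : ∀ z ∈ S, ((univ.filter fun g : G => g⁻¹ • x ∈ S).filter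
      fun g => g⁻¹ • x = z).card * Fintype.card X = Fintype.card G := by
    intro z hz
    have hset : ((univ.filter fun g : G => g⁻¹ • x ∈ S).filter fun g => g⁻¹ • x = z)
        = univ.filter fun g : G => g • z = x := by
      ext g
      simp only [filter_filter, mem_filter, mem_univ, true_and]
      constructor
      · rintro ⟨_, h2⟩; rw [← h2, smul_inv_smul]
      · intro hgz
        have hz' : g⁻¹ • x = z := by rw [← hgz, inv_smul_smul]
        exact ⟨hz' ▸ hz, hz'⟩
    rw [hset, stmt9_fiber htrans]
  rw [Finset.sum_congr rfl heach, Finset.sum_const, smul_eq_mul]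

lemma stmt9_step [Nonempty X] (htrans : ∀ x y : X, ∃ g : G, g • x = y) (U S : Finset X) :
    ∃ g : G, ((U.filter fun x => ∀ y ∈ S, g • y ≠ x).card : ℝ)
      ≤ U.card * (1 - (S.card : ℝ) / (Fintype.card X : ℝ)) := by
  have htot : ∑ g : G, (U.filter fun x => g⁻¹ • x ∈ S).card * Fintype.card X
      = U.card * S.card * Fintype.card G := by
    have swap : ∑ g : G, (U.filter fun x => g⁻¹ • x ∈ S).card
        = ∑ x ∈ U, (univ.filter fun g : G => g⁻¹ • x ∈ S).card := by
      simp_rw [Finset.card_filter]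
      rw [Finset.sum_comm]
    calc ∑ g : G, (U.filter fun x => g⁻¹ • x ∈ S).card * Fintype.card X
        = (∑ g : G, (U.filter fun x => g⁻¹ • x ∈ S).card) * Fintype.card X := by
          rw [Finset.sum_mul]
      _ = ∑ x ∈ U, (univ.filter fun g : G => g⁻¹ • x ∈ S).card * Fintype.card X := by
          rw [swap, Finset.sum_mul]
      _ = ∑ x ∈ U, S.card * Fintype.card G := Finset.sum_congr rfl fun x _ =>
            stmt9_point htrans x S
      _ = U.card * S.card * Fintype.card G := by
          rw [Finset.sum_const, smul_eq_mul]; ring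
  have hmean : ∃ g : G, U.card * S.card
      ≤ (U.filter fun x => g⁻¹ • x ∈ S).card * Fintype.card X := by
    by_contra hcon
    push_neg at hcon
    have hlt : ∑ g : G, (U.filter fun x => g⁻¹ • x ∈ S).card * Fintype.card X
        < ∑ _g : G, U.card * S.card :=
      Finset.sum_lt_sum_of_nonempty univ_nonempty fun g _ => hcon g
    rw [htot, Finset.sum_const, Finset.card_univ, smul_eq_mul] at hlt
    nlinarith [Fintype.card_pos (α := G)]
  obtain ⟨g, hg⟩ := hmean
  refine ⟨g, ?_⟩
  set C := U.filter fun x => g⁻¹ • x ∈ S with hC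
  have hfilter : (U.filter fun x => ∀ y ∈ S, g • y ≠ x) = U \ C := by
    rw [hC, ← Finset.filter_not]
    apply filter_congr
    intro x _
    constructor
    · intro hall hmem
      exact hall _ hmem (smul_inv_smul g x)
    · intro hnot y hy hgy
      exact hnot (by rw [← hgy, inv_smul_smul]; exact hy)
  have hCU : C ⊆ U := filter_subset _ _
  have hNpos : (0 : ℝ) < Fintype.card X := by
    exact_mod_cast Fintype.card_pos (α := X)
  rw [hfilter, Finset.card_sdiff_of_subset hCU, Nat.cast_sub (card_le_card hCU), mul_one_sub]
  have h1 : (U.card : ℝ) * ((S.card : ℝ) / (Fintype.card X : ℝ)) ≤ C.card := by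
    rw [mul_div_assoc', div_le_iff₀ hNpos]
    exact_mod_cast hg
  linarith

lemma stmt9_cover [Nonempty X] (htrans : ∀ x y : X, ∃ g : G, g • x = y) :
    ∀ (s : ℕ) (S : Fin s → Finset X) (U : Finset X),
      ∃ g : Fin s → G, ((U.filter fun x => ∀ t, ∀ y ∈ S t, g t • y ≠ x).card : ℝ)
        ≤ U.card * ∏ t, (1 - ((S t).card : ℝ) / (Fintype.card X : ℝ)) := by
  intro s
  induction s with
  | zero =>
    intro S U
    refine ⟨fun t => t.elim0, ?_⟩
    simp
  | succ n ih =>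
    intro S U
    obtain ⟨g₀, h₀⟩ := stmt9_step htrans U (S 0)
    obtain ⟨g', h'⟩ := ih (fun t => S t.succ) (U.filter fun x => ∀ y ∈ S 0, g₀ • y ≠ x)
    refine ⟨Fin.cons g₀ g', ?_⟩
    have hset : (U.filter fun x => ∀ t : Fin (n + 1), ∀ y ∈ S t, (Fin.cons g₀ g' : Fin (n+1) → G) t • y ≠ x)
        = ((U.filter fun x => ∀ y ∈ S 0, g₀ • y ≠ x).filter
            fun x => ∀ t : Fin n, ∀ y ∈ S t.succ, g' t • y ≠ x) := by
      rw [Finset.filter_filter]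
      apply filter_congr
      intro x _
      rw [Fin.forall_fin_succ]
      simp [Fin.cons_zero, Fin.cons_succ]
    have hfac : ∀ t : Fin (n + 1),
        (0 : ℝ) ≤ 1 - ((S t).card : ℝ) / (Fintype.card X : ℝ) := by
      intro t
      have h1 : ((S t).card : ℝ) ≤ (Fintype.card X : ℝ) := by
        exact_mod_cast Finset.card_le_card (subset_univ (S t)) |>.trans_eq
          Finset.card_univ
      have hNpos : (0 : ℝ) < Fintype.card X := by
        exact_mod_cast Fintype.card_pos (α := X)
      have := div_le_one_of_le₀ h1 hNpos.le
      linarith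
    have hprod : (0 : ℝ) ≤ ∏ t : Fin n, (1 - ((S t.succ).card : ℝ) / (Fintype.card X : ℝ)) :=
      Finset.prod_nonneg fun t _ => hfac t.succ
    rw [hset]
    calc (((U.filter fun x => ∀ y ∈ S 0, g₀ • y ≠ x).filter
            fun x => ∀ t : Fin n, ∀ y ∈ S t.succ, g' t • y ≠ x).card : ℝ)
        ≤ ((U.filter fun x => ∀ y ∈ S 0, g₀ • y ≠ x).card : ℝ)
            * ∏ t : Fin n, (1 - ((S t.succ).card : ℝ) / (Fintype.card X : ℝ)) := h'
      _ ≤ (U.card * (1 - ((S 0).card : ℝ) / (Fintype.card X : ℝ)))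
            * ∏ t : Fin n, (1 - ((S t.succ).card : ℝ) / (Fintype.card X : ℝ)) :=
          mul_le_mul_of_nonneg_right h₀ hprod
      _ = U.card * ∏ t : Fin (n + 1), (1 - ((S t).card : ℝ) / (Fintype.card X : ℝ)) := by
          rw [Fin.prod_univ_succ]; ring

end Aux

/-- combinatorial core of the Hole Lemma. If a finite group `G` acts
transitively on a finite nonempty set `X` and `S₁,…,S_s ⊆ X` have densities `η_t` with
`∑ η_t ≥ log₂|X| + 1`, then there are `g₁,…,g_s ∈ G` with `⋃ g_t • S_t = X`. -/
theorem stmt9 (G : Type*) [Group G] [Fintype G] (X : Type*) [Fintype X] [Nonempty X]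
    [MulAction G X] (htrans : ∀ x y : X, ∃ g : G, g • x = y)
    (s : ℕ) (hs : 0 < s) (S : Fin s → Finset X)
    (h : Real.logb 2 (Fintype.card X) + 1 ≤
        ∑ t, ((S t).card : ℝ) / (Fintype.card X : ℝ)) :
    ∃ g : Fin s → G, ∀ x : X, ∃ t, ∃ y ∈ S t, g t • y = x := by
  classical
  set N : ℝ := (Fintype.card X : ℝ) with hN
  have hNpos : (0 : ℝ) < N := by rw [hN]; exact_mod_cast Fintype.card_pos (α := X)
  set η : Fin s → ℝ := fun t => ((S t).card : ℝ) / N with hη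
  have hηnn : ∀ t, 0 ≤ η t := fun t => div_nonneg (Nat.cast_nonneg _) hNpos.le
  have hη1 : ∀ t, η t ≤ 1 := by
    intro t
    apply div_le_one_of_le₀ _ hNpos.le
    rw [hN]
    exact_mod_cast Finset.card_le_univ (S t)
  have hL : (0 : ℝ) < Real.log 2 := Real.log_pos one_lt_two
  have hL1 : Real.log 2 ≤ 1 := by
    have := Real.log_le_sub_one_of_pos (x := 2) (by norm_num)
    linarith
  -- each factor bounded by an exponential
  have hfac : ∀ t, 1 - η t ≤ Real.exp (-(η t * Real.log 2)) := by
    intro t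
    have h1 : -(η t * Real.log 2) + 1 ≤ Real.exp (-(η t * Real.log 2)) :=
      Real.add_one_le_exp _
    have h2 : η t * Real.log 2 ≤ η t * 1 :=
      mul_le_mul_of_nonneg_left hL1 (hηnn t)
    linarith
  have hprodexp : ∏ t, (1 - η t) ≤ Real.exp (-((∑ t, η t) * Real.log 2)) := by
    have : ∏ t, (1 - η t) ≤ ∏ t, Real.exp (-(η t * Real.log 2)) := by
      apply Finset.prod_le_prod
      · intro t _; linarith [hη1 t]
      · intro t _; exact hfac t
    calc ∏ t, (1 - η t) ≤ ∏ t, Real.exp (-(η t * Real.log 2)) := this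
      _ = Real.exp (∑ t, -(η t * Real.log 2)) := (Real.exp_sum _ _).symm
      _ = Real.exp (-((∑ t, η t) * Real.log 2)) := by
          congr 1
          rw [Finset.sum_mul, ← Finset.sum_neg_distrib]
  -- bound the exponential
  have hexp : Real.exp (-((∑ t, η t) * Real.log 2)) ≤ N⁻¹ * 2⁻¹ := by
    have hmono : (Real.logb 2 N + 1) * Real.log 2 ≤ (∑ t, η t) * Real.log 2 :=
      mul_le_mul_of_nonneg_right h hL.le
    have hval : (Real.logb 2 N + 1) * Real.log 2 = Real.log N + Real.log 2 := by
      rw [Real.logb, add_mul, one_mul, div_mul_cancel₀ _ (ne_of_gt hL)]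
    calc Real.exp (-((∑ t, η t) * Real.log 2))
        ≤ Real.exp (-(Real.log N + Real.log 2)) := by
          apply Real.exp_le_exp.mpr; rw [← hval]; linarith
      _ = N⁻¹ * 2⁻¹ := by
          rw [neg_add, Real.exp_add, Real.exp_neg, Real.exp_neg,
            Real.exp_log hNpos, Real.exp_log (by norm_num : (0:ℝ) < 2)]
  obtain ⟨g, hg⟩ := stmt9_cover htrans s S (univ : Finset X)
  refine ⟨g, fun x => ?_⟩
  have hbound : (((univ : Finset X).filter
      fun x => ∀ t, ∀ y ∈ S t, g t • y ≠ x).card : ℝ) < 1 := by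
    have h2 : ((univ : Finset X).card : ℝ) * ∏ t, (1 - η t) ≤ N * (N⁻¹ * 2⁻¹) := by
      rw [Finset.card_univ, ← hN]
      exact mul_le_mul_of_nonneg_left (hprodexp.trans hexp) hNpos.le
    have h3 : N * (N⁻¹ * 2⁻¹) = 2⁻¹ := by
      field_simp
    calc (((univ : Finset X).filter fun x => ∀ t, ∀ y ∈ S t, g t • y ≠ x).card : ℝ)
        ≤ ((univ : Finset X).card : ℝ) * ∏ t, (1 - η t) := hg
      _ ≤ N * (N⁻¹ * 2⁻¹) := h2
      _ < 1 := by rw [h3]; norm_num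
  have hzero : ((univ : Finset X).filter
      fun x => ∀ t, ∀ y ∈ S t, g t • y ≠ x).card = 0 := by
    by_contra hne
    have : 1 ≤ ((univ : Finset X).filter
        fun x => ∀ t, ∀ y ∈ S t, g t • y ≠ x).card := Nat.one_le_iff_ne_zero.mpr hne
    have : (1 : ℝ) ≤ (((univ : Finset X).filter
        fun x => ∀ t, ∀ y ∈ S t, g t • y ≠ x).card : ℝ) := by exact_mod_cast this
    linarith
  have hempty := Finset.card_eq_zero.mp hzero
  have hx : x ∉ (univ : Finset X).filter fun x => ∀ t, ∀ y ∈ S t, g t • y ≠ x := by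
    rw [hempty]; exact notMem_empty x
  simp only [mem_filter, mem_univ, true_and, not_forall] at hx
  push_neg at hx
  obtain ⟨t, y, hy, hgy⟩ := hx
  exact ⟨t, y, hy, hgy⟩
end

section
/- Let n be a positive integer and let α be a probability distribution on the level-2 components {(i,j,k) ∈ {0,…,4}³ : i+j+k = 4} such that n·α(i,j,k) ∈ ℕ for all (i,j,k), with α(0,2,2) = α(2,0,2) = c and α(1,1,2) = d, where 2c + d > 0. Let β_A and β_B be probability distributions on {0,1,2} with dn·β_A(a) ∈ ℕ and cn·β_B(a) ∈ ℕ for all a, and let β_avg := (d·β_A + 2c·β_B)/(2c+d). Fix K ∈ {0,…,4}ⁿ with |{t : K_t = k}| = n·α_Z(k) for every k, where α_Z is the Z-marginal of α, and fix K̂ ∈ {0,1,2}^{2n} with K̂_{2t−1} + K̂_{2t} = K_t for all t and such that, writing S₂ = {t : K_t = 2}, |{t ∈ S₂ : K̂_{2t−1} = a}| = β_avg(a)·|S₂| for every a ∈ {0,1,2}. Choose (I,J) uniformly at random among all pairs I, J ∈ {0,…,4}ⁿ such that |{t : (I_t,J_t,K_t) = (i,j,k)}| = n·α(i,j,k) for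 every component (i,j,k) (this set of pairs is nonempty). Then, writing S_{i,j,k} = {t : (I_t,J_t,K_t) = (i,j,k)}, the probability that K̂ is compatible with (I,J,K) — i.e. that |{t ∈ S_{0,2,2} : K̂_{2t−1} = a}| = cn·β_B(a), |{t ∈ S_{2,0,2} : K̂_{2t−1} = a}| = cn·β_B(a), and |{t ∈ S_{1,1,2} : K̂_{2t−1} = a}| = dn·β_A(a) for all a ∈ {0,1,2} — equals multinomial(cn; (cn·β_B(a))_a)² · multinomial(dn; (dn·β_A(a))_a) / multinomial((2c+d)n; ((2c+d)n·β_avg(a))_a). In particular this probability is the same for every K̂ satisfying the stated average-split condition. -/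
open Finset Nat

/-! ### Auxiliary definitions and lemmas -/

/-- The projection sending the `I`-value of a level-2 component with `k = 2` to its class. -/
def stmt11ρ : Fin 5 → Fin 3 := fun i => if i = 0 then 0 else if i = 1 then 1 else 2

lemma stmt11_tri : ∀ i j : Fin 5, (i : ℕ) + (j : ℕ) + 2 = 4 →
    ((i = 0 ∧ j = 2) ↔ stmt11ρ i = 0) ∧ ((i = 1 ∧ j = 1) ↔ stmt11ρ i = 1) ∧
    ((i = 2 ∧ j = 0) ↔ stmt11ρ i = 2) := by decide

lemma stmt11_fin3_cases : ∀ x : Fin 3, x = 0 ∨ x = 1 ∨ x = 2 := by decide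

/-- Two functions with equal fiber cardinalities differ by a permutation. -/
lemma stmt11_exists_perm {N : ℕ} {Y : Type*} [DecidableEq Y] (h h' : Fin N → Y)
    (hc : ∀ y, (univ.filter fun t => h t = y).card = (univ.filter fun t => h' t = y).card) :
    ∃ σ : Equiv.Perm (Fin N), ∀ t, h (σ t) = h' t := by
  have hcard : ∀ y, Fintype.card {t // h' t = y} = Fintype.card {t // h t = y} := by
    intro y
    rw [Fintype.card_subtype, Fintype.card_subtype]
    exact (hc y).symm
  refine ⟨Equiv.ofFiberEquiv (f := h') (g := h) fun y => Fintype.equivOfCardEq (hcard y), ?_⟩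
  intro t
  exact Equiv.ofFiberEquiv_map _ t

lemma stmt11_card_filter_comp {N : ℕ} (σ : Equiv.Perm (Fin N)) (p : Fin N → Prop)
    [DecidablePred p] :
    (univ.filter fun t => p (σ t)).card = (univ.filter p).card := by
  refine card_nbij (fun t => σ t) ?_ ?_ ?_
  · intro t ht; simp only [mem_coe, mem_filter, mem_univ, true_and] at *; exact ht
  · intro a _ b _ hab; exact σ.injective hab
  · intro b hb
    simp only [Set.mem_image, mem_coe, mem_filter, mem_univ, true_and] at *
    exact ⟨σ.symm b, by simpa using hb, by simp⟩

lemma stmt11_binom (Nc : ℕ) (m : Fin 3 → ℕ) (hm : m 0 + m 1 + m 2 = Nc) :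
    Nc.choose (m 0) * ((m 1 + m 2).choose (m 1)) = Nat.multinomial univ m := by
  have hspec := Nat.multinomial_spec univ m
  rw [Fin.prod_univ_three, Fin.sum_univ_three] at hspec
  have e1 : (m 1 + m 2).choose (m 1) * (m 1)! * (m 2)! = (m 1 + m 2)! := by
    have := Nat.choose_mul_factorial_mul_factorial (Nat.le_add_right (m 1) (m 2))
    simpa using this
  have e2 : Nc.choose (m 0) * (m 0)! * (m 1 + m 2)! = (m 0 + m 1 + m 2)! := by
    have h := Nat.choose_mul_factorial_mul_factorial
      (show m 0 ≤ m 0 + (m 1 + m 2) from Nat.le_add_right _ _)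
    have e3 : m 0 + (m 1 + m 2) - m 0 = m 1 + m 2 := by omega
    have e4 : m 0 + (m 1 + m 2) = Nc := by omega
    rw [e3, e4] at h
    rw [h]
    congr 1
    omega
  have h1 : Nc.choose (m 0) * (m 1 + m 2).choose (m 1) * ((m 0)! * ((m 1)! * (m 2)!))
      = (m 0 + m 1 + m 2)! := by
    calc Nc.choose (m 0) * (m 1 + m 2).choose (m 1) * ((m 0)! * ((m 1)! * (m 2)!))
        = Nc.choose (m 0) * (m 0)! * ((m 1 + m 2).choose (m 1) * (m 1)! * (m 2)!) := by ring
      _ = Nc.choose (m 0) * (m 0)! * (m 1 + m 2)! := by rw [e1]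
      _ = (m 0 + m 1 + m 2)! := e2
  have h2 : Nat.multinomial univ m * ((m 0)! * ((m 1)! * (m 2)!)) = (m 0 + m 1 + m 2)! := by
    rw [← hspec]; ring
  have hpos : 0 < (m 0)! * ((m 1)! * (m 2)!) := by positivity
  apply Nat.eq_of_mul_eq_mul_right hpos
  rw [h2, h1]

/-- The number of `Fin 3`-valued functions vanishing off `S` with prescribed fiber sizes on `S`
is the multinomial coefficient. -/
lemma stmt11_countA {N : ℕ} (S : Finset (Fin N)) (m : Fin 3 → ℕ)
    (hm : m 0 + m 1 + m 2 = S.card) :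
    (univ.filter fun g : Fin N → Fin 3 =>
      (∀ b, (S.filter fun t => g t = b).card = m b) ∧ ∀ t ∉ S, g t = 0).card
      = Nat.multinomial univ m := by
  have hcard : ((S.powersetCard (m 0)).sigma fun A => (S \ A).powersetCard (m 1)).card
      = (S.card.choose (m 0)) * ((m 1 + m 2).choose (m 1)) := by
    rw [card_sigma]
    have : ∀ A ∈ S.powersetCard (m 0),
        ((S \ A).powersetCard (m 1)).card = (m 1 + m 2).choose (m 1) := by
      intro A hA
      obtain ⟨hAS, hAcard⟩ := mem_powersetCard.mp hA
      rw [card_powersetCard, card_sdiff_of_subset hAS, hAcard]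
      congr 1
      omega
    rw [sum_congr rfl this, sum_const, card_powersetCard, smul_eq_mul]
  have hmain : (univ.filter fun g : Fin N → Fin 3 =>
      (∀ b, (S.filter fun t => g t = b).card = m b) ∧ ∀ t ∉ S, g t = 0).card
      = ((S.powersetCard (m 0)).sigma fun A => (S \ A).powersetCard (m 1)).card := by
    refine card_bij (fun g _ => ⟨S.filter fun t => g t = 0, S.filter fun t => g t = 1⟩)
      ?_ ?_ ?_
    · intro g hg
      simp only [mem_filter, mem_univ, true_and] at hg
      refine mem_sigma.mpr ⟨mem_powersetCard.mpr ⟨filter_subset _ _, hg.1 0⟩,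
        mem_powersetCard.mpr ⟨?_, hg.1 1⟩⟩
      intro t ht
      simp only [mem_filter] at ht
      simp only [mem_sdiff, mem_filter]
      exact ⟨ht.1, fun h => by simp [h.2] at ht⟩
    · intro g hg g' hg' heq
      simp only [mem_filter, mem_univ, true_and] at hg hg'
      rw [Sigma.ext_iff] at heq
      obtain ⟨heq1, heq2⟩ := heq
      rw [heq_eq_eq] at heq2
      dsimp only at heq1 heq2
      funext t
      by_cases htS : t ∈ S
      · rcases stmt11_fin3_cases (g t) with h0 | h1 | h2
        · have : t ∈ S.filter fun t => g' t = 0 := by rw [← heq1]; simp [htS, h0]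
          simp only [mem_filter] at this
          rw [h0, this.2]
        · have : t ∈ S.filter fun t => g' t = 1 := by rw [← heq2]; simp [htS, h1]
          simp only [mem_filter] at this
          rw [h1, this.2]
        · have h0' : t ∉ S.filter fun t => g' t = 0 := by
            rw [← heq1]; simp [htS, h2]
          have h1' : t ∉ S.filter fun t => g' t = 1 := by
            rw [← heq2]; simp [htS, h2]
          simp only [mem_filter, htS, true_and] at h0' h1'
          rcases stmt11_fin3_cases (g' t) with h | h | h
          · exact absurd h h0'
          · exact absurd h h1'
          · rw [h2, h]
      · rw [hg.2 t htS, hg'.2 t htS]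
    · rintro ⟨A, B⟩ hAB
      rw [mem_sigma, mem_powersetCard, mem_powersetCard] at hAB
      obtain ⟨⟨hAS, hAc⟩, hBS, hBc⟩ := hAB
      have hBS' : B ⊆ S := fun t ht => (mem_sdiff.mp (hBS ht)).1
      have hBA : ∀ t ∈ B, t ∉ A := fun t ht => (mem_sdiff.mp (hBS ht)).2
      have hf0 : (S.filter fun t =>
          (if t ∈ A then (0:Fin 3) else if t ∈ B then 1 else if t ∈ S then 2 else 0) = 0) = A := by
        ext t
        simp only [mem_filter]
        constructor
        · rintro ⟨htS, ht⟩
          by_contra htA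
          rw [if_neg htA] at ht
          by_cases htB : t ∈ B <;> simp [htB, htS] at ht
        · intro htA
          exact ⟨hAS htA, by rw [if_pos htA]⟩
      have hf1 : (S.filter fun t =>
          (if t ∈ A then (0:Fin 3) else if t ∈ B then 1 else if t ∈ S then 2 else 0) = 1) = B := by
        ext t
        simp only [mem_filter]
        constructor
        · rintro ⟨htS, ht⟩
          by_cases htA : t ∈ A
          · simp [htA] at ht
          by_contra htB
          simp [htA, htB, htS] at ht
        · intro htB
          exact ⟨hBS' htB, by rw [if_neg (hBA t htB), if_pos htB]⟩
      have hf2 : (S.filter fun t =>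
          (if t ∈ A then (0:Fin 3) else if t ∈ B then 1 else if t ∈ S then 2 else 0) = 2)
          = S \ (A ∪ B) := by
        ext t
        simp only [mem_filter, mem_sdiff, mem_union]
        constructor
        · rintro ⟨htS, ht⟩
          refine ⟨htS, ?_⟩
          rintro (htA | htB)
          · simp [htA] at ht
          · simp [hBA t htB, htB] at ht
        · rintro ⟨htS, ht⟩
          push_neg at ht
          exact ⟨htS, by rw [if_neg ht.1, if_neg ht.2, if_pos htS]⟩
      refine ⟨fun t => if t ∈ A then 0 else if t ∈ B then 1 else if t ∈ S then 2 else 0,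
        ?_, ?_⟩
      · simp only [mem_filter, mem_univ, true_and]
        constructor
        · intro b
          rcases stmt11_fin3_cases b with rfl | rfl | rfl
          · rw [hf0, hAc]
          · rw [hf1, hBc]
          · rw [hf2, card_sdiff_of_subset (by
              intro t ht
              rcases mem_union.mp ht with h | h
              exacts [hAS h, hBS' h])]
            rw [card_union_of_disjoint (disjoint_left.mpr hBA).symm, hAc, hBc]
            omega
        · intro t htS
          rw [if_neg (fun h => htS (hAS h)), if_neg (fun h => htS (hBS' h)), if_neg htS]
      · exact Sigma.ext hf0 (heq_of_eq hf1)
  rw [hmain, hcard]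
  exact stmt11_binom S.card m hm

lemma stmt11_mask_filter {N : ℕ} (T : Finset (Fin N)) (g : Fin N → Fin 3) (b : Fin 3) :
    (T.filter fun t => (if t ∈ T then g t else 0) = b) = T.filter fun t => g t = b := by
  apply filter_congr
  intro t ht
  rw [if_pos ht]

/-- Counting functions with prescribed fiber sizes on three disjoint sets factors as a product. -/
lemma stmt11_countProd {N : ℕ} (T0 T1 T2 : Finset (Fin N)) (μ0 μ1 μ2 : Fin 3 → ℕ)
    (h01 : Disjoint T0 T1) (h02 : Disjoint T0 T2) (h12 : Disjoint T1 T2) :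
    (univ.filter fun g : Fin N → Fin 3 =>
      (∀ b, (T0.filter fun t => g t = b).card = μ0 b) ∧
      (∀ b, (T1.filter fun t => g t = b).card = μ1 b) ∧
      (∀ b, (T2.filter fun t => g t = b).card = μ2 b) ∧
      (∀ t, t ∉ T0 ∪ T1 ∪ T2 → g t = 0)).card =
    (univ.filter fun g : Fin N → Fin 3 =>
      (∀ b, (T0.filter fun t => g t = b).card = μ0 b) ∧ ∀ t ∉ T0, g t = 0).card *
    ((univ.filter fun g : Fin N → Fin 3 =>
      (∀ b, (T1.filter fun t => g t = b).card = μ1 b) ∧ ∀ t ∉ T1, g t = 0).card *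
    (univ.filter fun g : Fin N → Fin 3 =>
      (∀ b, (T2.filter fun t => g t = b).card = μ2 b) ∧ ∀ t ∉ T2, g t = 0).card) := by
  rw [← card_product, ← card_product]
  refine card_bij (fun g _ =>
    ((fun t => if t ∈ T0 then g t else 0),
     ((fun t => if t ∈ T1 then g t else 0), (fun t => if t ∈ T2 then g t else 0)))) ?_ ?_ ?_
  · intro g hg
    simp only [mem_filter, mem_univ, true_and] at hg
    obtain ⟨hg0, hg1, hg2, hgo⟩ := hg
    refine mem_product.mpr ⟨?_, mem_product.mpr ⟨?_, ?_⟩⟩ <;>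
      simp only [mem_filter, mem_univ, true_and]
    · exact ⟨fun b => by rw [stmt11_mask_filter]; exact hg0 b, fun t ht => if_neg ht⟩
    · exact ⟨fun b => by rw [stmt11_mask_filter]; exact hg1 b, fun t ht => if_neg ht⟩
    · exact ⟨fun b => by rw [stmt11_mask_filter]; exact hg2 b, fun t ht => if_neg ht⟩
  · intro g hg g' hg' heq
    simp only [mem_filter, mem_univ, true_and] at hg hg'
    simp only [Prod.mk.injEq] at heq
    obtain ⟨e0, e1, e2⟩ := heq
    funext t
    by_cases ht0 : t ∈ T0
    · have := congrFun e0 t; simpa [ht0] using this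
    by_cases ht1 : t ∈ T1
    · have := congrFun e1 t; simpa [ht1] using this
    by_cases ht2 : t ∈ T2
    · have := congrFun e2 t; simpa [ht2] using this
    · rw [hg.2.2.2 t (by simp [ht0, ht1, ht2]), hg'.2.2.2 t (by simp [ht0, ht1, ht2])]
  · rintro ⟨g0, g1, g2⟩ hmem
    rw [mem_product] at hmem
    obtain ⟨hm0, hm12⟩ := hmem
    rw [mem_product] at hm12
    obtain ⟨hm1, hm2⟩ := hm12
    simp only [mem_filter, mem_univ, true_and] at hm0 hm1 hm2
    have d01 := disjoint_left.mp h01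
    have d02 := disjoint_left.mp h02
    have d12 := disjoint_left.mp h12
    refine ⟨fun t => if t ∈ T0 then g0 t else if t ∈ T1 then g1 t else if t ∈ T2 then g2 t
      else 0, ?_, ?_⟩
    · simp only [mem_filter, mem_univ, true_and]
      refine ⟨fun b => ?_, fun b => ?_, fun b => ?_, fun t ht => ?_⟩
      · rw [show (T0.filter fun t => (if t ∈ T0 then g0 t else if t ∈ T1 then g1 t
            else if t ∈ T2 then g2 t else 0) = b) = T0.filter fun t => g0 t = b from
          filter_congr fun t ht => by rw [if_pos ht]]
        exact hm0.1 b
      · rw [show (T1.filter fun t => (if t ∈ T0 then g0 t else if t ∈ T1 then g1 t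
            else if t ∈ T2 then g2 t else 0) = b) = T1.filter fun t => g1 t = b from
          filter_congr fun t ht => by rw [if_neg (fun h => d01 h ht), if_pos ht]]
        exact hm1.1 b
      · rw [show (T2.filter fun t => (if t ∈ T0 then g0 t else if t ∈ T1 then g1 t
            else if t ∈ T2 then g2 t else 0) = b) = T2.filter fun t => g2 t = b from
          filter_congr fun t ht => by
            rw [if_neg (fun h => d02 h ht), if_neg (fun h => d12 h ht), if_pos ht]]
        exact hm2.1 b
      · simp only [mem_union, not_or] at ht
        rw [if_neg ht.1.1, if_neg ht.1.2, if_neg ht.2]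
    · simp only [Prod.mk.injEq]
      refine ⟨funext fun t => ?_, funext fun t => ?_, funext fun t => ?_⟩
      · by_cases ht : t ∈ T0
        · rw [if_pos ht, if_pos ht]
        · rw [if_neg ht, hm0.2 t ht]
      · by_cases ht : t ∈ T1
        · rw [if_pos ht, if_neg (fun h => d01 h ht), if_pos ht]
        · rw [if_neg ht, hm1.2 t ht]
      · by_cases ht : t ∈ T2
        · rw [if_pos ht, if_neg (fun h => d02 h ht), if_neg (fun h => d12 h ht), if_pos ht]
        · rw [if_neg ht, hm2.2 t ht]

lemma stmt11_cast_mult (f : Fin 3 → ℕ) :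
    (Nat.multinomial univ f : ℝ)
      = (f 0 + f 1 + f 2)! / (((f 0)! : ℝ) * (((f 1)! : ℝ) * ((f 2)! : ℝ))) := by
  have hspec := Nat.multinomial_spec univ f
  rw [Fin.prod_univ_three, Fin.sum_univ_three] at hspec
  have h2 : Nat.multinomial univ f * ((f 0)! * ((f 1)! * (f 2)!)) = (f 0 + f 1 + f 2)! := by
    rw [← hspec]; ring
  rw [eq_div_iff (by positivity)]
  exact_mod_cast h2

set_option maxHeartbeats 2000000 in
/-- the compatibility probability `p_comp` for the second power.
With `α` a level-2 component distribution (`α(0,2,2) = α(2,0,2) = c`, `α(1,1,2) = d`),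
split distributions `β_A, β_B` with integral counts `cA, cB`, a level-2 Z-index sequence `K`
consistent with the Z-marginal of `α`, and a refinement `K̂` obeying the average split
distribution on `S₂`, the probability that `K̂` is compatible with a uniformly random triple
`(I,J,K)` consistent with `α` equals
`multinomial(cn;cnβ_B)² · multinomial(dn;dnβ_A) / multinomial((2c+d)n;(2c+d)nβ_avg)`. -/
theorem stmt11 (n : ℕ) (hn : 0 < n)
    (α : Fin 5 → Fin 5 → Fin 5 → ℝ) (c d : ℝ)
    (hα0 : ∀ i j k, 0 ≤ α i j k)
    (hαsupp : ∀ i j k : Fin 5, (i : ℕ) + (j : ℕ) + (k : ℕ) ≠ 4 → α i j k = 0)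
    (hαsum : ∑ i, ∑ j, ∑ k, α i j k = 1)
    (hc1 : α 0 2 2 = c) (hc2 : α 2 0 2 = c) (hd : α 1 1 2 = d)
    (hcd : 0 < 2 * c + d)
    (βA βB : Fin 3 → ℝ)
    (hβA0 : ∀ a, 0 ≤ βA a) (hβA1 : ∑ a, βA a = 1)
    (hβB0 : ∀ a, 0 ≤ βB a) (hβB1 : ∑ a, βB a = 1)
    (cnt : Fin 5 → Fin 5 → Fin 5 → ℕ)
    (hcnt : ∀ i j k, (cnt i j k : ℝ) = n * α i j k)
    (cA cB : Fin 3 → ℕ)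
    (hcA : ∀ a, (cA a : ℝ) = d * n * βA a)
    (hcB : ∀ a, (cB a : ℝ) = c * n * βB a)
    (K : Fin n → Fin 5)
    (hK : ∀ k : Fin 5, ((univ.filter fun t => K t = k).card : ℝ) = n * ∑ i, ∑ j, α i j k)
    (Kh : Fin n → Fin 3 × Fin 3)
    (hKh : ∀ t, ((Kh t).1 : ℕ) + ((Kh t).2 : ℕ) = (K t : ℕ))
    (hKavg : ∀ a : Fin 3,
      ((univ.filter fun t => K t = 2 ∧ (Kh t).1 = a).card : ℝ) =
        ((d * βA a + 2 * c * βB a) / (2 * c + d)) *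
          ((univ.filter fun t => K t = 2).card : ℝ))
    (hne : (univ.filter (fun IJ : (Fin n → Fin 5) × (Fin n → Fin 5) =>
        ∀ i j k : Fin 5,
          (univ.filter fun t => IJ.1 t = i ∧ IJ.2 t = j ∧ K t = k).card = cnt i j k)).Nonempty) :
    ((((univ.filter (fun IJ : (Fin n → Fin 5) × (Fin n → Fin 5) =>
            ∀ i j k : Fin 5,
              (univ.filter fun t => IJ.1 t = i ∧ IJ.2 t = j ∧ K t = k).card = cnt i j k)).filter
          (fun IJ =>
            (∀ a : Fin 3, (univ.filter fun t =>
                IJ.1 t = 0 ∧ IJ.2 t = 2 ∧ K t = 2 ∧ (Kh t).1 = a).card = cB a) ∧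
            (∀ a : Fin 3, (univ.filter fun t =>
                IJ.1 t = 2 ∧ IJ.2 t = 0 ∧ K t = 2 ∧ (Kh t).1 = a).card = cB a) ∧
            (∀ a : Fin 3, (univ.filter fun t =>
                IJ.1 t = 1 ∧ IJ.2 t = 1 ∧ K t = 2 ∧ (Kh t).1 = a).card = cA a))).card : ℝ) /
        ((univ.filter (fun IJ : (Fin n → Fin 5) × (Fin n → Fin 5) =>
            ∀ i j k : Fin 5,
              (univ.filter fun t => IJ.1 t = i ∧ IJ.2 t = j ∧ K t = k).card = cnt i j k)).card : ℝ))
      = ((Nat.multinomial univ cB : ℝ) ^ 2 * (Nat.multinomial univ cA : ℝ)) /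
          ((Nat.multinomial univ fun a => cA a + 2 * cB a : ℕ) : ℝ) := by
  classical
  -- Abbreviations
  set Cons : Finset ((Fin n → Fin 5) × (Fin n → Fin 5)) :=
    univ.filter (fun IJ : (Fin n → Fin 5) × (Fin n → Fin 5) =>
      ∀ i j k : Fin 5,
        (univ.filter fun t => IJ.1 t = i ∧ IJ.2 t = j ∧ K t = k).card = cnt i j k) with hConsdef
  set Φ : ((Fin n → Fin 5) × (Fin n → Fin 5)) → (Fin n → Fin 3) :=
    fun IJ t => if K t = 2 then stmt11ρ (IJ.1 t) else 0 with hΦdef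
  set S2 : Finset (Fin n) := univ.filter fun t => K t = 2 with hS2def
  set Ta : Fin 3 → Finset (Fin n) :=
    fun a => univ.filter fun t => K t = 2 ∧ (Kh t).1 = a with hTadef
  set sz : Fin 3 → ℕ :=
    fun b => if b = 0 then cnt 0 2 2 else if b = 1 then cnt 1 1 2 else cnt 2 0 2 with hszdef
  set μf : Fin 3 → Fin 3 → ℕ :=
    fun a b => if b = 0 then cB a else if b = 1 then cA a else cB a with hμfdef
  set Gvalid : Finset (Fin n → Fin 3) :=
    univ.filter fun g : Fin n → Fin 3 =>
      (∀ b, (S2.filter fun t => g t = b).card = sz b) ∧ ∀ t ∉ S2, g t = 0 with hGvdef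
  set Gcomp : Finset (Fin n → Fin 3) :=
    univ.filter fun g : Fin n → Fin 3 =>
      (∀ b, ((Ta 0).filter fun t => g t = b).card = μf 0 b) ∧
      (∀ b, ((Ta 1).filter fun t => g t = b).card = μf 1 b) ∧
      (∀ b, ((Ta 2).filter fun t => g t = b).card = μf 2 b) ∧
      (∀ t, t ∉ Ta 0 ∪ Ta 1 ∪ Ta 2 → g t = 0) with hGcdef
  -- numeric facts
  have hβA1' : βA 0 + βA 1 + βA 2 = 1 := by rw [← hβA1, Fin.sum_univ_three]
  have hβB1' : βB 0 + βB 1 + βB 2 = 1 := by rw [← hβB1, Fin.sum_univ_three]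
  have hcnt0 : ∀ i j k : Fin 5, (i : ℕ) + (j : ℕ) + (k : ℕ) ≠ 4 → cnt i j k = 0 := by
    intro i j k h
    have h1 := hcnt i j k
    rw [hαsupp i j k h, mul_zero] at h1
    exact_mod_cast h1
  have hz : ∀ i j : Fin 5, (i : ℕ) + (j : ℕ) ≠ 2 → α i j 2 = 0 := by
    intro i j h
    refine hαsupp i j 2 ?_
    have : ((2 : Fin 5) : ℕ) = 2 := rfl
    omega
  have hsum2 : ∑ i, ∑ j, α i j 2 = α 0 2 2 + α 1 1 2 + α 2 0 2 := by
    rw [Fin.sum_univ_five]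
    rw [Fin.sum_univ_five (f := fun j => α 0 j 2), Fin.sum_univ_five (f := fun j => α 1 j 2),
      Fin.sum_univ_five (f := fun j => α 2 j 2), Fin.sum_univ_five (f := fun j => α 3 j 2),
      Fin.sum_univ_five (f := fun j => α 4 j 2)]
    rw [hz 0 0 (by decide), hz 0 1 (by decide), hz 0 3 (by decide), hz 0 4 (by decide),
      hz 1 0 (by decide), hz 1 2 (by decide), hz 1 3 (by decide), hz 1 4 (by decide),
      hz 2 1 (by decide), hz 2 2 (by decide), hz 2 3 (by decide), hz 2 4 (by decide),
      hz 3 0 (by decide), hz 3 1 (by decide), hz 3 2 (by decide), hz 3 3 (by decide),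
      hz 3 4 (by decide), hz 4 0 (by decide), hz 4 1 (by decide), hz 4 2 (by decide),
      hz 4 3 (by decide), hz 4 4 (by decide)]
    ring
  have hS2card : ((S2.card : ℝ)) = n * (2 * c + d) := by
    rw [hS2def]
    rw [hK 2, hsum2, hc1, hc2, hd]
    ring
  have hTacardR : ∀ a : Fin 3, ((Ta a).card : ℝ) = (cA a : ℝ) + 2 * (cB a : ℝ) := by
    intro a
    have h := hKavg a
    simp only [hTadef]
    rw [h, hS2card, hcA, hcB]
    field_simp
  have hTacard : ∀ a : Fin 3, (Ta a).card = cA a + 2 * cB a := by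
    intro a
    have := hTacardR a
    exact_mod_cast this
  have hsumB : cB 0 + cB 1 + cB 2 = cnt 0 2 2 := by
    have : ((cB 0 + cB 1 + cB 2 : ℕ) : ℝ) = ((cnt 0 2 2 : ℕ) : ℝ) := by
      push_cast
      rw [hcB 0, hcB 1, hcB 2, hcnt 0 2 2, hc1]
      linear_combination (c * (n : ℝ)) * hβB1'
    exact_mod_cast this
  have hsumB' : cB 0 + cB 1 + cB 2 = cnt 2 0 2 := by
    have : ((cB 0 + cB 1 + cB 2 : ℕ) : ℝ) = ((cnt 2 0 2 : ℕ) : ℝ) := by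
      push_cast
      rw [hcB 0, hcB 1, hcB 2, hcnt 2 0 2, hc2]
      linear_combination (c * (n : ℝ)) * hβB1'
    exact_mod_cast this
  have hsumA : cA 0 + cA 1 + cA 2 = cnt 1 1 2 := by
    have : ((cA 0 + cA 1 + cA 2 : ℕ) : ℝ) = ((cnt 1 1 2 : ℕ) : ℝ) := by
      push_cast
      rw [hcA 0, hcA 1, hcA 2, hcnt 1 1 2, hd]
      linear_combination (d * (n : ℝ)) * hβA1'
    exact_mod_cast this
  have hszsum : sz 0 + sz 1 + sz 2 = S2.card := by
    have h1 : sz 0 = cnt 0 2 2 := rfl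
    have h2 : sz 1 = cnt 1 1 2 := rfl
    have h3 : sz 2 = cnt 2 0 2 := rfl
    have : ((sz 0 + sz 1 + sz 2 : ℕ) : ℝ) = ((S2.card : ℕ) : ℝ) := by
      rw [h1, h2, h3]
      push_cast
      rw [hcnt 0 2 2, hcnt 1 1 2, hcnt 2 0 2, hc1, hc2, hd, hS2card]
      ring
    exact_mod_cast this
  have hμsum : ∀ a : Fin 3, μf a 0 + μf a 1 + μf a 2 = (Ta a).card := by
    intro a
    have h1 : μf a 0 = cB a := rfl
    have h2 : μf a 1 = cA a := rfl
    have h3 : μf a 2 = cB a := rfl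
    rw [h1, h2, h3, hTacard a]
    omega
  -- component analysis for consistent pairs
  have hcons : ∀ IJ ∈ Cons, ∀ i j k : Fin 5,
      (univ.filter fun t => IJ.1 t = i ∧ IJ.2 t = j ∧ K t = k).card = cnt i j k := by
    intro IJ hIJ
    exact (mem_filter.mp hIJ).2
  have hcomp : ∀ IJ ∈ Cons, ∀ t, (IJ.1 t : ℕ) + (IJ.2 t : ℕ) + (K t : ℕ) = 4 := by
    intro IJ hIJ t
    by_contra hne4
    have h0 : cnt (IJ.1 t) (IJ.2 t) (K t) = 0 := hcnt0 _ _ _ hne4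
    have h1 := hcons IJ hIJ (IJ.1 t) (IJ.2 t) (K t)
    rw [h0, Finset.card_eq_zero] at h1
    have hmem : t ∈ univ.filter fun t' => IJ.1 t' = IJ.1 t ∧ IJ.2 t' = IJ.2 t ∧ K t' = K t := by
      simp
    rw [h1] at hmem
    exact absurd hmem (notMem_empty t)
  have hPhi : ∀ IJ ∈ Cons, ∀ t, K t = 2 →
      ((IJ.1 t = 0 ∧ IJ.2 t = 2) ↔ Φ IJ t = 0) ∧ ((IJ.1 t = 1 ∧ IJ.2 t = 1) ↔ Φ IJ t = 1) ∧
      ((IJ.1 t = 2 ∧ IJ.2 t = 0) ↔ Φ IJ t = 2) := by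
    intro IJ hIJ t hk
    have h4 := hcomp IJ hIJ t
    rw [hk] at h4
    have h4' : (IJ.1 t : ℕ) + (IJ.2 t : ℕ) + 2 = 4 := h4
    have htri := stmt11_tri (IJ.1 t) (IJ.2 t) h4'
    have hΦ : Φ IJ t = stmt11ρ (IJ.1 t) := by
      rw [hΦdef]
      exact if_pos hk
    rw [hΦ]
    exact htri
  -- filter set equalities (S2 level)
  have hfe : ∀ IJ ∈ Cons,
      ((S2.filter fun t => Φ IJ t = 0)
          = univ.filter fun t => IJ.1 t = 0 ∧ IJ.2 t = 2 ∧ K t = 2) ∧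
      ((S2.filter fun t => Φ IJ t = 1)
          = univ.filter fun t => IJ.1 t = 1 ∧ IJ.2 t = 1 ∧ K t = 2) ∧
      ((S2.filter fun t => Φ IJ t = 2)
          = univ.filter fun t => IJ.1 t = 2 ∧ IJ.2 t = 0 ∧ K t = 2) := by
    intro IJ hIJ
    refine ⟨?_, ?_, ?_⟩ <;>
    · ext t
      simp only [hS2def, mem_filter, mem_univ, true_and, filter_filter]
      constructor
      · rintro ⟨hk, hb⟩
        obtain ⟨h1, h2⟩ := by
          first
          | exact ((hPhi IJ hIJ t hk).1).mpr hb
          | exact ((hPhi IJ hIJ t hk).2.1).mpr hb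
          | exact ((hPhi IJ hIJ t hk).2.2).mpr hb
        exact ⟨h1, h2, hk⟩
      · rintro ⟨h1, h2, hk⟩
        refine ⟨hk, ?_⟩
        first
        | exact ((hPhi IJ hIJ t hk).1).mp ⟨h1, h2⟩
        | exact ((hPhi IJ hIJ t hk).2.1).mp ⟨h1, h2⟩
        | exact ((hPhi IJ hIJ t hk).2.2).mp ⟨h1, h2⟩
  -- filter set equalities (class level)
  have hfeK : ∀ IJ ∈ Cons, ∀ a : Fin 3,
      (((Ta a).filter fun t => Φ IJ t = 0)
          = univ.filter fun t => IJ.1 t = 0 ∧ IJ.2 t = 2 ∧ K t = 2 ∧ (Kh t).1 = a) ∧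
      (((Ta a).filter fun t => Φ IJ t = 1)
          = univ.filter fun t => IJ.1 t = 1 ∧ IJ.2 t = 1 ∧ K t = 2 ∧ (Kh t).1 = a) ∧
      (((Ta a).filter fun t => Φ IJ t = 2)
          = univ.filter fun t => IJ.1 t = 2 ∧ IJ.2 t = 0 ∧ K t = 2 ∧ (Kh t).1 = a) := by
    intro IJ hIJ a
    refine ⟨?_, ?_, ?_⟩ <;>
    · ext t
      simp only [hTadef, mem_filter, mem_univ, true_and, filter_filter]
      constructor
      · rintro ⟨⟨hk, ha⟩, hb⟩
        obtain ⟨h1, h2⟩ := by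
          first
          | exact ((hPhi IJ hIJ t hk).1).mpr hb
          | exact ((hPhi IJ hIJ t hk).2.1).mpr hb
          | exact ((hPhi IJ hIJ t hk).2.2).mpr hb
        exact ⟨h1, h2, hk, ha⟩
      · rintro ⟨h1, h2, hk, ha⟩
        refine ⟨⟨hk, ha⟩, ?_⟩
        first
        | exact ((hPhi IJ hIJ t hk).1).mp ⟨h1, h2⟩
        | exact ((hPhi IJ hIJ t hk).2.1).mp ⟨h1, h2⟩
        | exact ((hPhi IJ hIJ t hk).2.2).mp ⟨h1, h2⟩
  -- every consistent pair maps into Gvalid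
  have hΦmem : ∀ IJ ∈ Cons, Φ IJ ∈ Gvalid := by
    intro IJ hIJ
    rw [hGvdef, mem_filter]
    refine ⟨mem_univ _, fun b => ?_, fun t ht => ?_⟩
    · rcases stmt11_fin3_cases b with rfl | rfl | rfl
      · rw [(hfe IJ hIJ).1, hcons IJ hIJ 0 2 2]; rfl
      · rw [(hfe IJ hIJ).2.1, hcons IJ hIJ 1 1 2]; rfl
      · rw [(hfe IJ hIJ).2.2, hcons IJ hIJ 2 0 2]; rfl
    · have hkt : ¬ K t = 2 := by
        rw [hS2def] at ht
        simpa using ht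
      rw [hΦdef]
      exact if_neg hkt
  -- compatibility predicate matches Gcomp membership
  have hcompat_iff : ∀ IJ ∈ Cons,
      (((∀ a : Fin 3, (univ.filter fun t =>
          IJ.1 t = 0 ∧ IJ.2 t = 2 ∧ K t = 2 ∧ (Kh t).1 = a).card = cB a) ∧
        (∀ a : Fin 3, (univ.filter fun t =>
          IJ.1 t = 2 ∧ IJ.2 t = 0 ∧ K t = 2 ∧ (Kh t).1 = a).card = cB a) ∧
        (∀ a : Fin 3, (univ.filter fun t =>
          IJ.1 t = 1 ∧ IJ.2 t = 1 ∧ K t = 2 ∧ (Kh t).1 = a).card = cA a))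
        ↔ Φ IJ ∈ Gcomp) := by
    intro IJ hIJ
    have hoff : ∀ t, t ∉ Ta 0 ∪ Ta 1 ∪ Ta 2 → Φ IJ t = 0 := by
      intro t ht
      have hkt : ¬ K t = 2 := by
        intro hk
        apply ht
        rcases stmt11_fin3_cases ((Kh t).1) with h | h | h
        · exact mem_union_left _ (mem_union_left _ (by rw [hTadef]; simp [hk, h]))
        · exact mem_union_left _ (mem_union_right _ (by rw [hTadef]; simp [hk, h]))
        · exact mem_union_right _ (by rw [hTadef]; simp [hk, h])
      rw [hΦdef]
      exact if_neg hkt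
    constructor
    · rintro ⟨hA, hB, hC⟩
      rw [hGcdef, mem_filter]
      refine ⟨mem_univ _, ?_, ?_, ?_, hoff⟩ <;>
      · intro b
        rcases stmt11_fin3_cases b with rfl | rfl | rfl
        · rw [(hfeK IJ hIJ _).1]
          first | exact hA 0 | exact hA 1 | exact hA 2
        · rw [(hfeK IJ hIJ _).2.1]
          first | exact hC 0 | exact hC 1 | exact hC 2
        · rw [(hfeK IJ hIJ _).2.2]
          first | exact hB 0 | exact hB 1 | exact hB 2
    · intro hg
      rw [hGcdef, mem_filter] at hg
      obtain ⟨-, h0, h1, h2, -⟩ := hg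
      refine ⟨fun a => ?_, fun a => ?_, fun a => ?_⟩
      · rw [← (hfeK IJ hIJ a).1]
        rcases stmt11_fin3_cases a with rfl | rfl | rfl
        · exact h0 0
        · exact h1 0
        · exact h2 0
      · rw [← (hfeK IJ hIJ a).2.2]
        rcases stmt11_fin3_cases a with rfl | rfl | rfl
        · exact h0 2
        · exact h1 2
        · exact h2 2
      · rw [← (hfeK IJ hIJ a).2.1]
        rcases stmt11_fin3_cases a with rfl | rfl | rfl
        · exact h0 1
        · exact h1 1
        · exact h2 1
  -- disjointness and union of classes
  have hTdisj : ∀ a a' : Fin 3, a ≠ a' → Disjoint (Ta a) (Ta a') := by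
    intro a a' haa
    rw [disjoint_left]
    intro t ht ht'
    rw [hTadef] at ht ht'
    simp only [mem_filter] at ht ht'
    exact haa (ht.2.2 ▸ ht'.2.2 ▸ rfl)
  have hTunion : Ta 0 ∪ Ta 1 ∪ Ta 2 = S2 := by
    ext t
    simp only [hTadef, hS2def, mem_union, mem_filter, mem_univ, true_and]
    constructor
    · rintro ((⟨h, -⟩ | ⟨h, -⟩) | ⟨h, -⟩) <;> exact h
    · intro hk
      rcases stmt11_fin3_cases ((Kh t).1) with h | h | h
      · exact Or.inl (Or.inl ⟨hk, h⟩)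
      · exact Or.inl (Or.inr ⟨hk, h⟩)
      · exact Or.inr ⟨hk, h⟩
  -- Gcomp ⊆ Gvalid
  have hsub : Gcomp ⊆ Gvalid := by
    intro g hg
    rw [hGcdef, mem_filter] at hg
    obtain ⟨-, h0, h1, h2, hoff⟩ := hg
    rw [hGvdef, mem_filter]
    refine ⟨mem_univ _, fun b => ?_, fun t ht => hoff t (by rwa [hTunion])⟩
    have hset : S2.filter (fun t => g t = b)
        = ((Ta 0).filter fun t => g t = b) ∪ ((Ta 1).filter fun t => g t = b)
          ∪ ((Ta 2).filter fun t => g t = b) := by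
      rw [← hTunion, filter_union, filter_union]
    rw [hset, card_union_of_disjoint, card_union_of_disjoint]
    · rw [h0 b, h1 b, h2 b]
      rcases stmt11_fin3_cases b with rfl | rfl | rfl
      · show cB 0 + cB 1 + cB 2 = sz 0
        rw [hsumB]; rfl
      · show cA 0 + cA 1 + cA 2 = sz 1
        rw [hsumA]; rfl
      · show cB 0 + cB 1 + cB 2 = sz 2
        rw [hsumB']; rfl
    · exact disjoint_of_subset_left (filter_subset _ _)
        (disjoint_of_subset_right (filter_subset _ _) (hTdisj 0 1 (by decide)))
    · rw [disjoint_union_left]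
      constructor
      · exact disjoint_of_subset_left (filter_subset _ _)
          (disjoint_of_subset_right (filter_subset _ _) (hTdisj 0 2 (by decide)))
      · exact disjoint_of_subset_left (filter_subset _ _)
          (disjoint_of_subset_right (filter_subset _ _) (hTdisj 1 2 (by decide)))
  -- fibers over Gvalid all have the same cardinality
  have hfib_const : ∀ g ∈ Gvalid, ∀ g' ∈ Gvalid,
      (Cons.filter fun IJ => Φ IJ = g).card = (Cons.filter fun IJ => Φ IJ = g').card := by
    intro g hg g' hg'
    rw [hGvdef, mem_filter] at hg hg'
    obtain ⟨-, hgc, hgo⟩ := hg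
    obtain ⟨-, hgc', hgo'⟩ := hg'
    have hgo2 : ∀ t, ¬ K t = 2 → g t = 0 := by
      intro t ht; exact hgo t (by rw [hS2def]; simp [ht])
    have hgo2' : ∀ t, ¬ K t = 2 → g' t = 0 := by
      intro t ht; exact hgo' t (by rw [hS2def]; simp [ht])
    obtain ⟨σ, hσ⟩ := stmt11_exists_perm (fun t => (K t, g t)) (fun t => (K t, g' t)) (by
      rintro ⟨k, b⟩
      by_cases hk2 : k = 2
      · subst hk2
        have e1 : (univ.filter fun t => (K t, g t) = (2, b)) = S2.filter fun t => g t = b := by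
          rw [hS2def, filter_filter]
          apply filter_congr
          intro t _
          simp [Prod.ext_iff]
        have e2 : (univ.filter fun t => (K t, g' t) = (2, b)) = S2.filter fun t => g' t = b := by
          rw [hS2def, filter_filter]
          apply filter_congr
          intro t _
          simp [Prod.ext_iff]
        rw [e1, e2, hgc b, hgc' b]
      · by_cases hb : b = 0
        · subst hb
          have e1 : (univ.filter fun t => (K t, g t) = (k, 0)) = univ.filter fun t => K t = k := by
            apply filter_congr
            intro t _
            simp only [Prod.ext_iff]
            constructor
            · rintro ⟨h, -⟩; exact h
            · intro h
              exact ⟨h, hgo2 t (by rw [h]; exact hk2)⟩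
          have e2 : (univ.filter fun t => (K t, g' t) = (k, 0))
              = univ.filter fun t => K t = k := by
            apply filter_congr
            intro t _
            simp only [Prod.ext_iff]
            constructor
            · rintro ⟨h, -⟩; exact h
            · intro h
              exact ⟨h, hgo2' t (by rw [h]; exact hk2)⟩
          rw [e1, e2]
        · have e1 : (univ.filter fun t => (K t, g t) = (k, b)) = ∅ := by
            rw [filter_eq_empty_iff]
            intro t _
            simp only [Prod.ext_iff, not_and]
            intro h
            rw [hgo2 t (by rw [h]; exact hk2)]
            exact fun hb' => hb hb'.symm
          have e2 : (univ.filter fun t => (K t, g' t) = (k, b)) = ∅ := by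
            rw [filter_eq_empty_iff]
            intro t _
            simp only [Prod.ext_iff, not_and]
            intro h
            rw [hgo2' t (by rw [h]; exact hk2)]
            exact fun hb' => hb hb'.symm
          rw [e1, e2])
    have hσK : ∀ t, K (σ t) = K t := fun t => congrArg Prod.fst (hσ t)
    have hσg : ∀ t, g (σ t) = g' t := fun t => congrArg Prod.snd (hσ t)
    have hσK' : ∀ t, K (σ.symm t) = K t := by
      intro t
      conv_rhs => rw [← σ.apply_symm_apply t]
      rw [hσK]
    have hσg' : ∀ t, g' (σ.symm t) = g t := by
      intro t
      conv_rhs => rw [← σ.apply_symm_apply t, hσg]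
    -- membership in Cons is preserved by precomposition with a K-preserving permutation
    have hCpres : ∀ (τ : Equiv.Perm (Fin n)), (∀ t, K (τ t) = K t) →
        ∀ IJ ∈ Cons, (IJ.1 ∘ τ, IJ.2 ∘ τ) ∈ Cons := by
      intro τ hτ IJ hIJ
      rw [hConsdef, mem_filter]
      refine ⟨mem_univ _, fun i j k => ?_⟩
      have e1 : (univ.filter fun t => IJ.1 (τ t) = i ∧ IJ.2 (τ t) = j ∧ K t = k)
          = univ.filter fun t => IJ.1 (τ t) = i ∧ IJ.2 (τ t) = j ∧ K (τ t) = k := by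
        apply filter_congr
        intro t _
        rw [hτ t]
      calc (univ.filter fun t => IJ.1 (τ t) = i ∧ IJ.2 (τ t) = j ∧ K t = k).card
          = (univ.filter fun t => IJ.1 (τ t) = i ∧ IJ.2 (τ t) = j ∧ K (τ t) = k).card := by
            rw [e1]
        _ = (univ.filter fun s => IJ.1 s = i ∧ IJ.2 s = j ∧ K s = k).card :=
            stmt11_card_filter_comp τ (fun s => IJ.1 s = i ∧ IJ.2 s = j ∧ K s = k)
        _ = cnt i j k := hcons IJ hIJ i j k
    have hΦcomp : ∀ (τ : Equiv.Perm (Fin n)), (∀ t, K (τ t) = K t) →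
        ∀ IJ, Φ (IJ.1 ∘ τ, IJ.2 ∘ τ) = fun t => Φ IJ (τ t) := by
      intro τ hτ IJ
      funext t
      rw [hΦdef]
      simp only [Function.comp]
      rw [hτ t]
    refine card_nbij' (fun IJ => (IJ.1 ∘ σ, IJ.2 ∘ σ)) (fun IJ => (IJ.1 ∘ σ.symm, IJ.2 ∘ σ.symm))
      ?_ ?_ ?_ ?_
    · intro IJ hIJ
      simp only [mem_coe, mem_filter] at hIJ ⊢
      refine ⟨hCpres σ hσK IJ hIJ.1, ?_⟩
      rw [hΦcomp σ hσK IJ]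
      funext t
      rw [hIJ.2]
      exact hσg t
    · intro IJ hIJ
      simp only [mem_coe, mem_filter] at hIJ ⊢
      refine ⟨hCpres σ.symm hσK' IJ hIJ.1, ?_⟩
      rw [hΦcomp σ.symm hσK' IJ]
      funext t
      rw [hIJ.2]
      exact hσg' t
    · intro IJ _
      ext t <;> simp
    · intro IJ _
      ext t <;> simp
  -- base point
  obtain ⟨IJ0, hIJ0⟩ := hne
  have hIJ0' : IJ0 ∈ Cons := hIJ0
  set F : ℕ := (Cons.filter fun IJ => Φ IJ = Φ IJ0).card with hFdef
  have hg0 : Φ IJ0 ∈ Gvalid := hΦmem IJ0 hIJ0'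
  have hF : ∀ g ∈ Gvalid, (Cons.filter fun IJ => Φ IJ = g).card = F :=
    fun g hg => hfib_const g hg (Φ IJ0) hg0
  have hFne : F ≠ 0 := by
    rw [hFdef]
    refine card_ne_zero_of_mem (a := IJ0) ?_
    rw [mem_filter]
    exact ⟨hIJ0', rfl⟩
  have hGvne : Gvalid.card ≠ 0 := card_ne_zero_of_mem hg0
  -- denominator
  have hDen : Cons.card = Gvalid.card * F := by
    rw [card_eq_sum_card_fiberwise hΦmem]
    rw [sum_congr rfl hF, sum_const, smul_eq_mul]
  -- numerator
  have hNum : (Cons.filter (fun IJ =>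
      (∀ a : Fin 3, (univ.filter fun t =>
          IJ.1 t = 0 ∧ IJ.2 t = 2 ∧ K t = 2 ∧ (Kh t).1 = a).card = cB a) ∧
      (∀ a : Fin 3, (univ.filter fun t =>
          IJ.1 t = 2 ∧ IJ.2 t = 0 ∧ K t = 2 ∧ (Kh t).1 = a).card = cB a) ∧
      (∀ a : Fin 3, (univ.filter fun t =>
          IJ.1 t = 1 ∧ IJ.2 t = 1 ∧ K t = 2 ∧ (Kh t).1 = a).card = cA a))).card
      = Gcomp.card * F := by
    have hmapsto : ∀ IJ ∈ (Cons.filter (fun IJ =>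
        (∀ a : Fin 3, (univ.filter fun t =>
            IJ.1 t = 0 ∧ IJ.2 t = 2 ∧ K t = 2 ∧ (Kh t).1 = a).card = cB a) ∧
        (∀ a : Fin 3, (univ.filter fun t =>
            IJ.1 t = 2 ∧ IJ.2 t = 0 ∧ K t = 2 ∧ (Kh t).1 = a).card = cB a) ∧
        (∀ a : Fin 3, (univ.filter fun t =>
            IJ.1 t = 1 ∧ IJ.2 t = 1 ∧ K t = 2 ∧ (Kh t).1 = a).card = cA a))), Φ IJ ∈ Gcomp := by
      intro IJ hIJ
      rw [mem_filter] at hIJ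
      exact (hcompat_iff IJ hIJ.1).mp hIJ.2
    rw [card_eq_sum_card_fiberwise hmapsto]
    have hterm : ∀ g ∈ Gcomp,
        ((Cons.filter (fun IJ =>
          (∀ a : Fin 3, (univ.filter fun t =>
              IJ.1 t = 0 ∧ IJ.2 t = 2 ∧ K t = 2 ∧ (Kh t).1 = a).card = cB a) ∧
          (∀ a : Fin 3, (univ.filter fun t =>
              IJ.1 t = 2 ∧ IJ.2 t = 0 ∧ K t = 2 ∧ (Kh t).1 = a).card = cB a) ∧
          (∀ a : Fin 3, (univ.filter fun t =>
              IJ.1 t = 1 ∧ IJ.2 t = 1 ∧ K t = 2 ∧ (Kh t).1 = a).card = cA a))).filter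
          fun IJ => Φ IJ = g).card = F := by
      intro g hg
      have hset : ((Cons.filter (fun IJ =>
          (∀ a : Fin 3, (univ.filter fun t =>
              IJ.1 t = 0 ∧ IJ.2 t = 2 ∧ K t = 2 ∧ (Kh t).1 = a).card = cB a) ∧
          (∀ a : Fin 3, (univ.filter fun t =>
              IJ.1 t = 2 ∧ IJ.2 t = 0 ∧ K t = 2 ∧ (Kh t).1 = a).card = cB a) ∧
          (∀ a : Fin 3, (univ.filter fun t =>
              IJ.1 t = 1 ∧ IJ.2 t = 1 ∧ K t = 2 ∧ (Kh t).1 = a).card = cA a))).filter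
          fun IJ => Φ IJ = g) = Cons.filter fun IJ => Φ IJ = g := by
        rw [filter_filter]
        ext IJ
        simp only [mem_filter]
        constructor
        · rintro ⟨h1, -, h3⟩
          exact ⟨h1, h3⟩
        · rintro ⟨h1, h3⟩
          refine ⟨h1, ?_, h3⟩
          exact (hcompat_iff IJ h1).mpr (by rw [h3]; exact hg)
      rw [hset]
      exact hF g (hsub hg)
    rw [sum_congr rfl hterm, sum_const, smul_eq_mul]
  -- cardinalities of Gvalid and Gcomp
  have hGvcard : Gvalid.card = Nat.multinomial univ sz := by
    rw [hGvdef]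
    exact stmt11_countA S2 sz hszsum
  have hGccard : Gcomp.card = Nat.multinomial univ (μf 0)
      * (Nat.multinomial univ (μf 1) * Nat.multinomial univ (μf 2)) := by
    rw [hGcdef]
    rw [stmt11_countProd (Ta 0) (Ta 1) (Ta 2) (μf 0) (μf 1) (μf 2)
      (hTdisj 0 1 (by decide)) (hTdisj 0 2 (by decide)) (hTdisj 1 2 (by decide))]
    rw [stmt11_countA _ _ (hμsum 0), stmt11_countA _ _ (hμsum 1), stmt11_countA _ _ (hμsum 2)]
  -- put everything together
  rw [hNum, hDen]
  push_cast
  rw [mul_div_mul_right _ _ (by exact_mod_cast hFne : (F : ℝ) ≠ 0)]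
  rw [hGccard, hGvcard]
  push_cast
  rw [stmt11_cast_mult (μf 0), stmt11_cast_mult (μf 1), stmt11_cast_mult (μf 2),
    stmt11_cast_mult sz, stmt11_cast_mult cB, stmt11_cast_mult cA,
    stmt11_cast_mult (fun a => cA a + 2 * cB a)]
  have hμv : ∀ a : Fin 3, μf a 0 + μf a 1 + μf a 2 = cA a + 2 * cB a := by
    intro a
    show cB a + cA a + cB a = cA a + 2 * cB a
    omega
  have hμ0 : ∀ a : Fin 3, μf a 0 = cB a := fun a => rfl
  have hμ1 : ∀ a : Fin 3, μf a 1 = cA a := fun a => rfl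
  have hμ2 : ∀ a : Fin 3, μf a 2 = cB a := fun a => rfl
  rw [hμv 0, hμv 1, hμv 2, hμ0 0, hμ0 1, hμ0 2, hμ1 0, hμ1 1, hμ1 2, hμ2 0, hμ2 1, hμ2 2]
  have hszv : sz 0 + sz 1 + sz 2 = cnt 0 2 2 + cnt 1 1 2 + cnt 0 2 2 := by
    show cnt 0 2 2 + cnt 1 1 2 + cnt 2 0 2 = _
    omega
  have hsz0 : sz 0 = cnt 0 2 2 := rfl
  have hsz1 : sz 1 = cnt 1 1 2 := rfl
  have hsz2 : sz 2 = cnt 0 2 2 := by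
    show cnt 2 0 2 = cnt 0 2 2
    omega
  rw [hszv, hsz0, hsz1, hsz2]
  have htot : (cA 0 + 2 * cB 0) + (cA 1 + 2 * cB 1) + (cA 2 + 2 * cB 2)
      = cnt 0 2 2 + cnt 1 1 2 + cnt 0 2 2 := by omega
  rw [htot, hsumB, hsumA]
  have f1 : ((cA 0 + 2 * cB 0)! : ℝ) ≠ 0 := by positivity
  have f2 : ((cA 1 + 2 * cB 1)! : ℝ) ≠ 0 := by positivity
  have f3 : ((cA 2 + 2 * cB 2)! : ℝ) ≠ 0 := by positivity
  have f4 : ((cnt 0 2 2 + cnt 1 1 2 + cnt 0 2 2)! : ℝ) ≠ 0 := by positivity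
  have f5 : ((cnt 0 2 2)! : ℝ) ≠ 0 := by positivity
  have f6 : ((cnt 1 1 2)! : ℝ) ≠ 0 := by positivity
  have f7 : ∀ a : Fin 3, ((cA a)! : ℝ) ≠ 0 := fun a => by positivity
  have f8 : ∀ a : Fin 3, ((cB a)! : ℝ) ≠ 0 := fun a => by positivity
  field_simp
end

section
/- Let n be a positive integer and let I, J, K ∈ {0,1,2,3,4}ⁿ satisfy I_t + J_t + K_t = 4 for all t. Write S_{i,j,k} = {t : (I_t,J_t,K_t) = (i,j,k)} and S₂ = {t : K_t = 2} = S_{0,2,2} ∪ S_{2,0,2} ∪ S_{1,1,2}, and assume S_{0,2,2}, S_{2,0,2}, S_{1,1,2} are all nonempty. Let β_A and β_B be probability distributions on {0,1,2} and set β_avg := (|S_{1,1,2}|·β_A + (|S_{0,2,2}| + |S_{2,0,2}|)·β_B)/|S₂|. Let Î, Ĵ, K̂ ∈ {0,1,2}^{2n} satisfy Î_{2t−1}+Î_{2t} = I_t, Ĵ_{2t−1}+Ĵ_{2t} = J_t, K̂_{2t−1}+K̂_{2t} = K_t for all t ∈ {1,…,n}, and Î_s + Ĵ_s + K̂_s =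 2 for all s ∈ {1,…,2n}. For nonempty S ⊆ {1,…,n} and W ∈ {0,1,2}^{2n}, write split(W,S)(a) = |{t ∈ S : W_{2t−1} = a}|/|S|. If split(K̂, S₂) = β_avg, split(Î, S_{2,0,2})(a) = β_B(2−a) for all a, and split(Ĵ, S_{0,2,2})(a) = β_B(2−a) for all a, then split(K̂, S_{0,2,2}) = split(K̂, S_{2,0,2}) = β_B and split(K̂, S_{1,1,2}) = β_A; that is, K̂ is compatible with the triple (I,J,K). -/
open Finset

/-- The split distribution of a refined index sequence `W` (given by its pairs of halves)
restricted to a position set `S`: the fraction of positions of `S` whose first half equals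
`a`. -/
noncomputable def splitDist {n : ℕ} (W : Fin n → Fin 3 × Fin 3) (S : Finset (Fin n))
    (a : Fin 3) : ℝ :=
  ((S.filter fun t => (W t).1 = a).card : ℝ) / (S.card : ℝ)

/-- If the level-1 blocks `Î, Ĵ, K̂` survive Additional Zeroing-Out Step 1
(i.e. `split(K̂,S₂)` equals the average split distribution, and `split(Î,S_{2,0,2})` and
`split(Ĵ,S_{0,2,2})` are the reversed `β_B`), then `K̂` is compatible with `(I,J,K)`:
`split(K̂,S_{0,2,2}) = split(K̂,S_{2,0,2}) = β_B` and `split(K̂,S_{1,1,2}) = β_A`. -/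
theorem stmt12 (n : ℕ) (hn : 0 < n)
    (I J K : Fin n → Fin 5)
    (hsum : ∀ t, (I t : ℕ) + (J t : ℕ) + (K t : ℕ) = 4)
    (h022 : (univ.filter fun t => I t = 0 ∧ J t = 2 ∧ K t = 2).Nonempty)
    (h202 : (univ.filter fun t => I t = 2 ∧ J t = 0 ∧ K t = 2).Nonempty)
    (h112 : (univ.filter fun t => I t = 1 ∧ J t = 1 ∧ K t = 2).Nonempty)
    (βA βB : Fin 3 → ℝ)
    (hβA0 : ∀ a, 0 ≤ βA a) (hβA1 : ∑ a, βA a = 1)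
    (hβB0 : ∀ a, 0 ≤ βB a) (hβB1 : ∑ a, βB a = 1)
    (Ih Jh Kh : Fin n → Fin 3 × Fin 3)
    (hIh : ∀ t, ((Ih t).1 : ℕ) + ((Ih t).2 : ℕ) = (I t : ℕ))
    (hJh : ∀ t, ((Jh t).1 : ℕ) + ((Jh t).2 : ℕ) = (J t : ℕ))
    (hKh : ∀ t, ((Kh t).1 : ℕ) + ((Kh t).2 : ℕ) = (K t : ℕ))
    (hfst : ∀ t, ((Ih t).1 : ℕ) + ((Jh t).1 : ℕ) + ((Kh t).1 : ℕ) = 2)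
    (hsnd : ∀ t, ((Ih t).2 : ℕ) + ((Jh t).2 : ℕ) + ((Kh t).2 : ℕ) = 2)
    (havg : ∀ a : Fin 3,
      splitDist Kh (univ.filter fun t => K t = 2) a =
        (((univ.filter fun t => I t = 1 ∧ J t = 1 ∧ K t = 2).card : ℝ) * βA a +
            (((univ.filter fun t => I t = 0 ∧ J t = 2 ∧ K t = 2).card : ℝ) +
              ((univ.filter fun t => I t = 2 ∧ J t = 0 ∧ K t = 2).card : ℝ)) * βB a) /
          ((univ.filter fun t => K t = 2).card : ℝ))
    (hI : ∀ a : Fin 3,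
      splitDist Ih (univ.filter fun t => I t = 2 ∧ J t = 0 ∧ K t = 2) a = βB a.rev)
    (hJ : ∀ a : Fin 3,
      splitDist Jh (univ.filter fun t => I t = 0 ∧ J t = 2 ∧ K t = 2) a = βB a.rev) :
    (∀ a : Fin 3,
      splitDist Kh (univ.filter fun t => I t = 0 ∧ J t = 2 ∧ K t = 2) a = βB a) ∧
    (∀ a : Fin 3,
      splitDist Kh (univ.filter fun t => I t = 2 ∧ J t = 0 ∧ K t = 2) a = βB a) ∧
    (∀ a : Fin 3,
      splitDist Kh (univ.filter fun t => I t = 1 ∧ J t = 1 ∧ K t = 2) a = βA a) := by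
  classical
  set S022 := univ.filter fun t => I t = 0 ∧ J t = 2 ∧ K t = 2 with hS022
  set S202 := univ.filter fun t => I t = 2 ∧ J t = 0 ∧ K t = 2 with hS202
  set S112 := univ.filter fun t => I t = 1 ∧ J t = 1 ∧ K t = 2 with hS112
  set S2 := univ.filter fun t => K t = 2 with hS2d
  have c022 : (0:ℝ) < (S022.card : ℝ) := by exact_mod_cast card_pos.mpr h022
  have c202 : (0:ℝ) < (S202.card : ℝ) := by exact_mod_cast card_pos.mpr h202
  have c112 : (0:ℝ) < (S112.card : ℝ) := by exact_mod_cast card_pos.mpr h112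
  -- part 1 : over S022, Jh determines Kh
  have part1 : ∀ a : Fin 3, splitDist Kh S022 a = βB a := by
    intro a
    have hfil : S022.filter (fun t => (Kh t).1 = a)
        = S022.filter (fun t => (Jh t).1 = a.rev) := by
      apply filter_congr
      intro t ht
      simp only [hS022, mem_filter, mem_univ, true_and] at ht
      obtain ⟨hI0, hJ2, hK2⟩ := ht
      have e1 : (I t : ℕ) = 0 := by rw [hI0]; rfl
      have e3 : (K t : ℕ) = 2 := by rw [hK2]; rfl
      have h1 := hIh t; have h3 := hKh t; have h4 := hfst t
      have hrev : (a.rev : ℕ) = 2 - (a : ℕ) := by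
        simp [Fin.val_rev]
      have hb1 := a.isLt
      have hb2 := (Kh t).1.isLt
      have hb3 := (Jh t).1.isLt
      simp only [Fin.ext_iff, hrev]
      omega
    have := hJ a.rev
    rw [Fin.rev_rev] at this
    unfold splitDist at this ⊢
    rw [hfil]
    exact this
  have part2 : ∀ a : Fin 3, splitDist Kh S202 a = βB a := by
    intro a
    have hfil : S202.filter (fun t => (Kh t).1 = a)
        = S202.filter (fun t => (Ih t).1 = a.rev) := by
      apply filter_congr
      intro t ht
      simp only [hS202, mem_filter, mem_univ, true_and] at ht
      obtain ⟨hI2, hJ0, hK2⟩ := ht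
      have e1 : (J t : ℕ) = 0 := by rw [hJ0]; rfl
      have e3 : (K t : ℕ) = 2 := by rw [hK2]; rfl
      have h1 := hJh t; have h3 := hKh t; have h4 := hfst t
      have hrev : (a.rev : ℕ) = 2 - (a : ℕ) := by
        simp [Fin.val_rev]
      have hb1 := a.isLt
      have hb2 := (Kh t).1.isLt
      have hb3 := (Ih t).1.isLt
      simp only [Fin.ext_iff, hrev]
      omega
    have := hI a.rev
    rw [Fin.rev_rev] at this
    unfold splitDist at this ⊢
    rw [hfil]
    exact this
  -- decomposition of S2
  have hunion : S2 = (S022 ∪ S202) ∪ S112 := by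
    ext t
    simp only [hS2d, hS022, hS202, hS112, mem_filter, mem_union, mem_univ, true_and]
    have h := hsum t
    have hb1 := (I t).isLt
    have hb2 := (J t).isLt
    have hb3 := (K t).isLt
    simp only [Fin.ext_iff]
    have e0 : ((0:Fin 5):ℕ) = 0 := rfl
    have e1 : ((1:Fin 5):ℕ) = 1 := rfl
    have e2 : ((2:Fin 5):ℕ) = 2 := rfl
    rw [e0, e1, e2]
    omega
  have hd1 : Disjoint S022 S202 := by
    rw [disjoint_left]
    intro t ht1 ht2
    simp only [hS022, hS202, mem_filter] at ht1 ht2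
    have := ht1.2.1; have h2 := ht2.2.1
    rw [this] at h2
    exact absurd h2 (by decide)
  have hd2 : Disjoint (S022 ∪ S202) S112 := by
    rw [disjoint_left]
    intro t ht1 ht2
    simp only [hS022, hS202, hS112, mem_union, mem_filter] at ht1 ht2
    rcases ht1 with h | h
    · rw [ht2.2.1] at h; exact absurd h.2.1 (by decide)
    · rw [ht2.2.1] at h; exact absurd h.2.1 (by decide)
  have c2 : (0:ℝ) < (S2.card : ℝ) := by
    have : S022 ⊆ S2 := by rw [hunion]; intro t ht; exact mem_union_left _ (mem_union_left _ ht)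
    exact_mod_cast card_pos.mpr (h022.mono this)
  refine ⟨part1, part2, ?_⟩
  intro a
  have hcards : ((S2.filter fun t => (Kh t).1 = a).card : ℝ)
      = ((S022.filter fun t => (Kh t).1 = a).card : ℝ)
        + ((S202.filter fun t => (Kh t).1 = a).card : ℝ)
        + ((S112.filter fun t => (Kh t).1 = a).card : ℝ) := by
    rw [hunion, filter_union, filter_union]
    have hdf2 : Disjoint ((S022.filter fun t => (Kh t).1 = a) ∪ (S202.filter fun t => (Kh t).1 = a))
        (S112.filter fun t => (Kh t).1 = a) := by
      rw [← filter_union]; exact disjoint_filter_filter hd2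
    rw [card_union_of_disjoint hdf2, card_union_of_disjoint (disjoint_filter_filter hd1)]
    push_cast; ring
  have e022 : ((S022.filter fun t => (Kh t).1 = a).card : ℝ) = (S022.card : ℝ) * βB a := by
    have := part1 a
    unfold splitDist at this
    field_simp at this
    linarith [this]
  have e202 : ((S202.filter fun t => (Kh t).1 = a).card : ℝ) = (S202.card : ℝ) * βB a := by
    have := part2 a
    unfold splitDist at this
    field_simp at this
    linarith [this]
  have e2 : ((S2.filter fun t => (Kh t).1 = a).card : ℝ)
      = (S112.card : ℝ) * βA a + ((S022.card : ℝ) + (S202.card : ℝ)) * βB a := by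
    have := havg a
    unfold splitDist at this
    rw [div_eq_div_iff c2.ne' c2.ne'] at this
    exact mul_right_cancel₀ c2.ne' this
  have e112 : ((S112.filter fun t => (Kh t).1 = a).card : ℝ) = (S112.card : ℝ) * βA a := by
    linarith [hcards, e2, e022, e202]
  unfold splitDist
  rw [e112]
  field_simp
end

section
/- For every real number c > 0 and every x ∈ [0, 1/2], one has c^{1−2x} / (x^{2x}·(1−2x)^{1−2x}) ≤ c + 2, where real powers are used with the convention 0⁰ = 1; moreover equality holds if and only if x = 1/(c+2). -/
/-!
Writing the quantity as `(c / (1 - 2x)) ^ (1 - 2x) * (1 / x) ^ (2x)` exhibits it as a weighted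
geometric mean with weights `1 - 2x` and `2x`, whose weighted arithmetic mean is exactly `c + 2`.
Weighted AM–GM gives the bound, with equality iff `c / (1 - 2x) = 1 / x`, i.e. `x = 1 / (c + 2)`.
At the endpoints the quantity is `c` and `2`, both below `c + 2`.
-/

open Real

noncomputable def splitValue (c x : ℝ) : ℝ :=
  c ^ (1 - 2 * x) / (x ^ (2 * x) * (1 - 2 * x) ^ (1 - 2 * x))

lemma splitValue_zero (c : ℝ) : splitValue c 0 = c := by
  simp [splitValue]

lemma splitValue_half (c : ℝ) : splitValue c (1 / 2) = 2 := by
  norm_num [splitValue]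

lemma splitValue_eq_geom_mean {c x : ℝ} (hc : 0 ≤ c) (hx0 : 0 ≤ x) (hx1 : x ≤ 1 / 2) :
    splitValue c x = (c / (1 - 2 * x)) ^ (1 - 2 * x) * (1 / x) ^ (2 * x) := by
  rw [splitValue, div_rpow hc (by linarith), div_rpow zero_le_one hx0, one_rpow]
  field_simp

lemma splitValue_le_and_eq_iff {c x : ℝ} (hc : 0 ≤ c) (hx0 : 0 < x) (hx1 : x < 1 / 2) :
    splitValue c x ≤ c + 2 ∧ (splitValue c x = c + 2 ↔ x = 1 / (c + 2)) := by
  have hw₁ : 0 < 1 - 2 * x := by linarith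
  have hw₂ : 0 < 2 * x := by linarith
  have hp₁ : 0 ≤ c / (1 - 2 * x) := by positivity
  have hp₂ : 0 ≤ 1 / x := by positivity
  have hw : 1 - 2 * x + 2 * x = 1 := by ring
  have hmean : (1 - 2 * x) * (c / (1 - 2 * x)) + 2 * x * (1 / x) = c + 2 := by
    field_simp
  have hle := geom_mean_le_arith_mean2_weighted hw₁.le hw₂.le hp₁ hp₂ hw
  have heq := geom_mean_eq_arith_mean2_weighted_iff_of_pos hw₁ hw₂ hp₁ hp₂ hw
  rw [hmean] at hle heq
  rw [splitValue_eq_geom_mean hc hx0.le hx1.le, heq, div_eq_div_iff hw₁.ne' hx0.ne',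
    eq_div_iff (by linarith)]
  exact ⟨hle, by constructor <;> intro h <;> linarith⟩

/-- For `c > 0` and `x ∈ [0, 1/2]`,
`c^{1−2x} / (x^{2x}·(1−2x)^{1−2x}) ≤ c + 2` (real powers with `0⁰ = 1`), with equality iff
`x = 1/(c+2)`. -/
theorem stmt15 (c : ℝ) (hc : 0 < c) (x : ℝ) (hx0 : 0 ≤ x) (hx1 : x ≤ 1 / 2) :
    c ^ (1 - 2 * x) / (x ^ (2 * x) * (1 - 2 * x) ^ (1 - 2 * x)) ≤ c + 2 ∧
    (c ^ (1 - 2 * x) / (x ^ (2 * x) * (1 - 2 * x) ^ (1 - 2 * x)) = c + 2 ↔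
      x = 1 / (c + 2)) := by
  change splitValue c x ≤ c + 2 ∧ (splitValue c x = c + 2 ↔ x = 1 / (c + 2))
  have hc2 : 0 < c + 2 := by linarith
  rcases hx0.eq_or_lt with rfl | hx0
  · rw [splitValue_zero]
    exact ⟨by linarith, iff_of_false (by linarith) (one_div_pos.2 hc2).ne⟩
  rcases hx1.eq_or_lt with rfl | hx1
  · rw [splitValue_half]
    refine ⟨by linarith, iff_of_false (by linarith) fun h => ?_⟩
    rw [div_eq_div_iff two_ne_zero hc2.ne'] at h
    linarith
  exact splitValue_le_and_eq_iff hc.le hx0 hx1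
end

section
/- Let A and B be finite types and let μ, ν be probability distributions on A and B respectively. For every ε > 0 there exists m₀ such that for every natural number m ≥ m₀ for which m·μ(a)·ν(b) is a natural number for all (a,b) ∈ A×B, one has multinomial(m; (m·μ(a)·ν(b))_{(a,b)∈A×B}) ≥ 2^{−εm} · multinomial(m; (m·μ(a))_{a∈A}) · multinomial(m; (m·ν(b))_{b∈B}). -/
/-! By Stirling's bounds `n log n - n ≤ log n! ≤ n log n - n + O(log n)`, the multinomial
coefficient of counts `k = m • p` satisfies `log (m; k) = m H(p) + O(#α · log m)`, where
`H(p) = ∑ negMulLog (p i)`. Since `negMulLog (x y) = y negMulLog x + x negMulLog y`, entropy is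
additive on product distributions, `H(μ × ν) = H(μ) + H(ν)`, so the two sides differ by a factor
`exp (O(log m))`, which is eventually at least `2^{-εm}`. -/

open Real Finset Filter
open scoped Nat

lemma mul_log_sub_le_log_factorial (n : ℕ) : n * log n - n ≤ log n ! := by
  rcases n.eq_zero_or_pos with rfl | hn
  · simp
  have hf : (0 : ℝ) < n ! := mod_cast n.factorial_pos
  have h := (div_le_iff₀ hf).1 (pow_div_factorial_le_exp (n : ℝ) n.cast_nonneg n)
  have := log_le_log (by positivity) h
  rw [log_pow, log_mul (exp_pos _).ne' hf.ne', log_exp] at this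
  linarith

lemma log_factorial_le_mul_log_sub_add (n : ℕ) : log n ! ≤ n * log n - n + (1 + log n / 2) := by
  cases n with
  | zero => simp
  | succ k =>
  have h := Stirling.log_stirlingSeq'_antitone (Nat.zero_le k)
  simp only [Function.comp_apply, Nat.succ_eq_add_one, zero_add, Stirling.stirlingSeq_one] at h
  rw [Stirling.log_stirlingSeq_formula, log_div (exp_pos 1).ne' (by positivity), log_exp,
    log_sqrt zero_le_two, log_div (by positivity) (exp_pos 1).ne', log_exp,
    log_mul two_ne_zero (by positivity)] at h
  linarith

section Multinomial

variable {α : Type*} (s : Finset α) (k : α → ℕ) {n : ℕ} (hn : ∑ i ∈ s, k i = n)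
include hn

lemma log_multinomial_eq :
    log (Nat.multinomial s k) = log n ! - ∑ i ∈ s, log (k i)! := by
  have hspec : ((∏ i ∈ s, (k i)! : ℕ) : ℝ) * Nat.multinomial s k = n ! :=
    mod_cast hn ▸ Nat.multinomial_spec s k
  rw [← hspec, log_mul (by positivity) (mod_cast (Nat.multinomial_pos s k).ne'), Nat.cast_prod,
    log_prod fun i _ => mod_cast (k i).factorial_ne_zero]
  ring

lemma log_multinomial_le_sum_negMulLog :
    log (Nat.multinomial s k) ≤ ∑ i ∈ s, negMulLog (k i) - negMulLog n + (1 + log n) := by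
  have hk := sum_le_sum fun i (_ : i ∈ s) => mul_log_sub_le_log_factorial (k i)
  have hcast : ∑ i ∈ s, (k i : ℝ) = n := mod_cast hn
  rw [log_multinomial_eq s k hn]
  simp only [negMulLog, neg_mul, sum_neg_distrib, sum_sub_distrib, hcast] at hk ⊢
  linarith [log_factorial_le_mul_log_sub_add n, log_natCast_nonneg n]

lemma sum_negMulLog_sub_le_log_multinomial :
    ∑ i ∈ s, negMulLog (k i) - negMulLog n - #s * (1 + log n) ≤ log (Nat.multinomial s k) := by
  have hk : ∀ i ∈ s, log (k i)! ≤ k i * log (k i) - k i + (1 + log n) := by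
    intro i hi
    have hki : k i ≤ n := hn ▸ single_le_sum (fun _ _ => Nat.zero_le _) hi
    have hlog : log (k i) ≤ log n := by
      rcases (k i).eq_zero_or_pos with h | h
      · simp [h, log_natCast_nonneg]
      · exact log_le_log (mod_cast h) (mod_cast hki)
    linarith [log_factorial_le_mul_log_sub_add (k i), log_natCast_nonneg (k i)]
  have hcast : ∑ i ∈ s, (k i : ℝ) = n := mod_cast hn
  have hsum := sum_le_sum hk
  rw [log_multinomial_eq s k hn]
  simp only [negMulLog, neg_mul, sum_neg_distrib, sum_add_distrib, sum_sub_distrib, sum_const,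
    nsmul_eq_mul, hcast] at hsum ⊢
  linarith [mul_log_sub_le_log_factorial n]

end Multinomial

lemma sum_negMulLog_mul_sub_negMulLog {α : Type*} (s : Finset α) {p : α → ℝ}
    (hp : ∑ i ∈ s, p i = 1) (m : ℝ) :
    ∑ i ∈ s, negMulLog (m * p i) - negMulLog m = m * ∑ i ∈ s, negMulLog (p i) := by
  simp only [negMulLog_mul, sum_add_distrib, ← sum_mul, ← mul_sum, hp]
  ring

lemma sum_negMulLog_mul_prod {α β : Type*} [Fintype α] [Fintype β] (x : α → ℝ) (y : β → ℝ) :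
    ∑ q : α × β, negMulLog (x q.1 * y q.2) =
      (∑ b, y b) * ∑ a, negMulLog (x a) + (∑ a, x a) * ∑ b, negMulLog (y b) := by
  simp only [Fintype.sum_prod_type, negMulLog_mul, sum_add_distrib, ← sum_mul, ← mul_sum]

section Counts

variable {α : Type*} [Fintype α] {p : α → ℝ} (hp : ∑ i, p i = 1) {m : ℕ} {k : α → ℕ}
  (hk : ∀ i, (k i : ℝ) = m * p i)
include hp hk

lemma sum_eq_of_cast_eq_mul : ∑ i, k i = m := by
  have : ((∑ i, k i : ℕ) : ℝ) = m := by simp only [Nat.cast_sum, hk, ← mul_sum, hp, mul_one]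
  exact_mod_cast this

lemma log_multinomial_le_mul_entropy :
    log (Nat.multinomial univ k) ≤ m * ∑ i, negMulLog (p i) + (1 + log m) := by
  have h := log_multinomial_le_sum_negMulLog univ k (sum_eq_of_cast_eq_mul hp hk)
  simp only [hk] at h
  rwa [sum_negMulLog_mul_sub_negMulLog univ hp] at h

lemma mul_entropy_sub_le_log_multinomial :
    m * ∑ i, negMulLog (p i) - Fintype.card α * (1 + log m) ≤ log (Nat.multinomial univ k) := by
  have h := sum_negMulLog_sub_le_log_multinomial univ k (sum_eq_of_cast_eq_mul hp hk)
  simp only [hk] at h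
  rwa [sum_negMulLog_mul_sub_negMulLog univ hp, card_univ] at h

end Counts

lemma eventually_mul_one_add_log_le (C : ℝ) {c : ℝ} (hc : 0 < c) :
    ∀ᶠ m : ℕ in atTop, C * (1 + log m) ≤ c * m := by
  have h : (fun x : ℝ => C * (1 + log x)) =o[atTop] id :=
    ((Asymptotics.isLittleO_const_id_atTop 1).add isLittleO_log_id_atTop).const_mul_left C
  filter_upwards [tendsto_natCast_atTop_atTop.eventually (h.bound hc)] with m hm
  simpa using (le_abs_self _).trans hm

theorem stmt16_general (A B : Type*) [Fintype A] [Fintype B]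
    (μ : A → ℝ) (ν : B → ℝ)
    (hμ1 : ∑ a, μ a = 1)
    (hν1 : ∑ b, ν b = 1)
    (ε : ℝ) (hε : 0 < ε) :
    ∃ m₀ : ℕ, ∀ m : ℕ, m₀ ≤ m →
      ∀ (F : A × B → ℕ) (FA : A → ℕ) (FB : B → ℕ),
        (∀ p : A × B, (F p : ℝ) = m * μ p.1 * ν p.2) →
        (∀ a, (FA a : ℝ) = m * μ a) →
        (∀ b, (FB b : ℝ) = m * ν b) →
        (2 : ℝ) ^ (-(ε * m)) * (Nat.multinomial Finset.univ FA : ℝ) *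
            (Nat.multinomial Finset.univ FB : ℝ)
          ≤ (Nat.multinomial Finset.univ F : ℝ) := by
  obtain ⟨m₀, hm₀⟩ := (eventually_mul_one_add_log_le (Fintype.card (A × B) + 2)
    (mul_pos hε (log_pos one_lt_two))).exists_forall_of_atTop
  refine ⟨m₀, fun m hm F FA FB hF hFA hFB => ?_⟩
  have hprod : ∑ q : A × B, μ q.1 * ν q.2 = 1 := by
    rw [Fintype.sum_prod_type, ← Fintype.sum_mul_sum, hμ1, hν1, one_mul]
  have hA := log_multinomial_le_mul_entropy hμ1 hFA
  have hB := log_multinomial_le_mul_entropy hν1 hFB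
  have hAB := mul_entropy_sub_le_log_multinomial hprod fun q => (hF q).trans (mul_assoc _ _ _)
  rw [sum_negMulLog_mul_prod, hμ1, hν1] at hAB
  have hMA : (0 : ℝ) < Nat.multinomial univ FA := mod_cast Nat.multinomial_pos _ _
  have hMB : (0 : ℝ) < Nat.multinomial univ FB := mod_cast Nat.multinomial_pos _ _
  rw [← log_le_log_iff (by positivity) (mod_cast Nat.multinomial_pos _ _),
    log_mul (by positivity) hMB.ne', log_mul (by positivity) hMA.ne', log_rpow two_pos]
  linarith [hm₀ m hm]

/-- For probability distributions `μ` on `A` and `ν` on `B`, the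
multinomial coefficient of the product-type counts `(m·μ(a)·ν(b))` is at least
`2^{−εm}` times the product of the multinomial coefficients of the marginal counts,
for all sufficiently large `m` along which all counts are integers. -/
theorem stmt16 (A B : Type*) [Fintype A] [Fintype B]
    (μ : A → ℝ) (ν : B → ℝ)
    (hμ0 : ∀ a, 0 ≤ μ a) (hμ1 : ∑ a, μ a = 1)
    (hν0 : ∀ b, 0 ≤ ν b) (hν1 : ∑ b, ν b = 1)
    (ε : ℝ) (hε : 0 < ε) :
    ∃ m₀ : ℕ, ∀ m : ℕ, m₀ ≤ m →
      ∀ (F : A × B → ℕ) (FA : A → ℕ) (FB : B → ℕ),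
        (∀ p : A × B, (F p : ℝ) = m * μ p.1 * ν p.2) →
        (∀ a, (FA a : ℝ) = m * μ a) →
        (∀ b, (FB b : ℝ) = m * ν b) →
        (2 : ℝ) ^ (-(ε * m)) * (Nat.multinomial Finset.univ FA : ℝ) *
            (Nat.multinomial Finset.univ FB : ℝ)
          ≤ (Nat.multinomial Finset.univ F : ℝ) :=
  stmt16_general A B μ ν hμ1 hν1 ε hε
end

section
/- Let A be a finite type and β a probability distribution on A. For every ε > 0 there exists m₀ such that for all integers a, b ≥ m₀ for which a·β(x) and b·β(x) are integers for every x ∈ A, one has multinomial(a+b; ((a+b)·β(x))_{x∈A}) ≤ 2^{ε·(a+b)} · multinomial(a; (a·β(x))_{x∈A}) · multinomial(b; (b·β(x))_{x∈A}). -/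
open Finset

private lemma stmt17_fact_pow_le (c k : ℕ) : c.factorial * c ^ k ≤ k.factorial * c ^ c := by
  rcases le_or_gt k c with h | h
  · have h1 : c.factorial = k.factorial * c.descFactorial (c - k) := by
      have := Nat.factorial_mul_descFactorial (n := c) (k := c - k) (Nat.sub_le _ _)
      rw [Nat.sub_sub_self h] at this
      omega
    calc c.factorial * c ^ k = k.factorial * c.descFactorial (c - k) * c ^ k := by rw [h1]
      _ ≤ k.factorial * c ^ (c - k) * c ^ k :=
          Nat.mul_le_mul_right _ (Nat.mul_le_mul_left _ (Nat.descFactorial_le_pow _ _))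
      _ = k.factorial * c ^ c := by rw [mul_assoc, ← pow_add]; congr 2; omega
  · have h1 : c ^ k = c ^ c * c ^ (k - c) := by rw [← pow_add]; congr 1; omega
    have h2 : c.factorial * c ^ (k - c) ≤ k.factorial := by
      calc c.factorial * c ^ (k - c) ≤ c.factorial * (c+1) ^ (k - c) :=
            Nat.mul_le_mul_left _ (Nat.pow_le_pow_left (Nat.le_succ _) _)
        _ ≤ (c + (k - c)).factorial := Nat.factorial_mul_pow_le_factorial
        _ = k.factorial := by congr 1; omega
    calc c.factorial * c ^ k = c.factorial * c ^ (k - c) * c ^ c := by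
          rw [h1]; ring
      _ ≤ k.factorial * c ^ c := Nat.mul_le_mul_right _ h2

section Aux
variable {A : Type*} [Fintype A] [DecidableEq A]

private lemma stmt17_term_max (C k : A → ℕ) (hk : ∑ x, k x = ∑ x, C x) :
    Nat.multinomial univ k * ∏ x, (C x) ^ (k x) ≤
      Nat.multinomial univ C * ∏ x, (C x) ^ (C x) := by
  have hP : 0 < (∏ x, (k x).factorial) * ∏ x, (C x).factorial :=
    Nat.mul_pos (prod_pos fun _ _ => Nat.factorial_pos _) (prod_pos fun _ _ => Nat.factorial_pos _)
  have hprod : (∏ x, ((C x).factorial * (C x) ^ (k x)))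
      ≤ ∏ x, ((k x).factorial * (C x) ^ (C x)) :=
    prod_le_prod' fun x _ => stmt17_fact_pow_le (C x) (k x)
  have key : ((∏ x, (k x).factorial) * Nat.multinomial univ k) *
        ((∏ x, (C x).factorial) * (∏ x, (C x) ^ (k x))) ≤
      ((∏ x, (C x).factorial) * Nat.multinomial univ C) *
        ((∏ x, (k x).factorial) * (∏ x, (C x) ^ (C x))) := by
    rw [Nat.multinomial_spec, Nat.multinomial_spec, hk, ← prod_mul_distrib, ← prod_mul_distrib]
    exact Nat.mul_le_mul_left _ hprod
  apply Nat.le_of_mul_le_mul_right _ hP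
  calc (Nat.multinomial univ k * ∏ x, (C x) ^ (k x)) *
        ((∏ x, (k x).factorial) * ∏ x, (C x).factorial)
      = ((∏ x, (k x).factorial) * Nat.multinomial univ k) *
          ((∏ x, (C x).factorial) * (∏ x, (C x) ^ (k x))) := by ring
    _ ≤ ((∏ x, (C x).factorial) * Nat.multinomial univ C) *
          ((∏ x, (k x).factorial) * (∏ x, (C x) ^ (C x))) := key
    _ = (Nat.multinomial univ C * ∏ x, (C x) ^ (C x)) *
          ((∏ x, (k x).factorial) * ∏ x, (C x).factorial) := by ring

private lemma stmt17_upper (C : A → ℕ) :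
    Nat.multinomial univ C * ∏ x, (C x) ^ (C x) ≤ (∑ x, C x) ^ (∑ x, C x) := by
  have h := Finset.sum_pow_eq_sum_piAntidiag (univ : Finset A) C (∑ x, C x)
  rw [h]
  exact single_le_sum (f := fun k => Nat.multinomial univ k * ∏ x, (C x) ^ (k x))
    (fun k _ => Nat.zero_le _) (by simp [Finset.mem_piAntidiag])

private lemma stmt17_card_le (m : ℕ) :
    (Finset.piAntidiag (univ : Finset A) m).card ≤ (m + 1) ^ Fintype.card A := by
  calc (Finset.piAntidiag (univ : Finset A) m).card
      ≤ (Fintype.piFinset fun _ : A => Finset.range (m+1)).card := by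
        apply Finset.card_le_card
        intro k hk
        rw [Finset.mem_piAntidiag] at hk
        rw [Fintype.mem_piFinset]
        intro x
        rw [Finset.mem_range, Nat.lt_succ_iff, ← hk.1]
        exact Finset.single_le_sum (fun _ _ => Nat.zero_le _) (mem_univ x)
    _ = (m + 1) ^ Fintype.card A := by simp

private lemma stmt17_lower (C : A → ℕ) :
    (∑ x, C x) ^ (∑ x, C x) ≤
      ((∑ x, C x) + 1) ^ Fintype.card A * (Nat.multinomial univ C * ∏ x, (C x) ^ (C x)) := by
  have h := Finset.sum_pow_eq_sum_piAntidiag (univ : Finset A) C (∑ x, C x)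
  rw [h]
  calc ∑ k ∈ Finset.piAntidiag (univ : Finset A) (∑ x, C x),
        Nat.multinomial univ k * ∏ x, (C x) ^ (k x)
      ≤ (Finset.piAntidiag (univ : Finset A) (∑ x, C x)).card *
          (Nat.multinomial univ C * ∏ x, (C x) ^ (C x)) := by
        rw [← smul_eq_mul]
        apply Finset.sum_le_card_nsmul
        intro k hk
        rw [Finset.mem_piAntidiag] at hk
        exact stmt17_term_max C k hk.1
    _ ≤ _ := Nat.mul_le_mul_right _ (stmt17_card_le _)

end Aux

section Aux2
variable {A : Type*} [Fintype A]

private lemma stmt17_sum_eq (β : A → ℝ) (hβ1 : ∑ x, β x = 1) {m : ℕ} (F : A → ℕ)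
    (hF : ∀ x, (F x : ℝ) = m * β x) : ∑ x, F x = m := by
  have : ((∑ x, F x : ℕ) : ℝ) = ((m : ℕ) : ℝ) := by
    push_cast
    rw [Finset.sum_congr rfl (fun x _ => hF x), ← Finset.mul_sum, hβ1, mul_one]
  exact_mod_cast this

private lemma stmt17_prod_eq (β : A → ℝ) (hβ1 : ∑ x, β x = 1) {m : ℕ} (F : A → ℕ)
    (hF : ∀ x, (F x : ℝ) = m * β x) :
    ∏ x, ((F x : ℝ)) ^ (F x) = (m : ℝ) ^ m * ∏ x, (β x) ^ (F x) := by
  calc ∏ x, ((F x : ℝ)) ^ (F x) = ∏ x, ((m : ℝ) ^ (F x) * (β x) ^ (F x)) := by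
        refine Finset.prod_congr rfl fun x _ => ?_
        rw [hF x, mul_pow]
    _ = (∏ x, (m : ℝ) ^ (F x)) * ∏ x, (β x) ^ (F x) := prod_mul_distrib
    _ = (m : ℝ) ^ m * ∏ x, (β x) ^ (F x) := by
        rw [Finset.prod_pow_eq_pow_sum, stmt17_sum_eq β hβ1 F hF]

private lemma stmt17_prod_pos (β : A → ℝ) (hβ0 : ∀ x, 0 ≤ β x) {m : ℕ} (F : A → ℕ)
    (hF : ∀ x, (F x : ℝ) = m * β x) : 0 < ∏ x, (β x) ^ (F x) := by
  apply prod_pos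
  intro x _
  rcases eq_or_lt_of_le (hβ0 x) with h | h
  · have hFx : F x = 0 := by
      have : (F x : ℝ) = 0 := by rw [hF x, ← h, mul_zero]
      exact_mod_cast this
    rw [hFx, pow_zero]; norm_num
  · exact pow_pos h _

end Aux2

/-- For a probability distribution `β` on a finite type `A`, the
multinomial coefficient of the counts `((a+b)·β(x))` is at most `2^{ε(a+b)}` times the
product of the multinomial coefficients of the counts `(a·β(x))` and `(b·β(x))`, for all
sufficiently large `a, b` along which all counts are integers. -/
theorem stmt17 (A : Type*) [Fintype A] (β : A → ℝ)
    (hβ0 : ∀ x, 0 ≤ β x) (hβ1 : ∑ x, β x = 1)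
    (ε : ℝ) (hε : 0 < ε) :
    ∃ m₀ : ℕ, ∀ a b : ℕ, m₀ ≤ a → m₀ ≤ b →
      ∀ F G : A → ℕ,
        (∀ x, (F x : ℝ) = a * β x) →
        (∀ x, (G x : ℝ) = b * β x) →
        (Nat.multinomial Finset.univ (fun x => F x + G x) : ℝ)
          ≤ (2 : ℝ) ^ (ε * ((a : ℝ) + b)) * (Nat.multinomial Finset.univ F : ℝ) *
              (Nat.multinomial Finset.univ G : ℝ) := by
  classical
  set K := Fintype.card A with hK
  -- choose m₀ so that (m+1)^K ≤ 2^(εm) for m ≥ m₀, and m₀ ≥ 1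
  obtain ⟨m₀, hm₀1, hm₀⟩ :
      ∃ m₀ : ℕ, 1 ≤ m₀ ∧ ∀ m : ℕ, m₀ ≤ m → ((m : ℝ) + 1) ^ K ≤ (2:ℝ) ^ (ε * m) := by
    set r : ℝ := (2:ℝ) ^ ε with hrdef
    have hr : 1 < r :=
      Real.one_lt_rpow_iff_of_pos (by norm_num) |>.2 (Or.inl ⟨one_lt_two, hε⟩)
    have h0 : (0:ℝ) < 1 / 2 ^ K := by positivity
    obtain ⟨N, hN⟩ := Filter.eventually_atTop.1
      ((tendsto_pow_const_div_const_pow_of_one_lt K hr).eventually_lt_const h0)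
    refine ⟨max N 1, le_max_right _ _, fun m hm => ?_⟩
    have h1 : (1:ℕ) ≤ m := le_trans (le_max_right _ _) hm
    have h2 := hN m (le_trans (le_max_left _ _) hm)
    have hrm : (0:ℝ) < r ^ m := pow_pos (lt_trans one_pos hr) m
    rw [div_lt_div_iff₀ hrm (by positivity)] at h2
    have h3 : ((m:ℝ) + 1) ^ K ≤ (2 * m) ^ K := by
      apply pow_le_pow_left₀ (by positivity)
      have : (1:ℝ) ≤ m := by exact_mod_cast h1
      linarith
    have h4 : ((2:ℝ) * m) ^ K ≤ r ^ m := by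
      rw [mul_pow]
      nlinarith [h2]
    have h5 : (r:ℝ) ^ m = (2:ℝ) ^ (ε * m) := by
      rw [hrdef, ← Real.rpow_natCast ((2:ℝ) ^ ε) m, ← Real.rpow_mul (by norm_num)]
    linarith
  refine ⟨m₀, fun a b ha hb F G hF hG => ?_⟩
  have ha0 : 0 < a := lt_of_lt_of_le hm₀1 ha
  have hb0 : 0 < b := lt_of_lt_of_le hm₀1 hb
  set H : A → ℕ := fun x => F x + G x with hHdef
  have hH : ∀ x, (H x : ℝ) = (a + b : ℕ) * β x := by
    intro x
    push_cast [hHdef]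
    rw [hF x, hG x]; ring
  -- abbreviations
  
  set Q : ℝ := ∏ x, (β x) ^ (F x) with hQdef
  set R : ℝ := ∏ x, (β x) ^ (G x) with hRdef
  have hQ : 0 < Q := stmt17_prod_pos β hβ0 F hF
  have hR : 0 < R := stmt17_prod_pos β hβ0 G hG
  have hsF := stmt17_sum_eq β hβ1 F hF
  have hsG := stmt17_sum_eq β hβ1 G hG
  have hsH := stmt17_sum_eq β hβ1 H hH
  -- upper bound for (Nat.multinomial Finset.univ H : ℝ)
  have hU : (Nat.multinomial Finset.univ H : ℝ) * (Q * R) ≤ 1 := by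
    have h1 : (Nat.multinomial Finset.univ H : ℝ) * ∏ x, ((H x : ℝ)) ^ (H x) ≤ ((a + b : ℕ) : ℝ) ^ (a + b) := by
      have := stmt17_upper H
      rw [hsH] at this
      exact_mod_cast this
    have h2 : ∏ x, ((H x : ℝ)) ^ (H x) = ((a + b : ℕ) : ℝ) ^ (a + b) * (Q * R) := by
      rw [stmt17_prod_eq β hβ1 H hH, hQdef, hRdef, ← prod_mul_distrib]
      congr 1
      refine Finset.prod_congr rfl fun x _ => ?_
      rw [hHdef, pow_add]
    have hn : (0:ℝ) < ((a + b : ℕ) : ℝ) ^ (a + b) := by positivity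
    rw [h2] at h1
    have : ((Nat.multinomial Finset.univ H : ℝ) * (Q * R)) * (((a + b : ℕ) : ℝ) ^ (a + b)) ≤ 1 * (((a + b : ℕ) : ℝ) ^ (a + b)) := by
      nlinarith [h1]
    exact le_of_mul_le_mul_right this hn
  -- lower bounds
  have hLa : 1 ≤ ((a:ℝ) + 1) ^ K * (Nat.multinomial Finset.univ F : ℝ) * Q := by
    have h1 : ((a:ℕ):ℝ) ^ a ≤ ((a:ℝ) + 1) ^ K * ((Nat.multinomial Finset.univ F : ℝ) * ∏ x, ((F x : ℝ)) ^ (F x)) := by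
      have := stmt17_lower F
      rw [hsF] at this
      have := (Nat.cast_le (α := ℝ)).2 this
      push_cast at this ⊢
      exact_mod_cast this
    rw [stmt17_prod_eq β hβ1 F hF] at h1
    have hn : (0:ℝ) < ((a:ℕ):ℝ) ^ a := by positivity
    have : 1 * (((a:ℕ):ℝ) ^ a) ≤ (((a:ℝ) + 1) ^ K * (Nat.multinomial Finset.univ F : ℝ) * Q) * (((a:ℕ):ℝ) ^ a) := by
      nlinarith [h1]
    exact le_of_mul_le_mul_right this hn
  have hLb : 1 ≤ ((b:ℝ) + 1) ^ K * (Nat.multinomial Finset.univ G : ℝ) * R := by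
    have h1 : ((b:ℕ):ℝ) ^ b ≤ ((b:ℝ) + 1) ^ K * ((Nat.multinomial Finset.univ G : ℝ) * ∏ x, ((G x : ℝ)) ^ (G x)) := by
      have := stmt17_lower G
      rw [hsG] at this
      have := (Nat.cast_le (α := ℝ)).2 this
      push_cast at this ⊢
      exact_mod_cast this
    rw [stmt17_prod_eq β hβ1 G hG] at h1
    have hn : (0:ℝ) < ((b:ℕ):ℝ) ^ b := by positivity
    have : 1 * (((b:ℕ):ℝ) ^ b) ≤ (((b:ℝ) + 1) ^ K * (Nat.multinomial Finset.univ G : ℝ) * R) * (((b:ℕ):ℝ) ^ b) := by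
      nlinarith [h1]
    exact le_of_mul_le_mul_right this hn
  -- combine
  have hMFpos : 0 ≤ (Nat.multinomial Finset.univ F : ℝ) := by positivity
  have hMGpos : 0 ≤ (Nat.multinomial Finset.univ G : ℝ) := by positivity
  have key : (Nat.multinomial Finset.univ H : ℝ) ≤ ((a:ℝ) + 1) ^ K * ((b:ℝ) + 1) ^ K * (Nat.multinomial Finset.univ F : ℝ) * (Nat.multinomial Finset.univ G : ℝ) := by
    have h1 : (Nat.multinomial Finset.univ H : ℝ) * (Q * R) ≤
        (((a:ℝ) + 1) ^ K * ((b:ℝ) + 1) ^ K * (Nat.multinomial Finset.univ F : ℝ) * (Nat.multinomial Finset.univ G : ℝ)) * (Q * R) := by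
      have h2 : (1:ℝ) ≤ (((a:ℝ) + 1) ^ K * (Nat.multinomial Finset.univ F : ℝ) * Q) * (((b:ℝ) + 1) ^ K * (Nat.multinomial Finset.univ G : ℝ) * R) := by
        nlinarith [hLa, hLb, hQ, hR, hMFpos, hMGpos]
      calc (Nat.multinomial Finset.univ H : ℝ) * (Q * R) ≤ 1 := hU
        _ ≤ (((a:ℝ) + 1) ^ K * (Nat.multinomial Finset.univ F : ℝ) * Q) * (((b:ℝ) + 1) ^ K * (Nat.multinomial Finset.univ G : ℝ) * R) := h2
        _ = (((a:ℝ) + 1) ^ K * ((b:ℝ) + 1) ^ K * (Nat.multinomial Finset.univ F : ℝ) * (Nat.multinomial Finset.univ G : ℝ)) * (Q * R) := by ring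
    exact le_of_mul_le_mul_right h1 (mul_pos hQ hR)
  have hea : ((a:ℝ) + 1) ^ K ≤ (2:ℝ) ^ (ε * a) := hm₀ a ha
  have heb : ((b:ℝ) + 1) ^ K ≤ (2:ℝ) ^ (ε * b) := hm₀ b hb
  have hsplit : (2:ℝ) ^ (ε * ((a:ℝ) + b)) = (2:ℝ) ^ (ε * a) * (2:ℝ) ^ (ε * b) := by
    rw [← Real.rpow_add (by norm_num)]; ring_nf
  calc (Nat.multinomial Finset.univ H : ℝ) ≤ ((a:ℝ) + 1) ^ K * ((b:ℝ) + 1) ^ K * (Nat.multinomial Finset.univ F : ℝ) * (Nat.multinomial Finset.univ G : ℝ) := key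
    _ ≤ (2:ℝ) ^ (ε * a) * (2:ℝ) ^ (ε * b) * (Nat.multinomial Finset.univ F : ℝ) * (Nat.multinomial Finset.univ G : ℝ) := by
        have hpa : (0:ℝ) ≤ ((a:ℝ) + 1) ^ K := by positivity
        have hpb : (0:ℝ) ≤ ((b:ℝ) + 1) ^ K := by positivity
        nlinarith [mul_le_mul hea heb hpb (by positivity : (0:ℝ) ≤ (2:ℝ) ^ (ε * a)),
          mul_nonneg hMFpos hMGpos, mul_nonneg hpa hpb]
    _ = (2:ℝ) ^ (ε * ((a:ℝ) + b)) * (Nat.multinomial Finset.univ F : ℝ) * (Nat.multinomial Finset.univ G : ℝ) := by rw [hsplit]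
end

section
/- Let G be a finite group acting transitively on a finite nonempty set X, let s be a positive integer, and let S₁,…,S_s ⊆ X be subsets of densities η_t := |S_t|/|X|. Then there exist group elements g₁,…,g_s ∈ G and pairwise disjoint subsets T₁,…,T_{s'} of {1,…,s} with s' ≥ ⌊(∑_{t=1}^s η_t)/(log₂|X| + 2)⌋ such that for every j ∈ {1,…,s'}, ⋃_{t ∈ T_j} g_t • S_t = X. -/
open Finset

open scoped Classical in
lemma count_lemma' {G : Type*} [Group G] [Fintype G] {X : Type*} [Fintype X] [MulAction G X]
    (htrans : ∀ x y : X, ∃ g : G, g • x = y) (x y : X) :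
    (univ.filter (fun g : G => g • y = x)).card * Fintype.card X = Fintype.card G := by
  have key : ∀ x' : X, (univ.filter (fun g : G => g • y = x')).card
      = (univ.filter (fun g : G => g • y = x)).card := by
    intro x'
    obtain ⟨h, hh⟩ := htrans x' x
    refine Finset.card_nbij' (fun g => h * g) (fun g => h⁻¹ * g) ?_ ?_ ?_ ?_
    · intro g hg; simp only [mem_coe, mem_filter, mem_univ, true_and] at hg ⊢
      rw [mul_smul, hg, hh]
    · intro g hg; simp only [mem_coe, mem_filter, mem_univ, true_and] at hg ⊢
      rw [mul_smul, hg, inv_smul_eq_iff, hh]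
    · intro g _; simp
    · intro g _; simp
  have part : ∑ x' : X, (univ.filter (fun g : G => g • y = x')).card
      = Fintype.card G := by
    rw [← Finset.card_univ, Finset.card_eq_sum_card_fiberwise (f := fun g : G => g • y)]
    intro g _; exact mem_univ _
  rw [← part]
  simp [key, Finset.sum_const, mul_comm]

open scoped Classical in
lemma step_lemma' {G : Type*} [Group G] [Fintype G] {X : Type*} [Fintype X] [Nonempty X]
    [MulAction G X] (htrans : ∀ x y : X, ∃ g : G, g • x = y) (A U : Finset X) :
    ∃ g : G, ((U.filter (fun x => ∀ y ∈ A, g • y ≠ x)).card : ℝ)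
      ≤ U.card * (1 - A.card / Fintype.card X) := by
  set n := Fintype.card X with hn
  have hn0 : 0 < n := Fintype.card_pos
  set cov : G → ℕ := fun g => (U.filter (fun x => ∃ y ∈ A, g • y = x)).card with hcovdef
  have hcov : ∀ g : G, cov g = ∑ x ∈ U, ∑ y ∈ A, if g • y = x then 1 else 0 := by
    intro g
    show (U.filter (fun x => ∃ y ∈ A, g • y = x)).card = _
    rw [Finset.card_filter]
    refine Finset.sum_congr rfl fun x _ => ?_
    have heq : ∀ y : X, g • y = x ↔ y = g⁻¹ • x := by
      intro y; constructor
      · intro h; rw [← h, inv_smul_smul]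
      · intro h; rw [h, smul_inv_smul]
    by_cases hmem : g⁻¹ • x ∈ A
    · rw [if_pos ⟨g⁻¹ • x, hmem, by rw [smul_inv_smul]⟩]
      have : ∑ y ∈ A, (if g • y = x then 1 else 0)
          = ∑ y ∈ A, (if y = g⁻¹ • x then 1 else 0) := by
        refine Finset.sum_congr rfl fun y _ => by rw [heq y]
      rw [this, Finset.sum_ite_eq' A (g⁻¹ • x) (fun _ => 1), if_pos hmem]
    · rw [if_neg]
      · symm
        refine Finset.sum_eq_zero fun y hy => ?_
        rw [if_neg]; intro h; exact hmem ((heq y).mp h ▸ hy)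
      · rintro ⟨y, hy, hgy⟩; exact hmem ((heq y).mp hgy ▸ hy)
  have total : n * ∑ g : G, cov g = U.card * A.card * Fintype.card G := by
    have : ∑ g : G, cov g = ∑ x ∈ U, ∑ y ∈ A,
        (univ.filter (fun g : G => g • y = x)).card := by
      simp only [hcov]
      rw [Finset.sum_comm]
      refine Finset.sum_congr rfl fun x _ => ?_
      rw [Finset.sum_comm]
      refine Finset.sum_congr rfl fun y _ => ?_
      rw [Finset.card_filter]
    rw [this, Finset.mul_sum]
    have : ∀ x ∈ U, n * ∑ y ∈ A, (univ.filter (fun g : G => g • y = x)).card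
        = A.card * Fintype.card G := by
      intro x _
      rw [Finset.mul_sum]
      have : ∀ y ∈ A, n * (univ.filter (fun g : G => g • y = x)).card = Fintype.card G := by
        intro y _; rw [mul_comm]; exact count_lemma' htrans x y
      rw [Finset.sum_congr rfl this, Finset.sum_const, smul_eq_mul]
    rw [Finset.sum_congr rfl this, Finset.sum_const, smul_eq_mul]
    ring
  obtain ⟨g, -, hg⟩ := Finset.exists_max_image (univ : Finset G) cov ⟨1, mem_univ 1⟩
  have hsum_le : ∑ g' : G, cov g' ≤ Fintype.card G * cov g := by
    calc ∑ g' : G, cov g' ≤ ∑ _g' : G, cov g := Finset.sum_le_sum fun i _ => hg i (mem_univ i)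
    _ = Fintype.card G * cov g := by rw [Finset.sum_const, smul_eq_mul, Finset.card_univ]
  have hmain : U.card * A.card ≤ n * cov g := by
    have hG0 : 0 < Fintype.card G := Fintype.card_pos
    have : U.card * A.card * Fintype.card G ≤ n * cov g * Fintype.card G := by
      calc U.card * A.card * Fintype.card G = n * ∑ g' : G, cov g' := total.symm
      _ ≤ n * (Fintype.card G * cov g) := Nat.mul_le_mul_left n hsum_le
      _ = n * cov g * Fintype.card G := by ring
    exact Nat.le_of_mul_le_mul_right this hG0
  refine ⟨g, ?_⟩
  have hcard : (U.filter (fun x => ∀ y ∈ A, g • y ≠ x)).card = U.card - cov g := by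
    have := Finset.card_filter_add_card_filter_not
      (s := U) (p := fun x => ∃ y ∈ A, g • y = x)
    have hEq : U.filter (fun x => ¬ ∃ y ∈ A, g • y = x)
        = U.filter (fun x => ∀ y ∈ A, g • y ≠ x) := by
      refine Finset.filter_congr fun x _ => ?_
      push_neg; rfl
    rw [hEq] at this
    have h2 : cov g = (U.filter (fun x => ∃ y ∈ A, g • y = x)).card := rfl
    omega
  rw [hcard]
  have hle : cov g ≤ U.card := Finset.card_filter_le _ _
  rw [Nat.cast_sub hle]
  have hcovge : (U.card : ℝ) * A.card / n ≤ (cov g : ℝ) := by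
    rw [div_le_iff₀ (by exact_mod_cast hn0)]
    exact_mod_cast hmain.trans (le_of_eq (mul_comm _ _))
  have hn0' : (0:ℝ) < n := by exact_mod_cast hn0
  have : (U.card : ℝ) * (1 - A.card / n) = U.card - U.card * A.card / n := by ring
  rw [this]
  linarith

open scoped Classical in
lemma cover_bound' {G : Type*} [Group G] [Fintype G] {X : Type*} [Fintype X] [Nonempty X]
    [MulAction G X] (htrans : ∀ x y : X, ∃ g : G, g • x = y)
    {s : ℕ} (S : Fin s → Finset X) (T : Finset (Fin s)) :
    ∃ g : Fin s → G,
      ((univ.filter (fun x : X => ∀ t ∈ T, ∀ y ∈ S t, g t • y ≠ x)).card : ℝ)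
        ≤ Fintype.card X * ∏ t ∈ T, (1 - ((S t).card : ℝ) / Fintype.card X) := by
  set n := Fintype.card X with hn
  have hn0 : (0:ℝ) < n := by exact_mod_cast (Fintype.card_pos : 0 < n)
  induction T using Finset.induction_on with
  | empty =>
      refine ⟨fun _ => 1, ?_⟩
      simp only [Finset.notMem_empty, false_implies, implies_true, Finset.filter_true_of_mem,
        Finset.prod_empty, mul_one]
      · exact_mod_cast Finset.card_le_univ _
  | @insert a T ha ih =>
      obtain ⟨g, hg⟩ := ih
      set U := univ.filter (fun x : X => ∀ t ∈ T, ∀ y ∈ S t, g t • y ≠ x) with hU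
      obtain ⟨ga, hga⟩ := step_lemma' htrans (S a) U
      refine ⟨Function.update g a ga, ?_⟩
      have hsub : univ.filter (fun x : X => ∀ t ∈ insert a T, ∀ y ∈ S t,
          Function.update g a ga t • y ≠ x)
          ⊆ U.filter (fun x => ∀ y ∈ S a, ga • y ≠ x) := by
        intro x hx
        simp only [Finset.mem_filter, Finset.mem_univ, true_and] at hx
        simp only [Finset.mem_filter, hU, Finset.mem_univ, true_and]
        constructor
        · intro t ht y hy
          have := hx t (Finset.mem_insert_of_mem ht) y hy
          rwa [Function.update_of_ne (fun h : t = a => ha (h ▸ ht))] at this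
        · intro y hy
          have := hx a (Finset.mem_insert_self a T) y hy
          rwa [Function.update_self] at this
      have hprod_nonneg : (0:ℝ) ≤ ∏ t ∈ T, (1 - ((S t).card : ℝ) / n) := by
        refine Finset.prod_nonneg fun t _ => ?_
        have : ((S t).card : ℝ) ≤ n := by exact_mod_cast Finset.card_le_univ (S t)
        have := div_le_one_of_le₀ this (le_of_lt hn0)
        linarith
      have h1a : (0:ℝ) ≤ 1 - ((S a).card : ℝ) / n := by
        have : ((S a).card : ℝ) ≤ n := by exact_mod_cast Finset.card_le_univ (S a)
        have := div_le_one_of_le₀ this (le_of_lt hn0)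
        linarith
      calc ((univ.filter (fun x : X => ∀ t ∈ insert a T, ∀ y ∈ S t,
              Function.update g a ga t • y ≠ x)).card : ℝ)
          ≤ ((U.filter (fun x => ∀ y ∈ S a, ga • y ≠ x)).card : ℝ) := by
            exact_mod_cast Finset.card_le_card hsub
        _ ≤ U.card * (1 - ((S a).card : ℝ) / n) := hga
        _ ≤ (n * ∏ t ∈ T, (1 - ((S t).card : ℝ) / n)) * (1 - ((S a).card : ℝ) / n) :=
            mul_le_mul_of_nonneg_right hg h1a
        _ = n * ∏ t ∈ insert a T, (1 - ((S t).card : ℝ) / n) := by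
            rw [Finset.prod_insert ha]; ring

open scoped Classical in
lemma cover' {G : Type*} [Group G] [Fintype G] {X : Type*} [Fintype X] [Nonempty X]
    [MulAction G X] (htrans : ∀ x y : X, ∃ g : G, g • x = y)
    {s : ℕ} (S : Fin s → Finset X) (T : Finset (Fin s))
    (hT : Real.logb 2 (Fintype.card X) + 1 ≤ ∑ t ∈ T, ((S t).card : ℝ) / Fintype.card X) :
    ∃ g : Fin s → G, ∀ x : X, ∃ t ∈ T, ∃ y ∈ S t, g t • y = x := by
  set n := Fintype.card X with hn
  have hn0 : (0:ℝ) < n := by exact_mod_cast (Fintype.card_pos : 0 < n)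
  obtain ⟨g, hg⟩ := cover_bound' htrans S T
  have hlog2 : (0:ℝ) < Real.log 2 := Real.log_pos (by norm_num)
  have hlog2le : Real.log 2 ≤ 1 := by
    have := Real.log_le_sub_one_of_pos (by norm_num : (0:ℝ) < 2)
    linarith
  have hbound : (n:ℝ) * ∏ t ∈ T, (1 - ((S t).card : ℝ) / n) < 1 := by
    have hstep : ∀ t ∈ T, (1 - ((S t).card : ℝ) / n)
        ≤ Real.exp (-(((S t).card : ℝ) / n) * Real.log 2) := by
      intro t _
      have hη0 : (0:ℝ) ≤ ((S t).card : ℝ) / n := by positivity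
      have := Real.add_one_le_exp (-(((S t).card : ℝ) / n) * Real.log 2)
      nlinarith
    have hprod : ∏ t ∈ T, (1 - ((S t).card : ℝ) / n)
        ≤ Real.exp (-(∑ t ∈ T, ((S t).card : ℝ) / n) * Real.log 2) := by
      have := Finset.prod_le_prod (s := T)
        (f := fun t => (1 - ((S t).card : ℝ) / n))
        (g := fun t => Real.exp (-(((S t).card : ℝ) / n) * Real.log 2))
        (fun t _ => by
          have : ((S t).card : ℝ) ≤ n := by exact_mod_cast Finset.card_le_univ (S t)
          have := div_le_one_of_le₀ this (le_of_lt hn0)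
          linarith) hstep
      calc ∏ t ∈ T, (1 - ((S t).card : ℝ) / n)
          ≤ ∏ t ∈ T, Real.exp (-(((S t).card : ℝ) / n) * Real.log 2) := this
        _ = Real.exp (∑ t ∈ T, -(((S t).card : ℝ) / n) * Real.log 2) :=
            (Real.exp_sum T _).symm
        _ = Real.exp (-(∑ t ∈ T, ((S t).card : ℝ) / n) * Real.log 2) := by
            rw [← Finset.sum_mul, ← Finset.sum_neg_distrib]
    have hexp : Real.exp (-(∑ t ∈ T, ((S t).card : ℝ) / n) * Real.log 2)
        ≤ Real.exp (-(Real.logb 2 n + 1) * Real.log 2) := by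
      apply Real.exp_le_exp.mpr
      have := hT
      nlinarith
    have hval : Real.exp (-(Real.logb 2 n + 1) * Real.log 2) = (n:ℝ)⁻¹ * 2⁻¹ := by
      have h1 : -(Real.logb 2 n + 1) * Real.log 2 = -(Real.log n) + -(Real.log 2) := by
        rw [Real.logb]
        field_simp
        ring
      rw [h1, Real.exp_add, Real.exp_neg, Real.exp_neg, Real.exp_log hn0,
        Real.exp_log (by norm_num : (0:ℝ) < 2)]
    calc (n:ℝ) * ∏ t ∈ T, (1 - ((S t).card : ℝ) / n)
        ≤ n * Real.exp (-(Real.logb 2 n + 1) * Real.log 2) := by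
          refine mul_le_mul_of_nonneg_left (hprod.trans hexp) (le_of_lt hn0)
      _ = n * ((n:ℝ)⁻¹ * 2⁻¹) := by rw [hval]
      _ = 2⁻¹ := by field_simp
      _ < 1 := by norm_num
  have hcard0 : (univ.filter (fun x : X => ∀ t ∈ T, ∀ y ∈ S t, g t • y ≠ x)).card = 0 := by
    by_contra h
    have h1 : 1 ≤ (univ.filter (fun x : X => ∀ t ∈ T, ∀ y ∈ S t, g t • y ≠ x)).card :=
      Nat.one_le_iff_ne_zero.mpr h
    have : (1:ℝ) ≤ ((univ.filter (fun x : X => ∀ t ∈ T, ∀ y ∈ S t, g t • y ≠ x)).card : ℝ) := by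
      exact_mod_cast h1
    linarith [hg.trans_lt hbound]
  refine ⟨g, fun x => ?_⟩
  have : x ∉ univ.filter (fun x : X => ∀ t ∈ T, ∀ y ∈ S t, g t • y ≠ x) := by
    rw [Finset.card_eq_zero] at hcard0
    simp [hcard0]
  simp only [Finset.mem_filter, Finset.mem_univ, true_and] at this
  push_neg at this
  exact this

open scoped Classical in
lemma greedy' (s : ℕ) (η : Fin s → ℝ) (hη0 : ∀ t, 0 ≤ η t) (hη1 : ∀ t, η t ≤ 1)
    (D : ℝ) (hD : 2 ≤ D) :
    ∃ T : Fin (⌊(∑ t, η t) / D⌋₊) → Finset (Fin s),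
      (∀ j j', j ≠ j' → Disjoint (T j) (T j')) ∧
      (∀ j, D - 1 ≤ ∑ t ∈ T j, η t) := by
  have hD0 : (0:ℝ) < D := by linarith
  set η' : ℕ → ℝ := fun k => if h : k < s then η ⟨k, h⟩ else 0 with hη'
  have hη'0 : ∀ k, 0 ≤ η' k := by
    intro k; rw [hη']; dsimp only; split
    · exact hη0 _
    · exact le_refl 0
  have hη'1 : ∀ k, η' k ≤ 1 := by
    intro k; rw [hη']; dsimp only; split
    · exact hη1 _
    · exact zero_le_one
  set B : ℕ → ℝ := fun k => ∑ i ∈ Finset.range k, η' i with hB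
  have hB0 : ∀ k, 0 ≤ B k := fun k => Finset.sum_nonneg fun i _ => hη'0 i
  have hBmono : Monotone B := by
    intro k l hkl
    exact Finset.sum_le_sum_of_subset_of_nonneg (Finset.range_subset_range.mpr hkl)
      (fun i _ _ => hη'0 i)
  have hBstep : ∀ k, B (k + 1) = B k + η' k := fun k => Finset.sum_range_succ η' k
  set P : ℕ → ℕ := fun k => ⌊B k / D⌋₊ with hP
  have hPmono : Monotone P := by
    intro k l hkl
    refine Nat.floor_mono ?_
    gcongr
    exact hBmono hkl
  have hBs : B s = ∑ t, η t := by
    rw [hB]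
    dsimp only
    rw [← Fin.sum_univ_eq_sum_range η' s]
    refine Finset.sum_congr rfl fun t _ => ?_
    rw [hη']; dsimp only; rw [dif_pos t.isLt]
  set m := ⌊(∑ t, η t) / D⌋₊ with hm
  have hPsm : m ≤ P s := by
    rw [hP, hm]; dsimp only; rw [hBs]
  have hP0 : P 0 = 0 := by
    rw [hP]; dsimp only
    rw [hB]; simp
  -- for each j < m, define the group
  have key : ∀ j : Fin m, D - 1 ≤ ∑ t ∈ univ.filter (fun t : Fin s => P (t.1 + 1) = j.1), η t := by
    intro j
    have hjm : j.1 + 1 ≤ m := j.isLt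
    have hexb : ∃ k, j.1 + 1 ≤ P k := ⟨s, le_trans hjm hPsm⟩
    have hexa : ∃ k, j.1 ≤ P k := ⟨s, le_trans (Nat.le_of_succ_le hjm) hPsm⟩
    set b := Nat.find hexb with hbdef
    set a := Nat.find hexa with hadef
    have hb_iff : ∀ k, j.1 + 1 ≤ P k ↔ b ≤ k := by
      intro k
      constructor
      · intro h
        by_contra hc
        exact Nat.find_min hexb (Nat.lt_of_not_le hc) h
      · intro h
        exact le_trans (Nat.find_spec hexb) (hPmono h)
    have ha_iff : ∀ k, j.1 ≤ P k ↔ a ≤ k := by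
      intro k
      constructor
      · intro h
        by_contra hc
        exact Nat.find_min hexa (Nat.lt_of_not_le hc) h
      · intro h
        exact le_trans (Nat.find_spec hexa) (hPmono h)
    have hb1 : 1 ≤ b := by
      by_contra hc
      have hb0 : b = 0 := by omega
      have := Nat.find_spec hexb
      rw [hbdef] at hb0
      rw [hb0, hP0] at this
      omega
    have hbs : b ≤ s := (hb_iff s).mp (le_trans hjm hPsm)
    have hab : a ≤ b := by
      rw [← ha_iff]
      exact Nat.le_of_succ_le (Nat.find_spec hexb)
    have hBb : ((j.1 : ℝ) + 1) * D ≤ B b := by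
      have h1 : j.1 + 1 ≤ P b := Nat.find_spec hexb
      rw [hP] at h1; dsimp only at h1
      have h2 : ((j.1 + 1 : ℕ) : ℝ) ≤ B b / D :=
        (Nat.le_floor_iff (div_nonneg (hB0 b) (le_of_lt hD0))).mp h1
      rw [le_div_iff₀ hD0] at h2
      push_cast at h2
      linarith
    have hBb1 : ((j.1 : ℝ) + 1) * D - 1 ≤ B (b - 1) := by
      have hb' : b - 1 + 1 = b := by omega
      have hstep := hBstep (b - 1)
      rw [hb'] at hstep
      have h1 := hη'1 (b - 1)
      linarith
    have hBa : B (a - 1) ≤ (j.1 : ℝ) * D := by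
      rcases Nat.eq_zero_or_pos a with h0 | hpos
      · rw [h0]
        simp only [Nat.zero_sub]
        have : B 0 = 0 := by rw [hB]; simp
        rw [this]
        positivity
      · have hlt : a - 1 < a := by omega
        have hnot : ¬ (j.1 ≤ P (a - 1)) := Nat.find_min hexa hlt
        have : P (a - 1) < j.1 := Nat.lt_of_not_le hnot
        rw [hP] at this; dsimp only at this
        have h2 : B (a - 1) / D < (j.1 : ℝ) := by
          rcases Nat.eq_zero_or_pos j.1 with hj0 | hjpos
          · omega
          · have := (Nat.floor_lt (div_nonneg (hB0 (a-1)) (le_of_lt hD0))).mp this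
            exact_mod_cast this
        rw [div_lt_iff₀ hD0] at h2
        linarith
    have hfilter : (Finset.range s).filter (fun k => P (k + 1) = j.1)
        = Finset.Ico (a - 1) (b - 1) := by
      ext k
      simp only [Finset.mem_filter, Finset.mem_range, Finset.mem_Ico]
      constructor
      · rintro ⟨hks, hPk⟩
        have h1 : a ≤ k + 1 := (ha_iff (k + 1)).mp (le_of_eq hPk.symm)
        have h2 : ¬ (b ≤ k + 1) := by
          rw [← hb_iff]
          omega
        omega
      · rintro ⟨h1, h2⟩
        have ha' : a ≤ k + 1 := by omega
        have hb' : k + 1 < b := by omega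
        have hj1 : j.1 ≤ P (k + 1) := (ha_iff (k + 1)).mpr ha'
        have hj2 : ¬ (j.1 + 1 ≤ P (k + 1)) := by
          rw [hb_iff]
          omega
        constructor
        · omega
        · omega
    have hsum : ∑ t ∈ univ.filter (fun t : Fin s => P (t.1 + 1) = j.1), η t
        = B (b - 1) - B (a - 1) := by
      rw [Finset.sum_filter]
      have h1 : ∀ t : Fin s, (if P (t.1 + 1) = j.1 then η t else 0)
          = (fun k : ℕ => if P (k + 1) = j.1 then η' k else 0) t.1 := by
        intro t
        dsimp only
        congr 1
        rw [hη']; dsimp only; rw [dif_pos t.isLt]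
      rw [Finset.sum_congr rfl (fun t _ => h1 t)]
      rw [Fin.sum_univ_eq_sum_range (fun k : ℕ => if P (k + 1) = j.1 then η' k else 0) s]
      rw [← Finset.sum_filter, hfilter]
      rw [Finset.sum_Ico_eq_sub η' (by omega : a - 1 ≤ b - 1)]
    rw [hsum]
    have : (j.1 : ℝ) * D + D - 1 ≤ B (b - 1) := by nlinarith [hBb1]
    linarith [hBa]
  refine ⟨fun j => univ.filter (fun t : Fin s => P (t.1 + 1) = j.1), ?_, key⟩
  intro j j' hjj'
  rw [Finset.disjoint_left]
  intro t ht ht'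
  simp only [Finset.mem_filter] at ht ht'
  exact hjj' (Fin.ext (ht.2.symm.trans ht'.2))

/-- combinatorial core of the corollary to the Hole Lemma. If a finite
group `G` acts transitively on a finite nonempty set `X` and `S₁,…,S_s ⊆ X` have densities
`η_t`, then there are `g₁,…,g_s ∈ G` and at least `⌊(∑η_t)/(log₂|X| + 2)⌋` pairwise disjoint
groups of indices such that within each group the shuffled sets `g_t • S_t` cover `X` -/
theorem stmt18 (G : Type*) [Group G] [Fintype G] (X : Type*) [Fintype X] [Nonempty X]
    [MulAction G X] (htrans : ∀ x y : X, ∃ g : G, g • x = y)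
    (s : ℕ) (hs : 0 < s) (S : Fin s → Finset X) :
    ∃ (g : Fin s → G) (s' : ℕ) (T : Fin s' → Finset (Fin s)),
      ⌊(∑ t, ((S t).card : ℝ) / (Fintype.card X : ℝ)) /
          (Real.logb 2 (Fintype.card X) + 2)⌋₊ ≤ s' ∧
      (∀ j j' : Fin s', j ≠ j' → Disjoint (T j) (T j')) ∧
      (∀ (j : Fin s') (x : X), ∃ t ∈ T j, ∃ y ∈ S t, g t • y = x) := by
  classical
  set n := Fintype.card X with hn
  have hn1 : 1 ≤ n := Fintype.card_pos
  have hn0 : (0:ℝ) < n := by exact_mod_cast hn1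
  set L := Real.logb 2 (n : ℝ) with hL
  have hL0 : 0 ≤ L := Real.logb_nonneg (by norm_num) (by exact_mod_cast hn1)
  set D := L + 2 with hD
  have hD2 : 2 ≤ D := by linarith
  set η : Fin s → ℝ := fun t => ((S t).card : ℝ) / n with hη
  have hη0 : ∀ t, 0 ≤ η t := fun t => by positivity
  have hη1 : ∀ t, η t ≤ 1 := fun t => by
    rw [hη]
    exact div_le_one_of_le₀ (by exact_mod_cast Finset.card_le_univ (S t)) (le_of_lt hn0)
  set m := ⌊(∑ t, η t) / D⌋₊ with hm
  obtain ⟨T, hdisj, hsums⟩ := greedy' s η hη0 hη1 D hD2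
  -- for each group, get a covering family
  have hcov : ∀ j : Fin m, ∃ g : Fin s → G, ∀ x : X, ∃ t ∈ T j, ∃ y ∈ S t, g t • y = x := by
    intro j
    refine cover' htrans S (T j) ?_
    have := hsums j
    rw [hD] at this
    calc Real.logb 2 (Fintype.card X) + 1 = D - 1 := by rw [hD, hL, hn]; ring
      _ ≤ ∑ t ∈ T j, η t := hsums j
      _ = ∑ t ∈ T j, ((S t).card : ℝ) / Fintype.card X := by rw [hη, hn]
  choose gs hgs using hcov
  set g : Fin s → G := fun t => if h : ∃ j, t ∈ T j then gs h.choose t else 1 with hg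
  refine ⟨g, m, T, le_of_eq rfl, hdisj, ?_⟩
  intro j x
  obtain ⟨t, ht, y, hy, hxy⟩ := hgs j x
  refine ⟨t, ht, y, hy, ?_⟩
  have hex : ∃ j', t ∈ T j' := ⟨j, ht⟩
  have hchoose : hex.choose = j := by
    by_contra hne
    have := hdisj hex.choose j hne
    rw [Finset.disjoint_left] at this
    exact this hex.choose_spec ht
  have : g t = gs j t := by
    rw [hg]
    dsimp only
    rw [dif_pos hex, hchoose]
  rw [this]
  exact hxy
end
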